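/- arXiv:math/0406129 — 6 statements merged into one kernel-verified Lean document; each statement's English description precedes it below -/
import Mathlib

section
/- Let k be a nonzero rational number. For every integer n ≥ 0 the element g·hⁿ of Λ_A is a d-cocycle, and for every integer n ≥ 1 the element b·hⁿ − n·k·f·g·h^{n−1} of Λ_A is a d-cocycle; moreover none of these cocycles is a d-coboundary, so each represents a nonzero class in H(Λ_A, d), of degree 4n+3 and 4n+2 respectively. -/
/-- The monomial `∏ᵢ ev i ^ p i · ∏ᵢ od i ^ ε i` (odd generators taken in canonical order). -/
def gcMon {A : Type*} [Ring A] {nE nO : ℕ} (ev : Fin nE → A) (od : Fin nO → A) :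
    ((Fin nE → ℕ) × (Fin nO → Bool)) → A :=
  fun m => (List.ofFn fun i => ev i ^ m.1 i).prod *
    (List.ofFn fun i => if m.2 i then od i else 1).prod

/-- The degree of a monomial, given the degrees of the generators. -/
def gcDeg {nE nO : ℕ} (dE : Fin nE → ℕ) (dO : Fin nO → ℕ) :
    ((Fin nE → ℕ) × (Fin nO → Bool)) → ℕ :=
  fun m => (∑ i, dE i * m.1 i) + ∑ i, (if m.2 i then dO i else 0)

/-- The degree-`m` homogeneous component: the span of the monomials of degree `m`. -/
def gcGrade {A : Type*} [Ring A] [Algebra ℚ A] {nE nO : ℕ}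
    (ev : Fin nE → A) (od : Fin nO → A) (dE : Fin nE → ℕ) (dO : Fin nO → ℕ) (m : ℕ) :
    Submodule ℚ A :=
  Submodule.span ℚ (gcMon ev od '' {x | gcDeg dE dO x = m})

/-- `A` is the free graded-commutative ℚ-algebra on even generators `ev` (central) and
odd generators `od` (pairwise anticommuting, squaring to zero): the monomials form a basis. -/
structure IsFreeGCA {A : Type*} [Ring A] [Algebra ℚ A] {nE nO : ℕ}
    (ev : Fin nE → A) (od : Fin nO → A) : Prop where
  li : LinearIndependent ℚ (gcMon ev od)
  spanning : Submodule.span ℚ (Set.range (gcMon ev od)) = ⊤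
  central : ∀ i x, Commute (ev i) x
  anticomm : ∀ i j, od i * od j = -(od j * od i)

/-- The grading of `Λ_A`: `a, b` have degree 2, `e, f, g` degree 3 and `h` degree 4. -/
def gradeLA {A : Type*} [Ring A] [Algebra ℚ A] (a b e f g h : A) : ℕ → Submodule ℚ A :=
  gcGrade ![a, b, h] ![e, f, g] ![2, 2, 4] ![3, 3, 3]


/-!
The cocycle identities are Leibniz-rule computations with `d (hⁿ) = n k · b g hⁿ⁻¹` and
`g² = 0`. For non-triviality: every generator `x` has `d x ∈ {0, a², b², k·b g}`, and `a²`, `b²`,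
`b g` commute or anticommute with every generator, so the right ideal `a²Λ + b²Λ + b gΛ` is
stable under left multiplication by generators and the Leibniz rule forces `d Λ` into it. In the
monomial basis this ideal is spanned by the monomials divisible by `a²`, `b²` or `b g`; the basis
monomials `g hⁿ` and `b hⁿ` are not of this form, so their coordinates vanish on every coboundary
but not on the two cocycles.
-/

open Submodule Pointwise

theorem Module.Basis.notMem_span_image_of_repr_ne_zero {ι R M : Type*} [Semiring R]
    [AddCommMonoid M] [Module R M] (B : Module.Basis ι R M) {s : Set ι} {x : M} {i : ι}
    (hi : i ∉ s) (hx : B.repr x i ≠ 0) : x ∉ span R (B '' s) := fun hmem =>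
  hx (Finsupp.notMem_support_iff.mp fun hsupp => hi (B.mem_span_image.mp hmem hsupp))

section Closure

variable {A : Type*} [Ring A]

theorem gcMon_mem_closure {nE nO : ℕ} (ev : Fin nE → A) (od : Fin nO → A)
    (m : (Fin nE → ℕ) × (Fin nO → Bool)) :
    gcMon ev od m ∈ Submonoid.closure (Set.range ev ∪ Set.range od) := by
  refine mul_mem (Submonoid.list_prod_mem _ ?_) (Submonoid.list_prod_mem _ ?_) <;>
    rintro _ hx <;> obtain ⟨i, rfl⟩ := List.mem_ofFn.mp hx
  · exact pow_mem (Submonoid.subset_closure (Set.mem_union_left _ (Set.mem_range_self i))) _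
  · split_ifs
    exacts [Submonoid.subset_closure (Set.mem_union_right _ (Set.mem_range_self i)), one_mem _]

theorem mul_eq_or_eq_neg_of_mem_closure {s : Set A} {g : A}
    (hs : ∀ x ∈ s, g * x = x * g ∨ g * x = -(x * g)) {y : A}
    (hy : y ∈ Submonoid.closure s) : g * y = y * g ∨ g * y = -(y * g) := by
  induction hy using Submonoid.closure_induction_left with
  | one => simp
  | mul_left x hx y _ ih =>
    rw [← mul_assoc]
    rcases hs x hx with hgx | hgx <;> rcases ih with hgy | hgy <;>
      simp [hgx, hgy, mul_assoc]

end Closure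

section Leibniz

variable {R A : Type*} [CommRing R] [Ring A] [Algebra R A]

def IsGradedLeibniz (d : A →ₗ[R] A) (grade : ℕ → Submodule R A) : Prop :=
  ∀ (m : ℕ) (x y : A), x ∈ grade m → d (x * y) = d x * y + ((-1 : R) ^ m) • (x * d y)

variable {d : A →ₗ[R] A} {grade : ℕ → Submodule R A}

theorem IsGradedLeibniz.map_one (hd : IsGradedLeibniz d grade) (h1 : (1 : A) ∈ grade 0) :
    d 1 = 0 := by
  simpa using hd 0 1 1 h1

theorem IsGradedLeibniz.map_pow (hd : IsGradedLeibniz d grade) (h1 : (1 : A) ∈ grade 0)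
    {x : A} {m : ℕ} (hx : x ∈ grade m) (hm : Even m) (hxc : ∀ y, Commute x y) (n : ℕ) :
    d (x ^ n) = n • (x ^ (n - 1) * d x) := by
  induction n with
  | zero => simpa using hd.map_one h1
  | succ n ih =>
    rw [pow_succ', hd m x _ hx, ih, hm.neg_one_pow, one_smul, mul_smul_comm, ← mul_assoc,
      ← ((hxc (d x)).pow_left n).eq]
    rcases n with _ | n
    · simp
    · rw [Nat.add_sub_cancel, ← pow_succ', succ_nsmul' _ (n + 1), Nat.add_sub_cancel]

theorem IsGradedLeibniz.map_mem_of_mem_closure (hd : IsGradedLeibniz d grade)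
    (h1 : (1 : A) ∈ grade 0) {s : Set A} (hs : ∀ x ∈ s, ∃ m, x ∈ grade m)
    {J : Submodule R A} (hdJ : ∀ x ∈ s, ∀ y, d x * y ∈ J)
    (hJ : ∀ x ∈ s, ∀ y ∈ J, x * y ∈ J) {y : A} (hy : y ∈ Submonoid.closure s) :
    d y ∈ J := by
  induction hy using Submonoid.closure_induction_left with
  | one => rw [hd.map_one h1]; exact J.zero_mem
  | mul_left x hx y _ ih =>
    obtain ⟨m, hxm⟩ := hs x hx
    rw [hd m x y hxm]
    exact J.add_mem (hdJ x hx y) (J.smul_mem _ (hJ x hx _ ih))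

end Leibniz

theorem mul_mem_span_mul_univ {R A : Type*} [CommRing R] [Ring A] [Algebra R A]
    {T : Set A} {x : A} (hx : ∀ t ∈ T, x * t = t * x ∨ x * t = -(t * x)) {z : A}
    (hz : z ∈ span R (T * Set.univ)) : x * z ∈ span R (T * Set.univ) := by
  induction hz using Submodule.span_induction with
  | mem _ hz =>
    obtain ⟨t, ht, y, -, rfl⟩ := hz
    have hty : t * (x * y) ∈ span R (T * Set.univ) :=
      subset_span (Set.mul_mem_mul ht (Set.mem_univ _))
    rcases hx t ht with hxt | hxt
    · rwa [← mul_assoc, hxt, mul_assoc]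
    · rw [← mul_assoc, hxt, neg_mul, mul_assoc]; exact neg_mem hty
  | zero => simp
  | add _ _ _ _ h₁ h₂ => rw [mul_add]; exact add_mem h₁ h₂
  | smul c _ _ h => rw [mul_smul_comm]; exact smul_mem _ c h

namespace IsFreeGCA

variable {A : Type*} [Ring A] [Algebra ℚ A] {nE nO : ℕ} {ev : Fin nE → A} {od : Fin nO → A}

noncomputable def basis (hfree : IsFreeGCA ev od) :
    Module.Basis ((Fin nE → ℕ) × (Fin nO → Bool)) ℚ A :=
  Module.Basis.mk hfree.li hfree.spanning.ge

@[simp]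
theorem coe_basis (hfree : IsFreeGCA ev od) : ⇑hfree.basis = gcMon ev od :=
  Module.Basis.coe_mk _ _

@[simp]
theorem repr_gcMon (hfree : IsFreeGCA ev od) (m : (Fin nE → ℕ) × (Fin nO → Bool)) :
    hfree.basis.repr (gcMon ev od m) = Finsupp.single m 1 := by
  rw [← hfree.coe_basis, Module.Basis.repr_self]

theorem odd_mul_self (hfree : IsFreeGCA ev od) (j : Fin nO) : od j * od j = 0 :=
  have := IsAddTorsionFree.of_module_rat A
  self_eq_neg.mp (hfree.anticomm j j)

theorem odd_mul_gcMon (hfree : IsFreeGCA ev od) (j : Fin nO)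
    (m : (Fin nE → ℕ) × (Fin nO → Bool)) :
    od j * gcMon ev od m = gcMon ev od m * od j ∨
      od j * gcMon ev od m = -(gcMon ev od m * od j) := by
  refine mul_eq_or_eq_neg_of_mem_closure ?_ (gcMon_mem_closure ev od m)
  rintro _ (⟨i, rfl⟩ | ⟨i, rfl⟩)
  exacts [Or.inl (hfree.central i _).eq.symm, Or.inr (hfree.anticomm j i)]

end IsFreeGCA

section Monomials

variable {A : Type*} [Ring A] {a b e f g h : A}

theorem gcMon_three (p : Fin 3 → ℕ) (ε : Fin 3 → Bool) :
    gcMon ![a, b, h] ![e, f, g] (p, ε) = a ^ p 0 * (b ^ p 1 * h ^ p 2) *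
      ((bif ε 0 then e else 1) * ((bif ε 1 then f else 1) * (bif ε 2 then g else 1))) := by
  simp [gcMon, List.ofFn_succ, mul_assoc, Bool.cond_eq_ite]

theorem g_mul_h_pow_eq_gcMon (hh : ∀ x, Commute h x) (n : ℕ) :
    g * h ^ n = gcMon ![a, b, h] ![e, f, g] (![0, 0, n], ![false, false, true]) := by
  simp [gcMon_three, ((hh g).pow_left n).eq]

theorem b_mul_h_pow_eq_gcMon (n : ℕ) :
    b * h ^ n = gcMon ![a, b, h] ![e, f, g] (![0, 1, n], ![false, false, false]) := by
  simp [gcMon_three]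

theorem f_mul_g_mul_h_pow_eq_gcMon (hh : ∀ x, Commute h x) (n : ℕ) :
    f * (g * h ^ n) = gcMon ![a, b, h] ![e, f, g] (![0, 0, n], ![false, true, true]) := by
  simp [gcMon_three, ← mul_assoc, ((hh (f * g)).pow_left n).eq]

theorem a_mul_gcMon (p : Fin 3 → ℕ) (ε : Fin 3 → Bool) :
    a * gcMon ![a, b, h] ![e, f, g] (p, ε) =
      gcMon ![a, b, h] ![e, f, g] (![p 0 + 1, p 1, p 2], ε) := by
  simp [gcMon_three, pow_succ', mul_assoc]

theorem b_mul_gcMon (hb : ∀ x, Commute b x) (p : Fin 3 → ℕ) (ε : Fin 3 → Bool) :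
    b * gcMon ![a, b, h] ![e, f, g] (p, ε) =
      gcMon ![a, b, h] ![e, f, g] (![p 0, p 1 + 1, p 2], ε) := by
  simp [gcMon_three, pow_succ', ← mul_assoc, ((hb a).pow_right (p 0)).eq]

theorem gcMon_mul_g (hgg : g * g = 0) (p : Fin 3 → ℕ) (ε : Fin 3 → Bool) :
    gcMon ![a, b, h] ![e, f, g] (p, ε) * g =
      bif ε 2 then 0 else gcMon ![a, b, h] ![e, f, g] (p, ![ε 0, ε 1, true]) := by
  rw [gcMon_three, gcMon_three]
  cases ε 2 <;> simp [mul_assoc, hgg]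

end Monomials

section Grading

variable {A : Type*} [Ring A] [Algebra ℚ A] (a b e f g h : A)

theorem gcMon_mem_gradeLA (m : (Fin 3 → ℕ) × (Fin 3 → Bool)) :
    gcMon ![a, b, h] ![e, f, g] m ∈ gradeLA a b e f g h (gcDeg ![2, 2, 4] ![3, 3, 3] m) :=
  subset_span ⟨m, rfl, rfl⟩

theorem one_mem_gradeLA : (1 : A) ∈ gradeLA a b e f g h 0 := by
  simpa [gcMon_three, gcDeg] using gcMon_mem_gradeLA a b e f g h (0, fun _ => false)

theorem a_mem_gradeLA : a ∈ gradeLA a b e f g h 2 := by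
  simpa [gcMon_three, gcDeg, Fin.sum_univ_three] using
    gcMon_mem_gradeLA a b e f g h (![1, 0, 0], fun _ => false)

theorem b_mem_gradeLA : b ∈ gradeLA a b e f g h 2 := by
  simpa [gcMon_three, gcDeg, Fin.sum_univ_three] using
    gcMon_mem_gradeLA a b e f g h (![0, 1, 0], fun _ => false)

theorem h_mem_gradeLA : h ∈ gradeLA a b e f g h 4 := by
  simpa [gcMon_three, gcDeg, Fin.sum_univ_three] using
    gcMon_mem_gradeLA a b e f g h (![0, 0, 1], fun _ => false)

theorem e_mem_gradeLA : e ∈ gradeLA a b e f g h 3 := by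
  simpa [gcMon_three, gcDeg, Fin.sum_univ_three] using
    gcMon_mem_gradeLA a b e f g h (0, ![true, false, false])

theorem f_mem_gradeLA : f ∈ gradeLA a b e f g h 3 := by
  simpa [gcMon_three, gcDeg, Fin.sum_univ_three] using
    gcMon_mem_gradeLA a b e f g h (0, ![false, true, false])

theorem g_mem_gradeLA : g ∈ gradeLA a b e f g h 3 := by
  simpa [gcMon_three, gcDeg, Fin.sum_univ_three] using
    gcMon_mem_gradeLA a b e f g h (0, ![false, false, true])

variable {a b e f g h}

theorem g_mul_h_pow_mem_gradeLA (hh : ∀ x, Commute h x) (n : ℕ) :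
    g * h ^ n ∈ gradeLA a b e f g h (4 * n + 3) := by
  rw [g_mul_h_pow_eq_gcMon hh]
  convert gcMon_mem_gradeLA a b e f g h _ using 2
  simp [gcDeg, Fin.sum_univ_three]

theorem b_mul_h_pow_sub_mem_gradeLA (hh : ∀ x, Commute h x) {n : ℕ} (hn : 1 ≤ n) (c : ℚ) :
    b * h ^ n - c • (f * (g * h ^ (n - 1))) ∈ gradeLA a b e f g h (4 * n + 2) := by
  refine sub_mem ?_ (smul_mem _ c ?_)
  · rw [b_mul_h_pow_eq_gcMon]
    convert gcMon_mem_gradeLA a b e f g h _ using 2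
    simp [gcDeg, Fin.sum_univ_three]; ring
  · rw [f_mul_g_mul_h_pow_eq_gcMon hh]
    convert gcMon_mem_gradeLA a b e f g h _ using 2
    simp [gcDeg, Fin.sum_univ_three]; omega

end Grading

theorem forall_mem_range_three_union {A : Type*} {a b h e f g : A} {P : A → Prop} :
    (∀ x ∈ Set.range ![a, b, h] ∪ Set.range ![e, f, g], P x) ↔
      P a ∧ P b ∧ P h ∧ P e ∧ P f ∧ P g := by
  simp only [Set.mem_union, or_imp, forall_and, Set.forall_mem_range, Fin.forall_fin_succ,
    IsEmpty.forall_iff, Matrix.cons_val_zero, Matrix.cons_val_succ, and_true, and_assoc]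

section Coboundaries

variable {A : Type*} [Ring A] [Algebra ℚ A] {a b e f g h : A}

theorem range_le_span_mul_univ {k : ℚ} {d : A →ₗ[ℚ] A}
    (hfree : IsFreeGCA ![a, b, h] ![e, f, g]) (hleib : IsGradedLeibniz d (gradeLA a b e f g h))
    (hda : d a = 0) (hdb : d b = 0) (hdg : d g = 0) (hde : d e = a * a) (hdf : d f = b * b)
    (hdh : d h = k • (b * g)) :
    LinearMap.range d ≤ span ℚ (({a * a, b * b, b * g} : Set A) * Set.univ) := by
  have hJ : ∀ t ∈ ({a * a, b * b, b * g} : Set A), ∀ y,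
      t * y ∈ span ℚ (({a * a, b * b, b * g} : Set A) * Set.univ) :=
    fun t ht y => subset_span (Set.mul_mem_mul ht (Set.mem_univ y))
  rw [LinearMap.range_eq_map, ← hfree.spanning, map_span_le]
  rintro _ ⟨m, rfl⟩
  refine hleib.map_mem_of_mem_closure (one_mem_gradeLA a b e f g h) ?_ ?_ ?_
    (gcMon_mem_closure _ _ m)
  · exact forall_mem_range_three_union.mpr
      ⟨⟨2, a_mem_gradeLA a b e f g h⟩, ⟨2, b_mem_gradeLA a b e f g h⟩,
        ⟨4, h_mem_gradeLA a b e f g h⟩, ⟨3, e_mem_gradeLA a b e f g h⟩,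
        ⟨3, f_mem_gradeLA a b e f g h⟩, ⟨3, g_mem_gradeLA a b e f g h⟩⟩
  · refine forall_mem_range_three_union.mpr ⟨?_, ?_, ?_, ?_, ?_, ?_⟩ <;> intro y
    · simp [hda]
    · simp [hdb]
    · rw [hdh, smul_mul_assoc]; exact smul_mem _ k (hJ _ (by simp) y)
    · rw [hde]; exact hJ _ (by simp) y
    · rw [hdf]; exact hJ _ (by simp) y
    · simp [hdg]
  · rintro _ (⟨i, rfl⟩ | ⟨i, rfl⟩) y hy <;> refine mul_mem_span_mul_univ ?_ hy
    · exact fun t _ => Or.inl (hfree.central i t).eq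
    · have ha : Commute (![e, f, g] i) a := (hfree.central 0 _).symm
      have hb : Commute (![e, f, g] i) b := (hfree.central 1 _).symm
      have hg : ![e, f, g] i * g = -(g * ![e, f, g] i) := hfree.anticomm i 2
      rintro t (rfl | rfl | rfl)
      · exact Or.inl (ha.mul_right ha).eq
      · exact Or.inl (hb.mul_right hb).eq
      · right
        rw [← mul_assoc, hb.eq, mul_assoc, hg, mul_neg, mul_assoc]

/-- Exponents of the monomials divisible by `a²`, by `b²` or by `b g`. -/
def idealExponents : Set ((Fin 3 → ℕ) × (Fin 3 → Bool)) :=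
  {m | 2 ≤ m.1 0 ∨ 2 ≤ m.1 1 ∨ (1 ≤ m.1 1 ∧ m.2 2 = true)}

theorem span_mul_univ_le_span_gcMon (hfree : IsFreeGCA ![a, b, h] ![e, f, g]) :
    span ℚ (({a * a, b * b, b * g} : Set A) * Set.univ) ≤
      span ℚ (gcMon ![a, b, h] ![e, f, g] '' idealExponents) := by
  have hb : ∀ x, Commute b x := hfree.central 1
  have hgg : g * g = 0 := hfree.odd_mul_self 2
  have hmon : ∀ t ∈ ({a * a, b * b, b * g} : Set A), ∀ m,
      t * gcMon ![a, b, h] ![e, f, g] m ∈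
        span ℚ (gcMon ![a, b, h] ![e, f, g] '' idealExponents) := by
    rintro t (rfl | rfl | rfl) ⟨p, ε⟩
    · rw [mul_assoc, a_mul_gcMon, a_mul_gcMon]
      exact subset_span ⟨_, Or.inl (by simp), rfl⟩
    · rw [mul_assoc, b_mul_gcMon hb, b_mul_gcMon hb]
      exact subset_span ⟨_, Or.inr (Or.inl (by simp)), rfl⟩
    · have hbg : b * (gcMon ![a, b, h] ![e, f, g] (p, ε) * g) ∈
          span ℚ (gcMon ![a, b, h] ![e, f, g] '' idealExponents) := by
        rw [← mul_assoc, b_mul_gcMon hb, gcMon_mul_g hgg]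
        cases ε 2
        · exact subset_span ⟨_, Or.inr (Or.inr ⟨by simp, rfl⟩), rfl⟩
        · exact zero_mem _
      rw [mul_assoc]
      rcases hfree.odd_mul_gcMon 2 (p, ε) with hg | hg <;>
        simp only [Matrix.cons_val_two, Matrix.tail_cons, Matrix.head_cons] at hg <;> rw [hg]
      exacts [hbg, by rw [mul_neg]; exact neg_mem hbg]
  rw [span_le]
  rintro _ ⟨t, ht, y, -, rfl⟩
  have hy : y ∈ span ℚ (Set.range (gcMon ![a, b, h] ![e, f, g])) := hfree.spanning ▸ trivial
  refine (map_span_le (LinearMap.mulLeft ℚ t) _ _).mpr ?_ ⟨y, hy, rfl⟩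
  rintro _ ⟨m, rfl⟩
  exact hmon t ht m

end Coboundaries

section Cocycles

variable {A : Type*} [Ring A] [Algebra ℚ A] {a b e f g h : A} {k : ℚ} {d : A →ₗ[ℚ] A}

theorem map_h_pow (hleib : IsGradedLeibniz d (gradeLA a b e f g h)) (hh : ∀ x, Commute h x)
    (hdh : d h = k • (b * g)) (n : ℕ) :
    d (h ^ n) = ((n : ℚ) * k) • (b * g * h ^ (n - 1)) := by
  rw [hleib.map_pow (one_mem_gradeLA a b e f g h) (h_mem_gradeLA a b e f g h) ⟨2, rfl⟩ hh, hdh,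
    mul_smul_comm, ((hh _).pow_left _).eq, ← Nat.cast_smul_eq_nsmul ℚ, smul_smul]

theorem map_g_mul_h_pow (hleib : IsGradedLeibniz d (gradeLA a b e f g h))
    (hb : ∀ x, Commute b x) (hh : ∀ x, Commute h x) (hgg : g * g = 0) (hdg : d g = 0)
    (hdh : d h = k • (b * g)) (n : ℕ) : d (g * h ^ n) = 0 := by
  rw [hleib 3 g _ (g_mem_gradeLA a b e f g h), hdg, zero_mul, zero_add, map_h_pow hleib hh hdh,
    mul_smul_comm, ← mul_assoc, ← mul_assoc, ← (hb g).eq, mul_assoc b, hgg]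
  simp

theorem map_b_mul_h_pow_sub (hleib : IsGradedLeibniz d (gradeLA a b e f g h))
    (hb : ∀ x, Commute b x) (hh : ∀ x, Commute h x) (hgg : g * g = 0) (hdb : d b = 0)
    (hdf : d f = b * b) (hdg : d g = 0) (hdh : d h = k • (b * g)) (n : ℕ) :
    d (b * h ^ n - ((n : ℚ) * k) • (f * (g * h ^ (n - 1)))) = 0 := by
  rw [map_sub, map_smul, hleib 2 b _ (b_mem_gradeLA a b e f g h),
    hleib 3 f _ (f_mem_gradeLA a b e f g h), hdb, hdf, map_g_mul_h_pow hleib hb hh hgg hdg hdh,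
    map_h_pow hleib hh hdh]
  simp [mul_assoc]

end Cocycles

theorem statement0_general {A : Type*} [Ring A] [Algebra ℚ A]
    (a b e f g h : A) (k : ℚ) (d : A →ₗ[ℚ] A)
    (hfree : IsFreeGCA ![a, b, h] ![e, f, g])
    (hleib : ∀ (m : ℕ) (x y : A), x ∈ gradeLA a b e f g h m →
      d (x * y) = d x * y + ((-1 : ℚ) ^ m) • (x * d y))
    (hda : d a = 0) (hdb : d b = 0) (hdg : d g = 0)
    (hde : d e = a * a) (hdf : d f = b * b) (hdh : d h = k • (b * g)) :
    (∀ n : ℕ,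
      d (g * h ^ n) = 0 ∧
      g * h ^ n ∈ gradeLA a b e f g h (4 * n + 3) ∧
      g * h ^ n ∉ LinearMap.range d) ∧
    (∀ n : ℕ, 1 ≤ n →
      d (b * h ^ n - ((n : ℚ) * k) • (f * (g * h ^ (n - 1)))) = 0 ∧
      b * h ^ n - ((n : ℚ) * k) • (f * (g * h ^ (n - 1))) ∈ gradeLA a b e f g h (4 * n + 2) ∧
      b * h ^ n - ((n : ℚ) * k) • (f * (g * h ^ (n - 1))) ∉ LinearMap.range d) := by
  have hb : ∀ x, Commute b x := hfree.central 1
  have hh : ∀ x, Commute h x := hfree.central 2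
  have hgg : g * g = 0 := hfree.odd_mul_self 2
  have hrange : LinearMap.range d ≤ span ℚ (hfree.basis '' idealExponents) := by
    rw [hfree.coe_basis]
    exact (range_le_span_mul_univ hfree hleib hda hdb hdg hde hdf hdh).trans
      (span_mul_univ_le_span_gcMon hfree)
  refine ⟨fun n => ⟨map_g_mul_h_pow hleib hb hh hgg hdg hdh n, g_mul_h_pow_mem_gradeLA hh n,
    fun hx => ?_⟩, fun n hn => ⟨map_b_mul_h_pow_sub hleib hb hh hgg hdb hdf hdg hdh n,
    b_mul_h_pow_sub_mem_gradeLA hh hn _, fun hx => ?_⟩⟩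
  · refine hfree.basis.notMem_span_image_of_repr_ne_zero
      (i := (![0, 0, n], ![false, false, true])) (by simp [idealExponents]) ?_ (hrange hx)
    rw [g_mul_h_pow_eq_gcMon hh, hfree.repr_gcMon]
    simp
  · refine hfree.basis.notMem_span_image_of_repr_ne_zero
      (i := (![0, 1, n], ![false, false, false])) (by simp [idealExponents]) ?_ (hrange hx)
    rw [b_mul_h_pow_eq_gcMon, f_mul_g_mul_h_pow_eq_gcMon hh, map_sub, map_smul, hfree.repr_gcMon,
      hfree.repr_gcMon]
    simp

theorem statement0 {A : Type*} [Ring A] [Algebra ℚ A]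
    (a b e f g h : A) (k : ℚ) (hk : k ≠ 0) (d : A →ₗ[ℚ] A)
    (hfree : IsFreeGCA ![a, b, h] ![e, f, g])
    (hdeg : ∀ (m : ℕ) (x : A), x ∈ gradeLA a b e f g h m → d x ∈ gradeLA a b e f g h (m + 1))
    (hleib : ∀ (m : ℕ) (x y : A), x ∈ gradeLA a b e f g h m →
      d (x * y) = d x * y + ((-1 : ℚ) ^ m) • (x * d y))
    (hda : d a = 0) (hdb : d b = 0) (hdg : d g = 0)
    (hde : d e = a * a) (hdf : d f = b * b) (hdh : d h = k • (b * g)) :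
    (∀ n : ℕ,
      d (g * h ^ n) = 0 ∧
      g * h ^ n ∈ gradeLA a b e f g h (4 * n + 3) ∧
      g * h ^ n ∉ LinearMap.range d) ∧
    (∀ n : ℕ, 1 ≤ n →
      d (b * h ^ n - ((n : ℚ) * k) • (f * (g * h ^ (n - 1)))) = 0 ∧
      b * h ^ n - ((n : ℚ) * k) • (f * (g * h ^ (n - 1))) ∈ gradeLA a b e f g h (4 * n + 2) ∧
      b * h ^ n - ((n : ℚ) * k) • (f * (g * h ^ (n - 1))) ∉ LinearMap.range d) :=
  statement0_general a b e f g h k d hfree hleib hda hdb hdg hde hdf hdh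
end

section
/- Let k be a nonzero rational number. The cohomology of (Λ_A, d) has dimensions: dim_ℚ H⁰(Λ_A,d) = 1, H¹(Λ_A,d) = 0, dim_ℚ H²(Λ_A,d) = 2 (spanned by the classes of a and b), and dim_ℚ H^m(Λ_A,d) = 1 for every integer m ≥ 3. In particular H^m(Λ_A,d) ≠ 0 for every m ≥ 2, so the total cohomology is infinite-dimensional over ℚ (hence (Λ_A,d) cannot be the rational cohomology of a finite-dimensional CW-complex). -/
set_option linter.unusedSectionVars false
set_option linter.unreachableTactic false
set_option linter.unusedTactic false
set_option linter.unnecessarySeqFocus false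
set_option maxHeartbeats 1000000
set_option synthInstance.maxHeartbeats 400000



/-- Degree-`m` cohomology of `(Λ_A, d)`: cocycles of degree `m` modulo coboundaries. -/
abbrev HcohLA {A : Type*} [Ring A] [Algebra ℚ A] (a b e f g h : A)
    (d : A →ₗ[ℚ] A) (m : ℕ) :=
  ↥(LinearMap.ker d ⊓ gradeLA a b e f g h m) ⧸
    (Submodule.comap (LinearMap.ker d ⊓ gradeLA a b e f g h m).subtype (LinearMap.range d))

/-- Total cohomology of `(Λ_A, d)`: all cocycles modulo all coboundaries. -/
abbrev HtotLA {A : Type*} [Ring A] [Algebra ℚ A] (d : A →ₗ[ℚ] A) :=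
  ↥(LinearMap.ker d) ⧸ (Submodule.comap (LinearMap.ker d).subtype (LinearMap.range d))


namespace S1

abbrev M3 : Type := (Fin 3 → ℕ) × (Fin 3 → Bool)

def mk3 (i j l : ℕ) (ε φ γ : Bool) : M3 := (![i,j,l], ![ε,φ,γ])

lemma mk3_eta (x : M3) : x = mk3 (x.1 0) (x.1 1) (x.1 2) (x.2 0) (x.2 1) (x.2 2) := by
  obtain ⟨p, q⟩ := x
  unfold mk3
  congr 1 <;> [skip; skip] <;> {
    funext i
    fin_cases i <;> rfl }

@[simp] lemma mk3_c1 (i j l : ℕ) (ε φ γ : Bool) : (mk3 i j l ε φ γ).1 0 = i := rfl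
@[simp] lemma mk3_c2 (i j l : ℕ) (ε φ γ : Bool) : (mk3 i j l ε φ γ).1 1 = j := rfl
@[simp] lemma mk3_c3 (i j l : ℕ) (ε φ γ : Bool) : (mk3 i j l ε φ γ).1 2 = l := rfl
@[simp] lemma mk3_c4 (i j l : ℕ) (ε φ γ : Bool) : (mk3 i j l ε φ γ).2 0 = ε := rfl
@[simp] lemma mk3_c5 (i j l : ℕ) (ε φ γ : Bool) : (mk3 i j l ε φ γ).2 1 = φ := rfl
@[simp] lemma mk3_c6 (i j l : ℕ) (ε φ γ : Bool) : (mk3 i j l ε φ γ).2 2 = γ := rfl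

lemma mk3_inj {i j l i' j' l' : ℕ} {ε φ γ ε' φ' γ' : Bool}
    (hh : mk3 i j l ε φ γ = mk3 i' j' l' ε' φ' γ') :
    i = i' ∧ j = j' ∧ l = l' ∧ ε = ε' ∧ φ = φ' ∧ γ = γ' :=
  ⟨congrArg (fun x : M3 => x.1 0) hh, congrArg (fun x : M3 => x.1 1) hh,
   congrArg (fun x : M3 => x.1 2) hh, congrArg (fun x : M3 => x.2 0) hh,
   congrArg (fun x : M3 => x.2 1) hh, congrArg (fun x : M3 => x.2 2) hh⟩

def deg3 : M3 → ℕ := gcDeg ![2,2,4] ![3,3,3]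

lemma deg3_mk (i j l : ℕ) (ε φ γ : Bool) :
    deg3 (mk3 i j l ε φ γ) =
      2*i+2*j+4*l + ((cond ε 3 0) + (cond φ 3 0) + (cond γ 3 0)) := by
  simp [deg3, gcDeg, mk3, Fin.sum_univ_three]
  cases ε <;> cases φ <;> cases γ <;> simp


section Gens

variable {A : Type*} [Ring A] [Algebra ℚ A]
variable (a b e f g h : A)

/-- the monomial family -/
def monv : M3 → A := gcMon ![a,b,h] ![e,f,g]

/-- normal form of a monomial -/
def nm (i j l : ℕ) (ε φ γ : Bool) : A :=
  a^i * (b^j * (h^l * ((if ε then e else 1) * ((if φ then f else 1) * (if γ then g else 1)))))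

lemma mon_mk (i j l : ℕ) (ε φ γ : Bool) :
    monv a b e f g h (mk3 i j l ε φ γ) = nm a b e f g h i j l ε φ γ := by
  simp [monv, gcMon, mk3, nm, List.ofFn_succ, mul_assoc]
  cases ε <;> cases φ <;> cases γ <;> simp

lemma grade_def (m : ℕ) :
    gradeLA a b e f g h m
      = Submodule.span ℚ (monv a b e f g h '' {x | deg3 x = m}) := rfl

lemma mem_grade {x : M3} {m : ℕ} (hx : deg3 x = m) :
    monv a b e f g h x ∈ gradeLA a b e f g h m :=
  Submodule.subset_span ⟨x, hx, rfl⟩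

lemma nm_mem {i j l : ℕ} {ε φ γ : Bool} {m : ℕ}
    (hm : 2*i+2*j+4*l + ((cond ε 3 0) + (cond φ 3 0) + (cond γ 3 0)) = m) :
    nm a b e f g h i j l ε φ γ ∈ gradeLA a b e f g h m := by
  rw [← mon_mk]; exact mem_grade _ _ _ _ _ _ (by rw [deg3_mk, hm])

end Gens

section Calc

variable {A : Type*} [Ring A] [Algebra ℚ A]
variable {a b e f g h : A} {k : ℚ} {d : A →ₗ[ℚ] A}
variable (hfree : IsFreeGCA ![a, b, h] ![e, f, g])

section Movers
include hfree

lemma comm_a (x : A) : Commute a x := by simpa using hfree.central 0 x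
lemma comm_b (x : A) : Commute b x := by simpa using hfree.central 1 x
lemma comm_h (x : A) : Commute h x := by simpa using hfree.central 2 x

lemma anti_ge : g * e = -(e * g) := by simpa using hfree.anticomm 2 0
lemma anti_gf : g * f = -(f * g) := by simpa using hfree.anticomm 2 1
lemma gg_zero : g * g = (0 : A) := by
  have h1 : g * g = -(g * g) := by simpa using hfree.anticomm 2 2
  have h2 : (2 : ℚ) • (g * g) = 0 := by
    rw [two_smul]; nth_rewrite 2 [h1]; abel
  simpa using (smul_eq_zero.1 h2).resolve_left (by norm_num)

-- movers: bubble `a` to the left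
lemma mv_ba (x : A) : b*(a*x) = a*(b*x) := by
  rw [← mul_assoc, ← (comm_a hfree b).eq, mul_assoc]
lemma mv_ba' : b*a = a*b := ((comm_a hfree b).eq).symm
lemma mv_bna (n : ℕ) (x : A) : b^n*(a*x) = a*(b^n*x) := by
  rw [← mul_assoc, ← ((comm_a hfree b).pow_right n).eq, mul_assoc]
lemma mv_bna' (n : ℕ) : b^n*a = a*b^n := (((comm_a hfree b).pow_right n).eq).symm
lemma mv_ha (x : A) : h*(a*x) = a*(h*x) := by
  rw [← mul_assoc, ← (comm_a hfree h).eq, mul_assoc]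
lemma mv_ha' : h*a = a*h := ((comm_a hfree h).eq).symm
lemma mv_hna (n : ℕ) (x : A) : h^n*(a*x) = a*(h^n*x) := by
  rw [← mul_assoc, ← ((comm_a hfree h).pow_right n).eq, mul_assoc]
lemma mv_hna' (n : ℕ) : h^n*a = a*h^n := (((comm_a hfree h).pow_right n).eq).symm
lemma mv_ea (x : A) : e*(a*x) = a*(e*x) := by
  rw [← mul_assoc, (comm_a hfree e).symm.eq, mul_assoc]
lemma mv_ea' : e*a = a*e := (comm_a hfree e).symm.eq
lemma mv_fa (x : A) : f*(a*x) = a*(f*x) := by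
  rw [← mul_assoc, (comm_a hfree f).symm.eq, mul_assoc]
lemma mv_fa' : f*a = a*f := (comm_a hfree f).symm.eq
lemma mv_ga (x : A) : g*(a*x) = a*(g*x) := by
  rw [← mul_assoc, (comm_a hfree g).symm.eq, mul_assoc]
lemma mv_ga' : g*a = a*g := (comm_a hfree g).symm.eq

-- movers: bubble `b` to the left (past h, e, f, g)
lemma mv_hb (x : A) : h*(b*x) = b*(h*x) := by
  rw [← mul_assoc, ← (comm_b hfree h).eq, mul_assoc]
lemma mv_hb' : h*b = b*h := ((comm_b hfree h).eq).symm
lemma mv_hnb (n : ℕ) (x : A) : h^n*(b*x) = b*(h^n*x) := by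
  rw [← mul_assoc, ← ((comm_b hfree h).pow_right n).eq, mul_assoc]
lemma mv_hnb' (n : ℕ) : h^n*b = b*h^n := (((comm_b hfree h).pow_right n).eq).symm
lemma mv_eb (x : A) : e*(b*x) = b*(e*x) := by
  rw [← mul_assoc, (comm_b hfree e).symm.eq, mul_assoc]
lemma mv_eb' : e*b = b*e := (comm_b hfree e).symm.eq
lemma mv_fb (x : A) : f*(b*x) = b*(f*x) := by
  rw [← mul_assoc, (comm_b hfree f).symm.eq, mul_assoc]
lemma mv_fb' : f*b = b*f := (comm_b hfree f).symm.eq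
lemma mv_gb (x : A) : g*(b*x) = b*(g*x) := by
  rw [← mul_assoc, (comm_b hfree g).symm.eq, mul_assoc]
lemma mv_gb' : g*b = b*g := (comm_b hfree g).symm.eq

-- movers: bubble `h` left past e, f, g (and g right past h-powers)
lemma mv_eh (x : A) : e*(h*x) = h*(e*x) := by
  rw [← mul_assoc, (comm_h hfree e).symm.eq, mul_assoc]
lemma mv_eh' : e*h = h*e := (comm_h hfree e).symm.eq
lemma mv_gh (x : A) : g*(h*x) = h*(g*x) := by
  rw [← mul_assoc, (comm_h hfree g).symm.eq, mul_assoc]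
lemma mv_gh' : g*h = h*g := (comm_h hfree g).symm.eq
lemma mv_ghn (n : ℕ) (x : A) : g*(h^n*x) = h^n*(g*x) := by
  rw [← mul_assoc, ((comm_h hfree g).pow_left n).symm.eq, mul_assoc]
lemma mv_ghn' (n : ℕ) : g*h^n = h^n*g := ((comm_h hfree g).pow_left n).symm.eq

-- movers: push `g` right past e, f with signs
lemma mv_ge (x : A) : g*(e*x) = -(e*(g*x)) := by
  rw [← mul_assoc, anti_ge hfree, neg_mul, mul_assoc]
lemma mv_gf (x : A) : g*(f*x) = -(f*(g*x)) := by
  rw [← mul_assoc, anti_gf hfree, neg_mul, mul_assoc]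
lemma mv_gg (x : A) : g*(g*x) = 0 := by
  rw [← mul_assoc, gg_zero hfree, zero_mul]

end Movers

-- power fold lemmas (no hypotheses)
lemma pf_a (n : ℕ) (x : A) : a^n*(a*x) = a^(n+1)*x := by
  rw [← mul_assoc, ← pow_succ]
lemma pf_a' (n : ℕ) : a^n*a = a^(n+1) := (pow_succ a n).symm
lemma pf_b (n : ℕ) (x : A) : b^n*(b*x) = b^(n+1)*x := by
  rw [← mul_assoc, ← pow_succ]
lemma pf_b' (n : ℕ) : b^n*b = b^(n+1) := (pow_succ b n).symm
lemma pf_h (n : ℕ) (x : A) : h^n*(h*x) = h^(n+1)*x := by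
  rw [← mul_assoc, ← pow_succ]
lemma pf_h' (n : ℕ) : h^n*h = h^(n+1) := (pow_succ h n).symm
lemma pf2_a (n : ℕ) (x : A) : a*(a^n*x) = a^(n+1)*x := by
  rw [← mul_assoc, ← pow_succ']
lemma pf2_a' (n : ℕ) : a*a^n = a^(n+1) := (pow_succ' a n).symm
lemma pf2_b (n : ℕ) (x : A) : b*(b^n*x) = b^(n+1)*x := by
  rw [← mul_assoc, ← pow_succ']
lemma pf2_b' (n : ℕ) : b*b^n = b^(n+1) := (pow_succ' b n).symm
lemma pf2_h (n : ℕ) (x : A) : h*(h^n*x) = h^(n+1)*x := by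
  rw [← mul_assoc, ← pow_succ']
lemma pf2_h' (n : ℕ) : h*h^n = h^(n+1) := (pow_succ' h n).symm


section DCalc

variable (hleib : ∀ (m : ℕ) (x y : A), x ∈ gradeLA a b e f g h m →
      d (x * y) = d x * y + ((-1 : ℚ) ^ m) • (x * d y))

include hleib

lemma leib_even (n : ℕ) {x : A} (y : A) (hx : x ∈ gradeLA a b e f g h (2*n)) :
    d (x*y) = d x * y + x * d y := by
  have := hleib (2*n) x y hx
  rw [pow_mul] at this
  simpa using this

lemma leib_odd3 {x : A} (y : A) (hx : x ∈ gradeLA a b e f g h 3) :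
    d (x*y) = d x * y - x * d y := by
  have := hleib 3 x y hx
  norm_num at this
  simpa [neg_smul, sub_eq_add_neg] using this

lemma apow_mem (i : ℕ) : a^i ∈ gradeLA a b e f g h (2*i) := by
  have := nm_mem a b e f g h (i:=i) (j:=0) (l:=0) (ε:=false) (φ:=false) (γ:=false)
    (m := 2*i) (by simp)
  simpa [nm] using this

lemma bpow_mem (j : ℕ) : b^j ∈ gradeLA a b e f g h (2*j) := by
  have := nm_mem a b e f g h (i:=0) (j:=j) (l:=0) (ε:=false) (φ:=false) (γ:=false)
    (m := 2*j) (by simp)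
  simpa [nm] using this

lemma hpow_mem (l : ℕ) : h^l ∈ gradeLA a b e f g h (2*(2*l)) := by
  have := nm_mem a b e f g h (i:=0) (j:=0) (l:=l) (ε:=false) (φ:=false) (γ:=false)
    (m := 2*(2*l)) (by simp; omega)
  simpa [nm] using this

lemma e_mem : e ∈ gradeLA a b e f g h 3 := by
  have := nm_mem a b e f g h (i:=0) (j:=0) (l:=0) (ε:=true) (φ:=false) (γ:=false)
    (m := 3) (by simp)
  simpa [nm] using this

lemma f_mem : f ∈ gradeLA a b e f g h 3 := by
  have := nm_mem a b e f g h (i:=0) (j:=0) (l:=0) (ε:=false) (φ:=true) (γ:=false)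
    (m := 3) (by simp)
  simpa [nm] using this

lemma d_one : d (1 : A) = 0 := by
  have h0 : (1:A) ∈ gradeLA a b e f g h (2*0) := by simpa using apow_mem (a:=a) hleib 0
  have := leib_even hleib 0 (1:A) h0
  simp only [mul_one, one_mul] at this
  have h2 : d (1:A) + 0 = d (1:A) + d (1:A) := by simpa using this
  exact (add_left_cancel h2).symm

variable (hda : d a = 0) (hdb : d b = 0)

include hda in
lemma d_apow (n : ℕ) : d (a^n) = 0 := by
  induction n with
  | zero => simpa using d_one (hleib := hleib)
  | succ n ih =>
    have m1 : a ∈ gradeLA a b e f g h (2*1) := by simpa using apow_mem (a:=a) hleib 1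
    rw [pow_succ', leib_even hleib 1 _ m1, hda, ih]
    simp

include hdb in
lemma d_bpow (n : ℕ) : d (b^n) = 0 := by
  induction n with
  | zero => simpa using d_one (hleib := hleib)
  | succ n ih =>
    have m1 : b ∈ gradeLA a b e f g h (2*1) := by simpa using bpow_mem (b:=b) hleib 1
    rw [pow_succ', leib_even hleib 1 _ m1, hdb, ih]
    simp

variable (hfree : IsFreeGCA ![a, b, h] ![e, f, g]) (hdh : d h = k • (b * g))

include hfree hdh in
lemma d_hpow (n : ℕ) : d (h^(n+1)) = (((n:ℚ)+1)*k) • (b*(h^n*g)) := by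
  induction n with
  | zero => simpa using hdh
  | succ n ih =>
    have m1 : h ∈ gradeLA a b e f g h (2*2) := by
      have := hpow_mem (h:=h) hleib 1
      norm_num at this
      simpa using this
    rw [pow_succ', leib_even hleib 2 _ m1, hdh, ih]
    push_cast
    simp only [mul_assoc, smul_mul_assoc, mul_smul_comm, mv_ghn' hfree, mv_ghn hfree,
      mv_hb hfree, pf_h, pf2_h]
    module

variable (hdg : d g = 0) (hde : d e = a * a) (hdf : d f = b * b)

include hleib hdg hde hdf in
lemma d_odd (ε φ γ : Bool) :
    d ((if ε then e else 1) * ((if φ then f else 1) * (if γ then g else 1)))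
      = (cond ε (1:ℚ) 0) • ((a*a) * ((if φ then f else 1) * (if γ then g else 1)))
      + (cond φ (cond ε (-1:ℚ) 1) 0) • ((if ε then e else 1) * ((b*b) * (if γ then g else 1))) := by
  have hog : d (if γ then g else 1) = 0 := by
    cases γ
    · simpa using d_one (hleib := hleib)
    · simpa using hdg
  have hfog : d ((if φ then f else 1) * (if γ then g else 1))
      = (cond φ (1:ℚ) 0) • ((b*b) * (if γ then g else 1)) := by
    cases φ
    · simpa using hog
    · simp only [if_pos]
      rw [leib_odd3 hleib _ (f_mem hleib), hdf, hog]
      simp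
  cases ε
  · simpa using hfog
  · simp only [if_pos]
    rw [leib_odd3 hleib _ (e_mem hleib), hde, hfog]
    cases φ <;> cases γ <;> simp [mul_smul_comm, sub_eq_add_neg]

include hleib hfree hda hdb hdg hde hdf hdh in
lemma dmon (i j l : ℕ) (ε φ γ : Bool) :
    d (monv a b e f g h (mk3 i j l ε φ γ)) =
      (cond γ 0 ((l:ℚ)*k*(cond ε (-1:ℚ) 1)*(cond φ (-1:ℚ) 1))) •
        monv a b e f g h (mk3 i (j+1) (l-1) ε φ true)
      + (cond ε (1:ℚ) 0) • monv a b e f g h (mk3 (i+2) j l false φ γ)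
      + (cond φ (cond ε (-1:ℚ) 1) 0) • monv a b e f g h (mk3 i (j+2) l ε false γ) := by
  rw [mon_mk, mon_mk, mon_mk, mon_mk]
  simp only [nm]
  rw [leib_even hleib i _ (apow_mem hleib i), d_apow hleib hda, zero_mul, zero_add]
  rw [leib_even hleib j _ (bpow_mem hleib j), d_bpow hleib hdb, zero_mul, zero_add]
  rw [leib_even hleib (2*l) _ (hpow_mem hleib l)]
  rw [d_odd hleib hdg hde hdf ε φ γ]
  cases l with
  | zero =>
    rw [pow_zero, d_one (hleib := hleib), zero_mul, zero_add]
    cases ε <;> cases φ <;> cases γ <;>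
      simp [mul_assoc, mul_add, smul_mul_assoc, mul_smul_comm, mul_neg, neg_mul, smul_neg,
        smul_smul,
        mv_ba hfree, mv_ba' hfree, mv_bna hfree, mv_bna' hfree, mv_ha hfree, mv_ha' hfree,
        mv_hna hfree, mv_hna' hfree, mv_ea hfree, mv_ea' hfree, mv_fa hfree, mv_fa' hfree,
        mv_ga hfree, mv_ga' hfree, mv_hb hfree, mv_hb' hfree, mv_hnb hfree, mv_hnb' hfree,
        mv_eb hfree, mv_eb' hfree, mv_fb hfree, mv_fb' hfree, mv_gb hfree, mv_gb' hfree,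
        mv_ge hfree, mv_gf hfree, mv_gg hfree, anti_ge hfree, anti_gf hfree, gg_zero hfree,
        mv_gh hfree, mv_gh' hfree, mv_ghn hfree, mv_ghn' hfree,
        pf_a, pf_a', pf_b, pf_b', pf_h, pf_h', pf2_a, pf2_a', pf2_b, pf2_b', pf2_h, pf2_h'] <;>
      module
  | succ l' =>
    rw [d_hpow (hfree := hfree) (hleib := hleib) (hdh := hdh) l']
    cases ε <;> cases φ <;> cases γ <;>
      simp [mul_assoc, mul_add, smul_mul_assoc, mul_smul_comm, mul_neg, neg_mul, smul_neg,
        smul_smul, Nat.add_sub_cancel, push_cast,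
        mv_ba hfree, mv_ba' hfree, mv_bna hfree, mv_bna' hfree, mv_ha hfree, mv_ha' hfree,
        mv_hna hfree, mv_hna' hfree, mv_ea hfree, mv_ea' hfree, mv_fa hfree, mv_fa' hfree,
        mv_ga hfree, mv_ga' hfree, mv_hb hfree, mv_hb' hfree, mv_hnb hfree, mv_hnb' hfree,
        mv_eb hfree, mv_eb' hfree, mv_fb hfree, mv_fb' hfree, mv_gb hfree, mv_gb' hfree,
        mv_ge hfree, mv_gf hfree, mv_gg hfree, anti_ge hfree, anti_gf hfree, gg_zero hfree,
        mv_gh hfree, mv_gh' hfree, mv_ghn hfree, mv_ghn' hfree,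
        pf_a, pf_a', pf_b, pf_b', pf_h, pf_h', pf2_a, pf2_a', pf2_b, pf2_b', pf2_h, pf2_h'] <;>
      module


end DCalc

end Calc

section Maps

variable {A : Type*} [Ring A] [Algebra ℚ A]
variable (a b e f g h : A) (k : ℚ)

noncomputable def sAux (i j l : ℕ) (ε φ γ : Bool) : A :=
  if ε = false ∧ 2 ≤ i then monv a b e f g h (mk3 (i-2) j l true φ γ)
  else if ε = false ∧ φ = false ∧ 2 ≤ j then monv a b e f g h (mk3 i (j-2) l false true γ)
  else if ε = false ∧ φ = false ∧ j = 1 ∧ γ = true then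
    ((((l:ℚ)+1)*k)⁻¹) • monv a b e f g h (mk3 i 0 (l+1) false false false)
  else 0

def repU (i : ℕ) : A := monv a b e f g h (mk3 i 0 0 false false false)

noncomputable def repB (i l : ℕ) : A :=
  monv a b e f g h (mk3 i 1 l false false false)
    - ((l:ℚ)*k) • monv a b e f g h (mk3 i 0 (l-1) false true true)

def repG (i l : ℕ) : A := monv a b e f g h (mk3 i 0 l false false true)

noncomputable def pAux (i j l : ℕ) (ε φ γ : Bool) : A :=
  if ε = false ∧ φ = false ∧ i ≤ 1 then
    (if j = 0 ∧ l = 0 ∧ γ = false then repU a b e f g h i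
     else if j = 1 ∧ γ = false then repB a b e f g h k i l
     else if j = 0 ∧ γ = true then repG a b e f g h i l
     else 0)
  else 0

noncomputable def sF : M3 → A := fun x =>
  sAux a b e f g h k (x.1 0) (x.1 1) (x.1 2) (x.2 0) (x.2 1) (x.2 2)

noncomputable def pF : M3 → A := fun x =>
  pAux a b e f g h k (x.1 0) (x.1 1) (x.1 2) (x.2 0) (x.2 1) (x.2 2)

@[simp] lemma sF_mk (i j l : ℕ) (ε φ γ : Bool) :
    sF a b e f g h k (mk3 i j l ε φ γ) = sAux a b e f g h k i j l ε φ γ := rfl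

@[simp] lemma pF_mk (i j l : ℕ) (ε φ γ : Bool) :
    pF a b e f g h k (mk3 i j l ε φ γ) = pAux a b e f g h k i j l ε φ γ := rfl

variable {a b e f g h : A}

noncomputable def bas (hfree : IsFreeGCA ![a, b, h] ![e, f, g]) : Module.Basis M3 ℚ A :=
  Module.Basis.mk hfree.li (by rw [hfree.spanning])

lemma bas_eq (hfree : IsFreeGCA ![a, b, h] ![e, f, g]) (x : M3) :
    bas hfree x = monv a b e f g h x := by
  rw [bas, Module.Basis.mk_apply]; rfl

noncomputable def Smap (hfree : IsFreeGCA ![a, b, h] ![e, f, g]) : A →ₗ[ℚ] A :=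
  (bas hfree).constr ℚ (sF a b e f g h k)

noncomputable def Pmap (hfree : IsFreeGCA ![a, b, h] ![e, f, g]) : A →ₗ[ℚ] A :=
  (bas hfree).constr ℚ (pF a b e f g h k)

@[simp] lemma Smap_mon (hfree : IsFreeGCA ![a, b, h] ![e, f, g]) (x : M3) :
    Smap k hfree (monv a b e f g h x) = sF a b e f g h k x := by
  rw [← bas_eq hfree x, Smap, Module.Basis.constr_basis]

@[simp] lemma Pmap_mon (hfree : IsFreeGCA ![a, b, h] ![e, f, g]) (x : M3) :
    Pmap k hfree (monv a b e f g h x) = pF a b e f g h k x := by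
  rw [← bas_eq hfree x, Pmap, Module.Basis.constr_basis]

end Maps


section Master

variable {A : Type*} [Ring A] [Algebra ℚ A]
variable {a b e f g h : A} {k : ℚ} {d : A →ₗ[ℚ] A}
variable (hleib : ∀ (m : ℕ) (x y : A), x ∈ gradeLA a b e f g h m →
      d (x * y) = d x * y + ((-1 : ℚ) ^ m) • (x * d y))
variable (hfree : IsFreeGCA ![a, b, h] ![e, f, g])
variable (hk : k ≠ 0)
variable (hda : d a = 0) (hdb : d b = 0) (hdg : d g = 0)
variable (hde : d e = a * a) (hdf : d f = b * b) (hdh : d h = k • (b * g))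

include hleib hfree hk hda hdb hdg hde hdf hdh in
lemma master_map :
    (d ∘ₗ Smap k hfree) + (Smap k hfree ∘ₗ d) = LinearMap.id - Pmap k hfree := by
  have DM := fun i j l ε φ γ => dmon (hleib:=hleib) (hfree:=hfree) (hda:=hda) (hdb:=hdb)
      (hdg:=hdg) (hde:=hde) (hdf:=hdf) (hdh:=hdh) i j l ε φ γ
  apply (bas hfree).ext
  intro x
  obtain ⟨i, j, l, ε, φ, γ, rfl⟩ : ∃ i j l ε φ γ, x = mk3 i j l ε φ γ :=
    ⟨_, _, _, _, _, _, mk3_eta x⟩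
  simp only [LinearMap.add_apply, LinearMap.coe_comp, Function.comp_apply,
    LinearMap.sub_apply, LinearMap.id_coe, id_eq, bas_eq]
  rw [Smap_mon, DM i j l ε φ γ, map_add, map_add, map_smul, map_smul, map_smul,
    Smap_mon, Smap_mon, Smap_mon]
  cases ε with
  | true =>
    cases φ <;> cases γ <;>
      simp [sAux, pAux, Nat.add_sub_cancel, DM] <;> module
  | false =>
    rcases Nat.lt_or_ge i 2 with hi | hi
    · -- i ≤ 1
      have hi1 : i ≤ 1 := by omega
      have hi2 : ¬ (2 ≤ i) := by omega
      cases φ with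
      | true =>
        cases γ <;>
          simp [sAux, pAux, hi1, hi2, Nat.add_sub_cancel, DM] <;> module
      | false =>
        rcases j with _ | _ | j2
        · -- j = 0
          cases γ with
          | true =>
            simp [sAux, pAux, repG, hi1, hi2, DM]
          | false =>
            cases l with
            | zero => simp [sAux, pAux, repU, hi1, hi2, DM]
            | succ l2 =>
              have hl : ((l2:ℚ)+1) ≠ 0 := by positivity
              have hc : ((l2:ℚ)+1) * k * (k⁻¹ * ((l2:ℚ)+1)⁻¹) = 1 := by
                field_simp
              simp [sAux, pAux, hi1, hi2, Nat.add_sub_cancel, DM, smul_smul, hc]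
        · -- j = 1
          cases γ with
          | true =>
            have hl : ((l:ℚ)+1) ≠ 0 := by positivity
            have hc : k⁻¹ * ((l:ℚ)+1)⁻¹ * (((l:ℚ)+1) * k) = 1 := by
              field_simp
            simp [sAux, pAux, hi1, hi2, Nat.add_sub_cancel, DM, smul_smul, hc]
          | false =>
            simp [sAux, pAux, repB, hi1, hi2, Nat.add_sub_cancel, DM] <;> module
        · -- j = j2 + 2
          have hj : 2 ≤ j2 + 1 + 1 := by omega
          have ej : j2 + 1 + 1 - 2 = j2 := by omega
          have ej2 : j2 + 1 + 1 + 1 - 2 = j2 + 1 := by omega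
          cases γ <;>
            simp [sAux, pAux, hi1, hi2, hj, ej, ej2, Nat.add_sub_cancel, DM] <;> module
    · -- 2 ≤ i
      obtain ⟨i2, rfl⟩ : ∃ i2, i = i2 + 2 := ⟨i-2, by omega⟩
      have e1 : i2 + 2 - 2 = i2 := by omega
      have e2 : ¬(i2 + 2 ≤ 1) := by omega
      have e3 : 2 ≤ i2 + 2 := by omega
      cases φ <;> cases γ <;>
        simp [sAux, pAux, e1, e2, e3, Nat.add_sub_cancel, DM] <;> module

include hleib hfree hda hdb hdg hde hdf hdh in
lemma Pd_map : Pmap k hfree ∘ₗ d = 0 := by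
  have DM := fun i j l ε φ γ => dmon (hleib:=hleib) (hfree:=hfree) (hda:=hda) (hdb:=hdb)
      (hdg:=hdg) (hde:=hde) (hdf:=hdf) (hdh:=hdh) i j l ε φ γ
  apply (bas hfree).ext
  intro x
  obtain ⟨i, j, l, ε, φ, γ, rfl⟩ : ∃ i j l ε φ γ, x = mk3 i j l ε φ γ :=
    ⟨_, _, _, _, _, _, mk3_eta x⟩
  have n1 : ¬ (i + 2 ≤ 1) := by omega
  have n2 : ¬ (j + 2 = 1) := by omega
  have n3 : ¬ (j + 2 = 0) := by omega
  simp only [LinearMap.comp_apply, LinearMap.zero_apply, bas_eq]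
  rw [DM i j l ε φ γ]
  simp [pAux, n1, n2, n3]

include hleib hfree hda hdb hdg hde hdf hdh in
lemma dP_map : d ∘ₗ Pmap k hfree = 0 := by
  have DM := fun i j l ε φ γ => dmon (hleib:=hleib) (hfree:=hfree) (hda:=hda) (hdb:=hdb)
      (hdg:=hdg) (hde:=hde) (hdf:=hdf) (hdh:=hdh) i j l ε φ γ
  apply (bas hfree).ext
  intro x
  obtain ⟨i, j, l, ε, φ, γ, rfl⟩ : ∃ i j l ε φ γ, x = mk3 i j l ε φ γ :=
    ⟨_, _, _, _, _, _, mk3_eta x⟩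
  simp only [LinearMap.comp_apply, LinearMap.zero_apply, bas_eq, Pmap_mon, pF_mk]
  unfold pAux
  split_ifs <;> simp [repU, repB, repG, DM] <;> module

-- P fixes the harmonic representatives
lemma Pmap_repU {i : ℕ} (hi : i ≤ 1) :
    Pmap k hfree (repU a b e f g h i) = repU a b e f g h i := by
  simp [repU, pAux, hi]

lemma Pmap_repB {i : ℕ} (l : ℕ) (hi : i ≤ 1) :
    Pmap k hfree (repB a b e f g h k i l) = repB a b e f g h k i l := by
  simp only [repB, map_sub, map_smul, Pmap_mon, pF_mk]
  simp [pAux, hi, repB]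

lemma Pmap_repG {i : ℕ} (l : ℕ) (hi : i ≤ 1) :
    Pmap k hfree (repG a b e f g h i l) = repG a b e f g h i l := by
  simp [repG, pAux, hi]

include hleib hfree hda hdb hdg hde hdf hdh in
lemma d_repU (i : ℕ) : d (repU a b e f g h i) = 0 := by
  have DM := fun i j l ε φ γ => dmon (hleib:=hleib) (hfree:=hfree) (hda:=hda) (hdb:=hdb)
      (hdg:=hdg) (hde:=hde) (hdf:=hdf) (hdh:=hdh) i j l ε φ γ
  simp [repU, DM]

include hleib hfree hda hdb hdg hde hdf hdh in
lemma d_repB (i l : ℕ) : d (repB a b e f g h k i l) = 0 := by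
  have DM := fun i j l ε φ γ => dmon (hleib:=hleib) (hfree:=hfree) (hda:=hda) (hdb:=hdb)
      (hdg:=hdg) (hde:=hde) (hdf:=hdf) (hdh:=hdh) i j l ε φ γ
  simp [repB, DM]

include hleib hfree hda hdb hdg hde hdf hdh in
lemma d_repG (i l : ℕ) : d (repG a b e f g h i l) = 0 := by
  have DM := fun i j l ε φ γ => dmon (hleib:=hleib) (hfree:=hfree) (hda:=hda) (hdb:=hdb)
      (hdg:=hdg) (hde:=hde) (hdf:=hdf) (hdh:=hdh) i j l ε φ γ
  simp [repG, DM]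

-- nonzero
include hfree in
lemma repU_ne (i : ℕ) : repU a b e f g h i ≠ 0 := by
  rw [repU, ← bas_eq hfree]; exact (bas hfree).ne_zero _

include hfree in
lemma repG_ne (i l : ℕ) : repG a b e f g h i l ≠ 0 := by
  rw [repG, ← bas_eq hfree]; exact (bas hfree).ne_zero _

include hfree in
lemma repB_ne (i l : ℕ) : repB a b e f g h k i l ≠ 0 := by
  intro h0
  have hx : (mk3 i 0 (l-1) false true true) ≠ (mk3 i 1 l false false false) := by
    intro hh; exact absurd (mk3_inj hh).2.1 zero_ne_one
  have := congrArg (fun z => ((bas hfree).repr z) (mk3 i 1 l false false false)) h0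
  rw [repB, ← bas_eq hfree, ← bas_eq hfree] at this
  simp [Finsupp.single_apply, hx, Module.Basis.repr_self] at this
  

-- grade membership of reps
lemma repU_mem (i : ℕ) : repU a b e f g h i ∈ gradeLA a b e f g h (2*i) :=
  mem_grade a b e f g h (by simp [deg3_mk])

lemma repG_mem (i l : ℕ) : repG a b e f g h i l ∈ gradeLA a b e f g h (2*i+4*l+3) :=
  mem_grade a b e f g h (by simp [deg3_mk]; try omega)

lemma repB_mem (i l : ℕ) : repB a b e f g h k i l ∈ gradeLA a b e f g h (2*i+2+4*l) := by
  cases l with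
  | zero =>
    have : repB a b e f g h k i 0 = monv a b e f g h (mk3 i 1 0 false false false) := by
      simp [repB]
    rw [this]
    exact mem_grade a b e f g h (by simp [deg3_mk]; try omega)
  | succ l2 =>
    apply Submodule.sub_mem
    · exact mem_grade a b e f g h (by simp [deg3_mk]; try omega)
    · exact Submodule.smul_mem _ _ (mem_grade a b e f g h (by simp [deg3_mk]; try omega))

lemma grade_one_bot : gradeLA a b e f g h 1 = ⊥ := by
  have he : {x : M3 | deg3 x = 1} = ∅ := by
    ext x
    obtain ⟨i, j, l, ε, φ, γ, rfl⟩ : ∃ i j l ε φ γ, x = mk3 i j l ε φ γ :=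
      ⟨_, _, _, _, _, _, mk3_eta x⟩
    simp [deg3_mk]
    cases ε <;> cases φ <;> cases γ <;> simp <;> omega
  rw [grade_def, he, Set.image_empty, Submodule.span_empty]

lemma map_grade_le {L : A →ₗ[ℚ] A} {m : ℕ} {T : Submodule ℚ A}
    (hL : ∀ x : M3, deg3 x = m → L (monv a b e f g h x) ∈ T) :
    ∀ z ∈ gradeLA a b e f g h m, L z ∈ T := by
  intro z hz
  rw [grade_def] at hz
  have hle : Submodule.map L (Submodule.span ℚ (monv a b e f g h '' {x | deg3 x = m})) ≤ T := by
    rw [Submodule.map_span, Submodule.span_le]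
    rintro _ ⟨_, ⟨x, hx, rfl⟩, rfl⟩
    exact hL x hx
  exact hle ⟨z, hz, rfl⟩

lemma pF_deg_big {m : ℕ} (hm3 : 3 ≤ m) {C : A}
    (hB : ∀ i l, i ≤ 1 → 2*i+2+4*l = m → repB a b e f g h k i l = C)
    (hG : ∀ i l, i ≤ 1 → 2*i+4*l+3 = m → repG a b e f g h i l = C)
    (x : M3) (hx : deg3 x = m) : pF a b e f g h k x ∈ ℚ ∙ C := by
  obtain ⟨i, j, l, ε, φ, γ, rfl⟩ : ∃ i j l ε φ γ, x = mk3 i j l ε φ γ :=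
    ⟨_, _, _, _, _, _, mk3_eta x⟩
  rw [pF_mk]
  unfold pAux
  split_ifs with h1 h2 h3 h4
  · -- repU: impossible since m ≥ 3
    exfalso
    obtain ⟨hε, hφ, hi⟩ := h1
    obtain ⟨hj, hl, hγ⟩ := h2
    subst hε hφ hγ hj hl
    rw [deg3_mk] at hx
    simp at hx
    omega
  · obtain ⟨hε, hφ, hi⟩ := h1
    obtain ⟨hj, hγ⟩ := h3
    subst hε hφ hγ hj
    rw [deg3_mk] at hx
    simp at hx
    rw [hB i l hi (by omega)]
    exact Submodule.mem_span_singleton_self _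
  · obtain ⟨hε, hφ, hi⟩ := h1
    obtain ⟨hj, hγ⟩ := h4
    subst hε hφ hγ hj
    rw [deg3_mk] at hx
    simp at hx
    rw [hG i l hi (by omega)]
    exact Submodule.mem_span_singleton_self _
  · exact Submodule.zero_mem _
  · exact Submodule.zero_mem _

end Master

section Quot

variable {A : Type*} [Ring A] [Algebra ℚ A]
variable {a b e f g h : A} {k : ℚ} {d : A →ₗ[ℚ] A}

-- degree-0 and degree-2 classification of P-values
lemma pF_deg0 (x : M3) (hx : deg3 x = 0) :
    pF a b e f g h k x ∈ ℚ ∙ (monv a b e f g h (mk3 0 0 0 false false false)) := by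
  obtain ⟨i, j, l, ε, φ, γ, rfl⟩ : ∃ i j l ε φ γ, x = mk3 i j l ε φ γ :=
    ⟨_, _, _, _, _, _, mk3_eta x⟩
  rw [deg3_mk] at hx
  have hi : i = 0 := by cases ε <;> cases φ <;> cases γ <;> simp at hx <;> omega
  have hj : j = 0 := by cases ε <;> cases φ <;> cases γ <;> simp at hx <;> omega
  have hl : l = 0 := by cases ε <;> cases φ <;> cases γ <;> simp at hx <;> omega
  have hε : ε = false := by cases ε <;> cases φ <;> cases γ <;> simp at hx ⊢ <;> omega
  have hφ : φ = false := by cases ε <;> cases φ <;> cases γ <;> simp at hx ⊢ <;> omega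
  have hγ : γ = false := by cases ε <;> cases φ <;> cases γ <;> simp at hx ⊢ <;> omega
  subst hi hj hl hε hφ hγ
  rw [pF_mk]
  unfold pAux
  simp [repU]

lemma pF_deg2 (x : M3) (hx : deg3 x = 2) :
    pF a b e f g h k x ∈ Submodule.span ℚ ({a, b} : Set A) := by
  obtain ⟨i, j, l, ε, φ, γ, rfl⟩ : ∃ i j l ε φ γ, x = mk3 i j l ε φ γ :=
    ⟨_, _, _, _, _, _, mk3_eta x⟩
  rw [deg3_mk] at hx
  have hε : ε = false := by cases ε <;> cases φ <;> cases γ <;> simp at hx ⊢ <;> omega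
  have hφ : φ = false := by cases ε <;> cases φ <;> cases γ <;> simp at hx ⊢ <;> omega
  have hγ : γ = false := by cases ε <;> cases φ <;> cases γ <;> simp at hx ⊢ <;> omega
  subst hε hφ hγ
  simp at hx
  have hl : l = 0 := by omega
  subst hl
  rcases (by omega : (i = 1 ∧ j = 0) ∨ (i = 0 ∧ j = 1)) with ⟨rfl, rfl⟩ | ⟨rfl, rfl⟩
  · rw [pF_mk]
    unfold pAux
    simp [repU]
    have : monv a b e f g h (mk3 1 0 0 false false false) = a := by
      rw [mon_mk]; simp [nm]
    rw [this]
    exact Submodule.subset_span (Set.mem_insert _ _)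
  · rw [pF_mk]
    unfold pAux
    simp [repB]
    have : monv a b e f g h (mk3 0 1 0 false false false) = b := by
      rw [mon_mk]; simp [nm]
    rw [this]
    exact Submodule.subset_span (Set.mem_insert_of_mem _ rfl)

-- the abstract quotient-dimension lemma
lemma quot_dim_one (m : ℕ) (S P : A →ₗ[ℚ] A) (C : A)
    (hmast : ∀ z, d (S z) + S (d z) = z - P z)
    (hPd : ∀ z, P (d z) = 0)
    (hCg : C ∈ gradeLA a b e f g h m) (hdC : d C = 0) (hPC : P C = C) (hC0 : C ≠ 0)
    (hPgrade : ∀ z ∈ gradeLA a b e f g h m, P z ∈ ℚ ∙ C) :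
    Module.finrank ℚ (HcohLA a b e f g h d m) = 1 ∧
      Nontrivial (HcohLA a b e f g h d m) := by
  set Z := LinearMap.ker d ⊓ gradeLA a b e f g h m with hZ
  set N := Submodule.comap Z.subtype (LinearMap.range d) with hN
  have hCZ : C ∈ Z := ⟨LinearMap.mem_ker.2 hdC, hCg⟩
  set c0 : HcohLA a b e f g h d m := Submodule.Quotient.mk (⟨C, hCZ⟩ : Z) with hc0
  have hNker : N ≤ LinearMap.ker (P ∘ₗ Z.subtype) := by
    intro z hz
    obtain ⟨w, hw⟩ := hz
    have hw' : d w = (z : A) := hw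
    simp only [LinearMap.mem_ker, LinearMap.comp_apply, Submodule.subtype_apply]
    rw [← hw']
    exact hPd w
  set Φ : HcohLA a b e f g h d m →ₗ[ℚ] A := Submodule.liftQ N (P ∘ₗ Z.subtype) hNker with hΦ
  have hΦc0 : Φ c0 = C := by
    rw [hc0, hΦ, Submodule.liftQ_apply]
    simpa using hPC
  have hc0ne : c0 ≠ 0 := by
    intro h0
    rw [h0, map_zero] at hΦc0
    exact hC0 hΦc0.symm
  have hspanq : ∀ w : HcohLA a b e f g h d m, ∃ r : ℚ, r • c0 = w := by
    intro w
    obtain ⟨z, rfl⟩ := Submodule.Quotient.mk_surjective N w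
    obtain ⟨r, hr⟩ := Submodule.mem_span_singleton.1 (hPgrade z.1 z.2.2)
    refine ⟨r, ?_⟩
    rw [hc0, ← Submodule.Quotient.mk_smul]
    rw [Submodule.Quotient.eq]
    have hz0 : d z.1 = 0 := LinearMap.mem_ker.1 z.2.1
    have hm := hmast z.1
    rw [hz0, map_zero, add_zero] at hm
    have hmem : (r • C - z.1) ∈ LinearMap.range d :=
      ⟨-(S z.1), by rw [map_neg, hm, hr]; abel⟩
    show r • (⟨C, hCZ⟩ : Z) - z ∈ N
    simpa [hN, Submodule.mem_comap] using hmem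
  exact ⟨finrank_eq_one c0 hc0ne hspanq, nontrivial_of_ne c0 0 hc0ne⟩


end Quot

end S1

namespace S1
variable {A : Type*} [Ring A] [Algebra ℚ A]
variable {a b e f g h : A} {k : ℚ} {d : A →ₗ[ℚ] A}
variable (hleib : ∀ (m : ℕ) (x y : A), x ∈ gradeLA a b e f g h m →
      d (x * y) = d x * y + ((-1 : ℚ) ^ m) • (x * d y))
variable (hfree : IsFreeGCA ![a, b, h] ![e, f, g])
variable (hk : k ≠ 0)
variable (hda : d a = 0) (hdb : d b = 0) (hdg : d g = 0)
variable (hde : d e = a * a) (hdf : d f = b * b) (hdh : d h = k • (b * g))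

lemma mon_a : monv a b e f g h (mk3 1 0 0 false false false) = a := by
  rw [mon_mk]; simp [nm]

lemma mon_b : monv a b e f g h (mk3 0 1 0 false false false) = b := by
  rw [mon_mk]; simp [nm]

lemma mon_one : monv a b e f g h (mk3 0 0 0 false false false) = 1 := by
  rw [mon_mk]; simp [nm]

include hleib hfree hk hda hdb hdg hde hdf hdh in
lemma hmast_pt (z : A) :
    d (Smap k hfree z) + Smap k hfree (d z) = z - Pmap k hfree z := by
  have := LinearMap.congr_fun (master_map (hleib:=hleib) (hfree:=hfree) (hk:=hk)
    (hda:=hda) (hdb:=hdb) (hdg:=hdg) (hde:=hde) (hdf:=hdf) (hdh:=hdh)) z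
  simpa using this

include hleib hfree hda hdb hdg hde hdf hdh in
lemma hPd_pt (z : A) : Pmap k hfree (d z) = 0 := by
  have := LinearMap.congr_fun (Pd_map (hleib:=hleib) (hfree:=hfree)
    (hda:=hda) (hdb:=hdb) (hdg:=hdg) (hde:=hde) (hdf:=hdf) (hdh:=hdh)) z
  simpa using this

include hfree in
lemma Pmap_a : Pmap k hfree a = a := by
  have h2 : Pmap k hfree (monv a b e f g h (mk3 1 0 0 false false false))
      = Pmap k hfree a := by rw [mon_a]
  rw [← h2, Pmap_mon, pF_mk]
  unfold pAux
  simp [repU, mon_a]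

include hfree in
lemma Pmap_b : Pmap k hfree b = b := by
  have h2 : Pmap k hfree (monv a b e f g h (mk3 0 1 0 false false false))
      = Pmap k hfree b := by rw [mon_b]
  rw [← h2, Pmap_mon, pF_mk]
  unfold pAux
  simp [repB, mon_b]

include hfree in
lemma Pmap_one : Pmap k hfree (1 : A) = 1 := by
  have h2 : Pmap k hfree (monv a b e f g h (mk3 0 0 0 false false false))
      = Pmap k hfree (1 : A) := by rw [mon_one]
  rw [← h2, Pmap_mon, pF_mk]
  unfold pAux
  simp [repU, mon_one]

include hleib hfree hk hda hdb hdg hde hdf hdh in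
lemma dim0 : Module.finrank ℚ (HcohLA a b e f g h d 0) = 1 := by
  refine (quot_dim_one 0 (Smap k hfree) (Pmap k hfree) (1:A)
    (hmast_pt hleib hfree hk hda hdb hdg hde hdf hdh)
    (hPd_pt hleib hfree hda hdb hdg hde hdf hdh) ?_ (d_one (hleib:=hleib))
    (Pmap_one hfree) ?_ ?_).1
  · have h1 := mem_grade a b e f g h (x := mk3 0 0 0 false false false)
      (m := 0) (by simp [deg3_mk])
    rwa [mon_one] at h1
  · have h3 : monv a b e f g h (mk3 0 0 0 false false false) ≠ 0 :=
      repU_ne (hfree:=hfree) 0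
    rwa [mon_one] at h3
  · apply map_grade_le
    intro x hx
    have h2 := pF_deg0 (a:=a) (b:=b) (e:=e) (f:=f) (g:=g) (h:=h) (k:=k) x hx
    rw [mon_one] at h2
    rw [Pmap_mon]
    exact h2

lemma dim1 : Subsingleton (HcohLA a b e f g h d 1) := by
  have hZ1 : LinearMap.ker d ⊓ gradeLA a b e f g h 1 = ⊥ := by
    rw [grade_one_bot]; exact inf_bot_eq _
  haveI hsub : Subsingleton ↥(LinearMap.ker d ⊓ gradeLA a b e f g h 1) := by
    rw [hZ1]; infer_instance
  exact (Submodule.Quotient.mk_surjective _).subsingleton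

include hfree in
lemma Pgrade2 : ∀ z ∈ gradeLA a b e f g h 2,
    Pmap k hfree z ∈ Submodule.span ℚ ({a,b} : Set A) := by
  apply map_grade_le
  intro x hx
  rw [Pmap_mon]
  exact pF_deg2 x hx

include hleib hfree hk hda hdb hdg hde hdf hdh in
lemma grade2_le : LinearMap.ker d ⊓ gradeLA a b e f g h 2 ≤
    Submodule.span ℚ {a, b} ⊔ LinearMap.range d := by
  rintro z ⟨hzk, hzg⟩
  have hz0 : d z = 0 := LinearMap.mem_ker.1 hzk
  have hm := hmast_pt hleib hfree hk hda hdb hdg hde hdf hdh z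
  rw [hz0, map_zero, add_zero] at hm
  have hzeq : z = Pmap k hfree z + d (Smap k hfree z) := by rw [hm]; abel
  rw [hzeq]
  exact Submodule.add_mem _ (Submodule.mem_sup_left (Pgrade2 hfree z hzg))
    (Submodule.mem_sup_right ⟨Smap k hfree z, rfl⟩)

end S1

namespace S1
variable {A : Type*} [Ring A] [Algebra ℚ A]
variable {a b e f g h : A} {k : ℚ} {d : A →ₗ[ℚ] A}
variable (hleib : ∀ (m : ℕ) (x y : A), x ∈ gradeLA a b e f g h m →
      d (x * y) = d x * y + ((-1 : ℚ) ^ m) • (x * d y))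
variable (hfree : IsFreeGCA ![a, b, h] ![e, f, g])
variable (hk : k ≠ 0)
variable (hda : d a = 0) (hdb : d b = 0) (hdg : d g = 0)
variable (hde : d e = a * a) (hdf : d f = b * b) (hdh : d h = k • (b * g))

include hleib hfree hk hda hdb hdg hde hdf hdh in
lemma dim2 : Module.finrank ℚ (HcohLA a b e f g h d 2) = 2 ∧
    Nontrivial (HcohLA a b e f g h d 2) := by
  have hmast := hmast_pt hleib hfree hk hda hdb hdg hde hdf hdh
  have hPd := hPd_pt hleib hfree hda hdb hdg hde hdf hdh
  have haZ : a ∈ LinearMap.ker d ⊓ gradeLA a b e f g h 2 := by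
    refine ⟨LinearMap.mem_ker.2 hda, ?_⟩
    have h1 := mem_grade a b e f g h (x := mk3 1 0 0 false false false) (m := 2)
      (by simp [deg3_mk])
    rwa [mon_a] at h1
  have hbZ : b ∈ LinearMap.ker d ⊓ gradeLA a b e f g h 2 := by
    refine ⟨LinearMap.mem_ker.2 hdb, ?_⟩
    have h1 := mem_grade a b e f g h (x := mk3 0 1 0 false false false) (m := 2)
      (by simp [deg3_mk])
    rwa [mon_b] at h1
  set Z2 := LinearMap.ker d ⊓ gradeLA a b e f g h 2 with hZ2
  set N2 := Submodule.comap Z2.subtype (LinearMap.range d) with hN2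
  have hNker2 : N2 ≤ LinearMap.ker (Pmap k hfree ∘ₗ Z2.subtype) := by
    intro z hz
    obtain ⟨w, hw⟩ := hz
    have hw' : d w = (z : A) := hw
    simp only [LinearMap.mem_ker, LinearMap.comp_apply, Submodule.subtype_apply]
    rw [← hw']
    exact hPd w
  set Φ2 : HcohLA a b e f g h d 2 →ₗ[ℚ] A :=
    Submodule.liftQ N2 (Pmap k hfree ∘ₗ Z2.subtype) hNker2 with hΦ2
  set fam2 : Fin 2 → HcohLA a b e f g h d 2 :=
    ![Submodule.Quotient.mk ⟨a, haZ⟩, Submodule.Quotient.mk ⟨b, hbZ⟩] with hfam2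
  have hcomp : (⇑Φ2 ∘ fam2) = ![a, b] := by
    funext t
    fin_cases t <;>
      simp only [hfam2, Function.comp_apply, Matrix.cons_val_zero, Matrix.cons_val_one,
        Matrix.head_cons, hΦ2, Submodule.liftQ_apply, LinearMap.comp_apply,
        Submodule.subtype_apply] <;>
      [exact Pmap_a hfree; exact Pmap_b hfree]
  have hliAB : LinearIndependent ℚ ![a, b] := by
    have hinj : Function.Injective
        (![mk3 1 0 0 false false false, mk3 0 1 0 false false false] : Fin 2 → M3) := by
      intro s t hst
      fin_cases s <;> fin_cases t <;> first
        | rfl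
        | (exfalso
           simp only [Fin.isValue, Matrix.cons_val_zero, Matrix.cons_val_one,
             Matrix.head_cons] at hst
           have := (mk3_inj hst).1
           omega)
    have hli := (bas hfree).linearIndependent.comp _ hinj
    have heq : (⇑(bas hfree) ∘ ![mk3 1 0 0 false false false, mk3 0 1 0 false false false])
        = ![a, b] := by
      funext t
      fin_cases t <;>
        simp only [Function.comp_apply, Fin.isValue, Matrix.cons_val_zero, Matrix.cons_val_one,
          Matrix.head_cons, bas_eq] <;> [exact mon_a; exact mon_b]
    rwa [heq] at hli
  have hlifam : LinearIndependent ℚ fam2 :=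
    LinearIndependent.of_comp Φ2 (by rwa [hcomp])
  have hsp : ⊤ ≤ Submodule.span ℚ (Set.range fam2) := by
    intro w _
    obtain ⟨z, rfl⟩ := Submodule.Quotient.mk_surjective N2 w
    obtain ⟨r, s, hrs⟩ := Submodule.mem_span_pair.1 (Pgrade2 hfree z.1 z.2.2)
    have hz0 : d z.1 = 0 := LinearMap.mem_ker.1 z.2.1
    have hm := hmast z.1
    rw [hz0, map_zero, add_zero] at hm
    have key : Submodule.Quotient.mk (p := N2) z = r • fam2 0 + s • fam2 1 := by
      have h1 : r • fam2 0 + s • fam2 1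
          = Submodule.Quotient.mk (p := N2) (r • ⟨a, haZ⟩ + s • ⟨b, hbZ⟩) := by
        rw [hfam2]
        simp only [Fin.isValue, Matrix.cons_val_zero, Matrix.cons_val_one, Matrix.head_cons,
          Submodule.Quotient.mk_add, Submodule.Quotient.mk_smul]
      rw [h1, Submodule.Quotient.eq]
      have hmem : ((z : A) - (r • a + s • b)) ∈ LinearMap.range d := by
        refine ⟨Smap k hfree z.1, ?_⟩
        rw [hm, hrs]
      simpa [hN2, Submodule.mem_comap] using hmem
    rw [key]
    exact Submodule.add_mem _
      (Submodule.smul_mem _ _ (Submodule.subset_span ⟨0, rfl⟩))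
      (Submodule.smul_mem _ _ (Submodule.subset_span ⟨1, rfl⟩))
  have bas2 : Module.Basis (Fin 2) ℚ (HcohLA a b e f g h d 2) := Module.Basis.mk hlifam hsp
  constructor
  · rw [Module.finrank_eq_card_basis bas2, Fintype.card_fin]
  · refine nontrivial_of_ne (fam2 0) 0 ?_
    intro h0
    have hc : Φ2 (fam2 0) = a := congrFun hcomp 0
    rw [h0, map_zero] at hc
    have hane : a ≠ 0 := by
      have h3 : monv a b e f g h (mk3 1 0 0 false false false) ≠ 0 :=
        repU_ne (hfree:=hfree) 1
      rwa [mon_a] at h3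
    exact hane hc.symm

end S1

namespace S1
variable {A : Type*} [Ring A] [Algebra ℚ A]
variable {a b e f g h : A} {k : ℚ} {d : A →ₗ[ℚ] A}
variable (hleib : ∀ (m : ℕ) (x y : A), x ∈ gradeLA a b e f g h m →
      d (x * y) = d x * y + ((-1 : ℚ) ^ m) • (x * d y))
variable (hfree : IsFreeGCA ![a, b, h] ![e, f, g])
variable (hk : k ≠ 0)
variable (hda : d a = 0) (hdb : d b = 0) (hdg : d g = 0)
variable (hde : d e = a * a) (hdf : d f = b * b) (hdh : d h = k • (b * g))

include hleib hfree hk hda hdb hdg hde hdf hdh in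
lemma dimBig (m : ℕ) (hm : 3 ≤ m) :
    Module.finrank ℚ (HcohLA a b e f g h d m) = 1 ∧
      Nontrivial (HcohLA a b e f g h d m) := by
  have hmast := hmast_pt hleib hfree hk hda hdb hdg hde hdf hdh
  have hPd := hPd_pt hleib hfree hda hdb hdg hde hdf hdh
  have hdB := d_repB (hleib:=hleib) (hfree:=hfree) (hda:=hda) (hdb:=hdb) (hdg:=hdg)
    (hde:=hde) (hdf:=hdf) (hdh:=hdh)
  have hdG := d_repG (hleib:=hleib) (hfree:=hfree) (hda:=hda) (hdb:=hdb) (hdg:=hdg)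
    (hde:=hde) (hdf:=hdf) (hdh:=hdh)
  have hPgr : ∀ (C : A),
      (∀ i l, i ≤ 1 → 2*i+2+4*l = m → repB a b e f g h k i l = C) →
      (∀ i l, i ≤ 1 → 2*i+4*l+3 = m → repG a b e f g h i l = C) →
      ∀ z ∈ gradeLA a b e f g h m, Pmap k hfree z ∈ ℚ ∙ C := by
    intro C hB hG
    apply map_grade_le
    intro x hx
    rw [Pmap_mon]
    exact pF_deg_big hm hB hG x hx
  rcases (by omega : m % 4 = 0 ∨ m % 4 = 1 ∨ m % 4 = 2 ∨ m % 4 = 3) with h4|h4|h4|h4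
  · obtain ⟨l0, rfl⟩ : ∃ l0, m = 2*1+2+4*l0 := ⟨(m-4)/4, by omega⟩
    refine quot_dim_one _ _ _ (repB a b e f g h k 1 l0) hmast hPd (repB_mem 1 l0)
      (hdB _ _) (Pmap_repB (k:=k) (hfree:=hfree) (i:=1) l0 (by norm_num))
      (repB_ne (hfree:=hfree) _ _) ?_
    refine hPgr _ ?_ ?_
    · intro i l hi he
      have h1 : i = 1 := by omega
      have h2 : l = l0 := by omega
      rw [h1, h2]
    · intro i l hi he; exfalso; omega
  · obtain ⟨l0, rfl⟩ : ∃ l0, m = 2*1+4*l0+3 := ⟨(m-5)/4, by omega⟩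
    refine quot_dim_one _ _ _ (repG a b e f g h 1 l0) hmast hPd (repG_mem 1 l0)
      (hdG _ _) (Pmap_repG (k:=k) (hfree:=hfree) (i:=1) l0 (by norm_num))
      (repG_ne (hfree:=hfree) _ _) ?_
    refine hPgr _ ?_ ?_
    · intro i l hi he; exfalso; omega
    · intro i l hi he
      have h1 : i = 1 := by omega
      have h2 : l = l0 := by omega
      rw [h1, h2]
  · obtain ⟨l0, rfl⟩ : ∃ l0, m = 2*0+2+4*l0 := ⟨(m-2)/4, by omega⟩
    refine quot_dim_one _ _ _ (repB a b e f g h k 0 l0) hmast hPd (repB_mem 0 l0)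
      (hdB _ _) (Pmap_repB (k:=k) (hfree:=hfree) (i:=0) l0 (by norm_num))
      (repB_ne (hfree:=hfree) _ _) ?_
    refine hPgr _ ?_ ?_
    · intro i l hi he
      have h1 : i = 0 := by omega
      have h2 : l = l0 := by omega
      rw [h1, h2]
    · intro i l hi he; exfalso; omega
  · obtain ⟨l0, rfl⟩ : ∃ l0, m = 2*0+4*l0+3 := ⟨(m-3)/4, by omega⟩
    refine quot_dim_one _ _ _ (repG a b e f g h 0 l0) hmast hPd (repG_mem 0 l0)
      (hdG _ _) (Pmap_repG (k:=k) (hfree:=hfree) (i:=0) l0 (by norm_num))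
      (repG_ne (hfree:=hfree) _ _) ?_
    refine hPgr _ ?_ ?_
    · intro i l hi he; exfalso; omega
    · intro i l hi he
      have h1 : i = 0 := by omega
      have h2 : l = l0 := by omega
      rw [h1, h2]

include hleib hfree hk hda hdb hdg hde hdf hdh in
lemma notFD : ¬ FiniteDimensional ℚ (HtotLA d) := by
  intro hFD
  have hPd := hPd_pt hleib hfree hda hdb hdg hde hdf hdh
  have hdG := d_repG (hleib:=hleib) (hfree:=hfree) (hda:=hda) (hdb:=hdb) (hdg:=hdg)
    (hde:=hde) (hdf:=hdf) (hdh:=hdh)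
  set Zt := LinearMap.ker d with hZt
  set Nt := Submodule.comap Zt.subtype (LinearMap.range d) with hNt
  have hNkert : Nt ≤ LinearMap.ker (Pmap k hfree ∘ₗ Zt.subtype) := by
    intro z hz
    obtain ⟨w, hw⟩ := hz
    have hw' : d w = (z : A) := hw
    simp only [LinearMap.mem_ker, LinearMap.comp_apply, Submodule.subtype_apply]
    rw [← hw']
    exact hPd w
  set Φt : HtotLA d →ₗ[ℚ] A := Submodule.liftQ Nt (Pmap k hfree ∘ₗ Zt.subtype) hNkert
    with hΦt
  have hdGZ : ∀ l : ℕ, repG a b e f g h 0 l ∈ Zt := fun l =>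
    LinearMap.mem_ker.2 (hdG 0 l)
  set famt : ℕ → HtotLA d := fun l => Submodule.Quotient.mk ⟨repG a b e f g h 0 l, hdGZ l⟩
    with hfamt
  have hliG : LinearIndependent ℚ (fun l : ℕ => repG a b e f g h 0 l) := by
    have hinj : Function.Injective (fun l : ℕ => mk3 0 0 l false false true) :=
      fun s t hst => (mk3_inj hst).2.2.1
    have hli := (bas hfree).linearIndependent.comp _ hinj
    have heq : (⇑(bas hfree) ∘ fun l : ℕ => mk3 0 0 l false false true)
        = fun l : ℕ => repG a b e f g h 0 l := by
      funext l
      rw [Function.comp_apply, bas_eq]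
      rfl
    rwa [heq] at hli
  have hlit : LinearIndependent ℚ famt := by
    apply LinearIndependent.of_comp Φt
    have hcomp : (⇑Φt ∘ famt) = fun l : ℕ => repG a b e f g h 0 l := by
      funext l
      simp only [hfamt, Function.comp_apply, hΦt, Submodule.liftQ_apply,
        LinearMap.comp_apply, Submodule.subtype_apply]
      exact Pmap_repG (k:=k) (hfree:=hfree) (i:=0) l (by norm_num)
    rwa [hcomp]
  exact Module.Finite.not_linearIndependent_of_infinite famt hlit

end S1

open S1 in
theorem statement1 {A : Type*} [Ring A] [Algebra ℚ A]
    (a b e f g h : A) (k : ℚ) (hk : k ≠ 0) (d : A →ₗ[ℚ] A)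
    (hfree : IsFreeGCA ![a, b, h] ![e, f, g])
    (hdeg : ∀ (m : ℕ) (x : A), x ∈ gradeLA a b e f g h m → d x ∈ gradeLA a b e f g h (m + 1))
    (hleib : ∀ (m : ℕ) (x y : A), x ∈ gradeLA a b e f g h m →
      d (x * y) = d x * y + ((-1 : ℚ) ^ m) • (x * d y))
    (hda : d a = 0) (hdb : d b = 0) (hdg : d g = 0)
    (hde : d e = a * a) (hdf : d f = b * b) (hdh : d h = k • (b * g)) :
    Module.finrank ℚ (HcohLA a b e f g h d 0) = 1 ∧
    Subsingleton (HcohLA a b e f g h d 1) ∧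
    Module.finrank ℚ (HcohLA a b e f g h d 2) = 2 ∧
    (LinearMap.ker d ⊓ gradeLA a b e f g h 2 ≤
      Submodule.span ℚ {a, b} ⊔ LinearMap.range d) ∧
    (∀ m : ℕ, 3 ≤ m → Module.finrank ℚ (HcohLA a b e f g h d m) = 1) ∧
    (∀ m : ℕ, 2 ≤ m → Nontrivial (HcohLA a b e f g h d m)) ∧
    ¬ FiniteDimensional ℚ (HtotLA d) := by
  refine ⟨dim0 hleib hfree hk hda hdb hdg hde hdf hdh, dim1,
    (dim2 hleib hfree hk hda hdb hdg hde hdf hdh).1,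
    grade2_le hleib hfree hk hda hdb hdg hde hdf hdh,
    fun m hm => (dimBig hleib hfree hk hda hdb hdg hde hdf hdh m hm).1,
    ?_, notFD hleib hfree hk hda hdb hdg hde hdf hdh⟩
  intro m hm
  rcases eq_or_lt_of_le hm with hm2 | hm3
  · rw [← hm2]; exact (dim2 hleib hfree hk hda hdb hdg hde hdf hdh).2
  · exact (dimBig hleib hfree hk hda hdb hdg hde hdf hdh m hm3).2
end

section
/- Let k be a nonzero rational number, and for n ≥ 1 set β_n = b·hⁿ − n·k·f·g·h^{n−1} ∈ Λ_A. Then the graded ℚ-algebra H(Λ_A, d) is isomorphic to ℚ[a]/(a²) ⊗ (ℚ ⊕ M), where a has degree 2, M is the graded ℚ-vector space with basis consisting of one element in degree 2 (the class of b), one element in degree 4n+3 for each n ≥ 0 (the class of g·hⁿ), and one element in degree 4n+2 for each n ≥ 1 (the class of β_n), and ℚ ⊕ M is the square-zero extension of ℚ by M (i.e. the product of any two elements of M is zero). In particular the classes of a, b, g·hⁿ (n ≥ 0) and β_n (n ≥ 1) generate H(Λ_A,d) as a ℚ-algebra, and in H(Λ_A,d) the relations [a]² = 0, [b]² = 0,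 [b][g] = 0 hold. (This is the paper's presentation H^*(Im Emb_ω(c,μ); ℚ) = Λ(a,b,g, ghⁿ, bhⁿ)/⟨a², b², bg⟩.) -/
/-- Index of the basis of `M`: the class of `b`; the classes of `g·hⁿ` (n ≥ 0); and the
classes of `β_{m+1}` (m ≥ 0). -/
abbrev idxM : Type := Unit ⊕ ℕ ⊕ ℕ

/-- Representatives of the basis of `M`: `b`, `g·hⁿ`, and
`β_{m+1} = b·h^{m+1} − (m+1)·k·f·g·hᵐ`. -/
def mEltA {A : Type*} [Ring A] [Algebra ℚ A] (b f g h : A) (k : ℚ) : idxM → A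
  | Sum.inl _ => b
  | Sum.inr (Sum.inl n) => g * h ^ n
  | Sum.inr (Sum.inr m) => b * h ^ (m + 1) - (((m : ℚ) + 1) * k) • (f * (g * h ^ m))

/-- Degrees of the basis elements of `M`. -/
def degMA : idxM → ℕ
  | Sum.inl _ => 2
  | Sum.inr (Sum.inl n) => 4 * n + 3
  | Sum.inr (Sum.inr m) => 4 * (m + 1) + 2

/-- Representatives of the basis of `ℚ[a]/(a²) ⊗ (ℚ ⊕ M)`: the elements `a^ε · m` with
`ε ∈ {0,1}` and `m` either `1` or a basis element of `M`. -/
def cEltA {A : Type*} [Ring A] [Algebra ℚ A] (a b f g h : A) (k : ℚ) :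
    Bool × Option idxM → A :=
  fun p => (if p.1 then a else 1) * (Option.elim p.2 1 (mEltA b f g h k))

/-- Degrees of the basis of `ℚ[a]/(a²) ⊗ (ℚ ⊕ M)`. -/
def degCA : Bool × Option idxM → ℕ :=
  fun p => (if p.1 then 2 else 0) + Option.elim p.2 0 degMA

/-!
`Λ_A` is the tensor product of the dg subalgebras `Λ(a, e)` and `Λ(b, f, g, h)`.  The first one
contracts onto `ℚ[a]/(a²)` through the homotopy `aᵖ⁺² ↦ aᵖ e`.  The second one contracts onto
the span of `1, b, g hⁿ, βₙ` through the homotopy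
`bᵠ⁺² hʳ ↦ bᵠ hʳ f`, `bᵠ⁺² hʳ g ↦ bᵠ hʳ f g`, `b hʳ g ↦ hʳ⁺¹ / ((r + 1) k)`,
which uses `k ≠ 0`.  Tensoring the two contractions gives a projection `Π` onto the span of
the representatives `a^ε m` and a homotopy `S` with `id - Π = d S + S d` and `Π d = 0`.  Hence
every cocycle `x` equals `Π x + d (S x)`, and a linear relation among the classes of the
representatives is killed by `Π`, so it already holds among the representatives, which are
linearly independent in `Λ_A`.  The products in `M` are coboundaries of explicit elements:
`b βₘ = d (f hᵐ⁺¹)`, `b g hⁿ = d (hⁿ⁺¹) / ((n + 1) k)`, and so on.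
-/

lemma IsFreeGCA.odd_mul_self_s2 {A : Type*} [Ring A] [Algebra ℚ A] {nE nO : ℕ}
    {ev : Fin nE → A} {od : Fin nO → A} (hA : IsFreeGCA ev od) (i : Fin nO) :
    od i * od i = 0 :=
  have := IsAddTorsionFree.of_module_rat A
  self_eq_neg.mp (hA.anticomm i i)

lemma LinearIndependent.mkQ_of_comp {R M N ι : Type*} [Ring R] [AddCommGroup M] [Module R M]
    [AddCommGroup N] [Module R N] {v : ι → M} {p : Submodule R M} {P : M →ₗ[R] N}
    (hp : p ≤ LinearMap.ker P) (hv : LinearIndependent R (P ∘ v)) :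
    LinearIndependent R (p.mkQ ∘ v) :=
  hv.of_comp (p.liftQ P hp)

structure LambdaA (A : Type*) [Ring A] [Algebra ℚ A] where
  (a b e f g h : A)
  k : ℚ
  hk : k ≠ 0
  d : A →ₗ[ℚ] A
  hfree : IsFreeGCA ![a, b, h] ![e, f, g]
  hleib : ∀ (m : ℕ) (x y : A), x ∈ gradeLA a b e f g h m →
      d (x * y) = d x * y + ((-1 : ℚ) ^ m) • (x * d y)
  hda : d a = 0
  hdb : d b = 0
  hdg : d g = 0
  hde : d e = a * a
  hdf : d f = b * b
  hdh : d h = k • (b * g)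

namespace LambdaA

variable {A : Type*} [Ring A] [Algebra ℚ A] (C : LambdaA A)

abbrev grade (n : ℕ) : Submodule ℚ A := gradeLA C.a C.b C.e C.f C.g C.h n

lemma commute_a (x : A) : Commute C.a x := C.hfree.central 0 x
lemma commute_b (x : A) : Commute C.b x := C.hfree.central 1 x
lemma commute_h (x : A) : Commute C.h x := C.hfree.central 2 x

lemma g_mul_e : C.g * C.e = -(C.e * C.g) := C.hfree.anticomm 2 0
lemma g_mul_f : C.g * C.f = -(C.f * C.g) := C.hfree.anticomm 2 1
lemma f_mul_f : C.f * C.f = 0 := C.hfree.odd_mul_self_s2 1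
lemma g_mul_g : C.g * C.g = 0 := C.hfree.odd_mul_self_s2 2

lemma g_mul_fg : C.g * (C.f * C.g) = 0 := by
  rw [← mul_assoc, C.g_mul_f, neg_mul, mul_assoc, C.g_mul_g, mul_zero, neg_zero]

lemma fg_mul_g : C.f * C.g * C.g = 0 := by rw [mul_assoc, C.g_mul_g, mul_zero]

lemma g_mul_b : C.g * C.b = C.b * C.g := (C.commute_b C.g).symm.eq

lemma fg_mul_b : C.f * C.g * C.b = C.b * (C.f * C.g) := (C.commute_b _).symm.eq

lemma fg_mul_fg : C.f * C.g * (C.f * C.g) = 0 := by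
  rw [← mul_assoc, mul_assoc C.f, C.g_mul_f, mul_neg, neg_mul, ← mul_assoc, C.f_mul_f,
    zero_mul, zero_mul, neg_zero]

def oddMono (u v w : Bool) : A :=
  (if u then C.e else 1) * ((if v then C.f else 1) * (if w then C.g else 1))

def mono (p q r : ℕ) (u v w : Bool) : A :=
  C.a ^ p * (C.b ^ q * (C.h ^ r * C.oddMono u v w))

lemma gcMon_eq_mono (p q r : ℕ) (u v w : Bool) :
    gcMon ![C.a, C.b, C.h] ![C.e, C.f, C.g] (![p, q, r], ![u, v, w]) = C.mono p q r u v w := by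
  cases u <;> cases v <;> cases w <;> simp [gcMon, List.ofFn_succ, mono, oddMono, mul_assoc]

lemma gcDeg_eq (p q r : ℕ) (u v w : Bool) :
    gcDeg ![2, 2, 4] ![3, 3, 3] (![p, q, r], ![u, v, w]) =
      2 * p + 2 * q + 4 * r + cond u 3 0 + cond v 3 0 + cond w 3 0 := by
  cases u <;> cases v <;> cases w <;> simp [gcDeg, Fin.sum_univ_three]

lemma mono_mem_grade {p q r : ℕ} {u v w : Bool} {n : ℕ}
    (hn : 2 * p + 2 * q + 4 * r + cond u 3 0 + cond v 3 0 + cond w 3 0 = n) :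
    C.mono p q r u v w ∈ C.grade n :=
  Submodule.subset_span ⟨(![p, q, r], ![u, v, w]), by rw [Set.mem_ofPred, gcDeg_eq, hn],
    C.gcMon_eq_mono p q r u v w⟩

lemma one_mem_grade : (1 : A) ∈ C.grade (2 * 0) := by
  simpa [mono, oddMono] using C.mono_mem_grade (p := 0) (q := 0) (r := 0) (u := false)
    (v := false) (w := false) (n := 2 * 0) rfl

lemma apow_mem_grade (p : ℕ) : C.a ^ p ∈ C.grade (2 * p) := by
  simpa [mono, oddMono] using C.mono_mem_grade (p := p) (q := 0) (r := 0) (u := false)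
    (v := false) (w := false) (n := 2 * p) (by simp)

lemma bpow_mem_grade (q : ℕ) : C.b ^ q ∈ C.grade (2 * q) := by
  simpa [mono, oddMono] using C.mono_mem_grade (p := 0) (q := q) (r := 0) (u := false)
    (v := false) (w := false) (n := 2 * q) (by simp)

lemma hpow_mem_grade (r : ℕ) : C.h ^ r ∈ C.grade (2 * (2 * r)) := by
  simpa [mono, oddMono] using C.mono_mem_grade (p := 0) (q := 0) (r := r) (u := false)
    (v := false) (w := false) (n := 2 * (2 * r)) (by simp; ring)

lemma e_mem_grade : C.e ∈ C.grade (2 * 1 + 1) := by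
  simpa [mono, oddMono] using C.mono_mem_grade (p := 0) (q := 0) (r := 0) (u := true)
    (v := false) (w := false) (n := 2 * 1 + 1) rfl

lemma f_mem_grade : C.f ∈ C.grade (2 * 1 + 1) := by
  simpa [mono, oddMono] using C.mono_mem_grade (p := 0) (q := 0) (r := 0) (u := false)
    (v := true) (w := false) (n := 2 * 1 + 1) rfl

lemma d_mul_of_even {m : ℕ} {x : A} (hx : x ∈ C.grade (2 * m)) (y : A) :
    C.d (x * y) = C.d x * y + x * C.d y := by
  rw [C.hleib _ x y hx, pow_mul, neg_one_sq, one_pow, one_smul]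

lemma d_mul_of_odd {m : ℕ} {x : A} (hx : x ∈ C.grade (2 * m + 1)) (y : A) :
    C.d (x * y) = C.d x * y - x * C.d y := by
  rw [C.hleib _ x y hx, pow_succ, pow_mul, neg_one_sq, one_pow, one_mul, neg_one_smul,
    sub_eq_add_neg]

lemma d_one : C.d 1 = 0 := by
  simpa using C.d_mul_of_even C.one_mem_grade 1

lemma d_pow_eq_zero {m : ℕ} {x : A} (hx : x ∈ C.grade (2 * m)) (hdx : C.d x = 0) (n : ℕ) :
    C.d (x ^ n) = 0 := by
  induction n with
  | zero => rw [pow_zero]; exact C.d_one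
  | succ n ih => rw [pow_succ', C.d_mul_of_even hx, hdx, ih, zero_mul, mul_zero, add_zero]

lemma d_hpow_succ (r : ℕ) :
    C.d (C.h ^ (r + 1)) = (((r : ℚ) + 1) * C.k) • (C.h ^ r * (C.b * C.g)) := by
  induction r with
  | zero => simpa using C.hdh
  | succ n ih =>
    have hh : C.h ∈ C.grade (2 * 2) := by simpa using C.hpow_mem_grade 1
    rw [pow_succ' C.h (n + 1), C.d_mul_of_even hh, C.hdh, ih, smul_mul_assoc, mul_smul_comm,
      ← ((C.commute_h _).pow_left (n + 1)).eq, ← mul_assoc C.h, ← pow_succ', ← add_smul]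
    push_cast
    ring_nf

lemma d_oddMono (u v w : Bool) : C.d (C.oddMono u v w) =
    cond u (C.a * C.a * C.oddMono false v w) 0
      + cond v (((-1 : ℚ) ^ cond u 1 0) • (C.b * C.b * C.oddMono u false w)) 0 := by
  have hbbe : C.e * (C.b * C.b) = C.b * C.b * C.e :=
    ((C.commute_b C.e).mul_left (C.commute_b C.e)).symm.eq
  cases u <;> cases v <;> cases w <;>
    simp only [oddMono, Bool.false_eq_true, if_true, if_false, one_mul, mul_one, cond]
  · simpa using C.d_one
  · simpa using C.hdg
  · simpa using C.hdf
  · simp [C.d_mul_of_odd C.f_mem_grade, C.hdf, C.hdg]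
  · simpa using C.hde
  · simp [C.d_mul_of_odd C.e_mem_grade, C.hde, C.hdg]
  · simp [C.d_mul_of_odd C.e_mem_grade, C.hde, C.hdf, hbbe, sub_eq_add_neg]
  · rw [C.d_mul_of_odd C.e_mem_grade, C.d_mul_of_odd C.f_mem_grade, C.hde, C.hdf, C.hdg]
    rw [mul_zero, sub_zero, ← mul_assoc C.e, hbbe, mul_assoc (C.b * C.b), pow_one, neg_one_smul,
      sub_eq_add_neg]

lemma g_mul_oddMono_true (u v : Bool) : C.g * C.oddMono u v true = 0 := by
  cases u <;> cases v <;> simp only [oddMono, Bool.false_eq_true, if_true, if_false, one_mul]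
  · exact C.g_mul_g
  · exact C.g_mul_fg
  · rw [← mul_assoc, C.g_mul_e, neg_mul, mul_assoc, C.g_mul_g, mul_zero, neg_zero]
  · rw [← mul_assoc, C.g_mul_e, neg_mul, mul_assoc, C.g_mul_fg, mul_zero, neg_zero]

lemma g_mul_oddMono_false (u v : Bool) :
    C.g * C.oddMono u v false = ((-1 : ℚ) ^ (cond u 1 0 + cond v 1 0)) • C.oddMono u v true := by
  cases u <;> cases v <;>
    simp only [oddMono, Bool.false_eq_true, if_true, if_false, one_mul, mul_one, cond]
  · simp
  · rw [C.g_mul_f]; simp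
  · rw [C.g_mul_e]; simp
  · rw [← mul_assoc, C.g_mul_e, neg_mul, mul_assoc, C.g_mul_f, mul_neg, neg_neg]
    norm_num

/-- The part of `d (mono p q r u v w)` coming from `d h = k b g`. -/
def dMonoH (p q : ℕ) : ℕ → Bool → Bool → Bool → A
  | 0, _, _, _ => 0
  | r + 1, u, v, w =>
      cond w 0 ((((r : ℚ) + 1) * C.k * (-1) ^ (cond u 1 0 + cond v 1 0)) •
        C.mono p (q + 1) r u v true)

@[simp] lemma dMonoH_zero (p q : ℕ) (u v w : Bool) : C.dMonoH p q 0 u v w = 0 := rfl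

@[simp] lemma dMonoH_true (p q r : ℕ) (u v : Bool) : C.dMonoH p q r u v true = 0 := by
  cases r <;> rfl

@[simp] lemma dMonoH_succ_false (p q r : ℕ) (u v : Bool) : C.dMonoH p q (r + 1) u v false =
    (((r : ℚ) + 1) * C.k * (-1) ^ (cond u 1 0 + cond v 1 0)) • C.mono p (q + 1) r u v true :=
  rfl

def dMono (p q r : ℕ) (u v w : Bool) : A :=
  cond u (C.mono (p + 2) q r false v w) 0
    + cond v (((-1 : ℚ) ^ cond u 1 0) • C.mono p (q + 2) r u false w) 0
    + C.dMonoH p q r u v w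

lemma d_mono_eq_mul (p q r : ℕ) (u v w : Bool) :
    C.d (C.mono p q r u v w) = C.a ^ p * (C.b ^ q *
      (C.d (C.h ^ r) * C.oddMono u v w + C.h ^ r * C.d (C.oddMono u v w))) := by
  have ha : C.a ∈ C.grade (2 * 1) := by simpa using C.apow_mem_grade 1
  have hb : C.b ∈ C.grade (2 * 1) := by simpa using C.bpow_mem_grade 1
  rw [mono, C.d_mul_of_even (C.apow_mem_grade p), C.d_mul_of_even (C.bpow_mem_grade q),
    C.d_mul_of_even (C.hpow_mem_grade r), C.d_pow_eq_zero ha C.hda,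
    C.d_pow_eq_zero hb C.hdb, zero_mul, zero_mul, zero_add, zero_add]

lemma mul_mono_mul_aa (p q r : ℕ) (x : A) :
    C.a ^ p * (C.b ^ q * (C.h ^ r * (C.a * C.a * x))) =
      C.a ^ (p + 2) * (C.b ^ q * (C.h ^ r * x)) := by
  rw [mul_assoc C.a C.a x, ((C.commute_a (C.h ^ r)).symm).left_comm,
    ((C.commute_a (C.b ^ q)).symm).left_comm, ((C.commute_a (C.h ^ r)).symm).left_comm,
    ((C.commute_a (C.b ^ q)).symm).left_comm, ← mul_assoc (C.a ^ p), ← mul_assoc (C.a ^ p * C.a),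
    ← pow_succ, ← pow_succ]

lemma mul_mono_mul_bb (p q r : ℕ) (x : A) :
    C.a ^ p * (C.b ^ q * (C.h ^ r * (C.b * C.b * x))) =
      C.a ^ p * (C.b ^ (q + 2) * (C.h ^ r * x)) := by
  rw [mul_assoc C.b C.b x, ((C.commute_b (C.h ^ r)).symm).left_comm,
    ((C.commute_b (C.h ^ r)).symm).left_comm, ← mul_assoc (C.b ^ q), ← mul_assoc (C.b ^ q * C.b),
    ← pow_succ, ← pow_succ]

lemma mul_mono_mul_b (p q r : ℕ) (x : A) :
    C.a ^ p * (C.b ^ q * (C.h ^ r * (C.b * x))) = C.a ^ p * (C.b ^ (q + 1) * (C.h ^ r * x)) := by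
  rw [((C.commute_b (C.h ^ r)).symm).left_comm, ← mul_assoc (C.b ^ q), ← pow_succ]

lemma d_mono (p q r : ℕ) (u v w : Bool) : C.d (C.mono p q r u v w) = C.dMono p q r u v w := by
  rw [C.d_mono_eq_mul, C.d_oddMono, dMono]
  cases r with
  | zero =>
    rw [show C.d (C.h ^ 0) = 0 by rw [pow_zero, C.d_one], zero_mul, zero_add]
    cases u <;> cases v <;>
      simp only [dMonoH, Bool.cond_true, Bool.cond_false, mul_add, mul_smul_comm,
        C.mul_mono_mul_aa, C.mul_mono_mul_bb, mono, mul_zero, add_zero, zero_add]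
  | succ r =>
    rw [C.d_hpow_succ r, smul_mul_assoc, mul_assoc (C.h ^ r), mul_assoc C.b]
    cases w with
    | true =>
      rw [C.g_mul_oddMono_true, mul_zero, mul_zero, smul_zero, zero_add]
      cases u <;> cases v <;>
        simp only [dMonoH, Bool.cond_true, Bool.cond_false, mul_add, C.mul_mono_mul_aa,
          C.mul_mono_mul_bb, mono, mul_zero, add_zero, zero_add, pow_zero, pow_one, one_smul,
          neg_smul, mul_neg]
    | false =>
      rw [C.g_mul_oddMono_false]
      cases u <;> cases v <;>
        simp only [dMonoH, Bool.cond_true, Bool.cond_false, mul_add, mul_smul_comm, smul_smul,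
          C.mul_mono_mul_aa, C.mul_mono_mul_bb, C.mul_mono_mul_b, mono, mul_zero, add_zero,
          zero_add, pow_zero, pow_one, one_smul, neg_smul, smul_neg, mul_neg] <;>
        module

def expEquiv : (ℕ × ℕ × ℕ) × (Bool × Bool × Bool) ≃ (Fin 3 → ℕ) × (Fin 3 → Bool) where
  toFun t := (![t.1.1, t.1.2.1, t.1.2.2], ![t.2.1, t.2.2.1, t.2.2.2])
  invFun m := ((m.1 0, m.1 1, m.1 2), (m.2 0, m.2 1, m.2 2))
  left_inv _ := rfl
  right_inv _ := by ext i <;> fin_cases i <;> rfl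

noncomputable def monoBasis : Module.Basis ((ℕ × ℕ × ℕ) × (Bool × Bool × Bool)) ℚ A :=
  (Module.Basis.mk C.hfree.li C.hfree.spanning.ge).reindex expEquiv.symm

lemma monoBasis_apply (p q r : ℕ) (u v w : Bool) :
    C.monoBasis ((p, q, r), (u, v, w)) = C.mono p q r u v w := by
  rw [monoBasis, Module.Basis.reindex_apply, Module.Basis.mk_apply]
  exact C.gcMon_eq_mono p q r u v w

/-- `Π₂ (bᵠ hʳ fᵛ gʷ)`: it fixes `1, b, g hʳ`, sends `b hʳ⁺¹` to `βᵣ₊₁` and kills the rest. -/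
def projBFGH : ℕ → ℕ → Bool → Bool → A
  | _, _, true, _ => 0
  | 0, 0, false, false => 1
  | 0, _ + 1, false, false => 0
  | 1, 0, false, false => C.mono 0 1 0 false false false
  | 1, r + 1, false, false =>
      C.mono 0 1 (r + 1) false false false - (((r : ℚ) + 1) * C.k) • C.mono 0 0 r false true true
  | _ + 2, _, false, false => 0
  | 0, r, false, true => C.mono 0 0 r false false true
  | _ + 1, _, false, true => 0

def projMono : ℕ → ℕ → ℕ → Bool → Bool → Bool → A
  | _, _, _, true, _, _ => 0
  | 0, q, r, false, v, w => C.projBFGH q r v w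
  | 1, q, r, false, v, w => C.a * C.projBFGH q r v w
  | _ + 2, _, _, false, _, _ => 0

def htpyBFGH : ℕ → ℕ → Bool → Bool → A
  | _, _, true, _ => 0
  | q + 2, r, false, false => C.mono 0 q r false true false
  | 1, r, false, true => (C.k * ((r : ℚ) + 1))⁻¹ • C.mono 0 0 (r + 1) false false false
  | q + 2, r, false, true => C.mono 0 q r false true true
  | _, _, false, _ => 0

/-- `S = S₁ ⊗ id + Π₁ ⊗ S₂` for the contractions `(Π₁, S₁)` of `Λ(a, e)` and `(Π₂, S₂)` of
`Λ(b, f, g, h)`. -/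
def htpyMono : ℕ → ℕ → ℕ → Bool → Bool → Bool → A
  | _, _, _, true, _, _ => 0
  | p + 2, q, r, false, v, w => C.mono p q r true v w
  | 0, q, r, false, v, w => C.htpyBFGH q r v w
  | 1, q, r, false, v, w => C.a * C.htpyBFGH q r v w

noncomputable def proj : A →ₗ[ℚ] A :=
  C.monoBasis.constr ℚ fun t => C.projMono t.1.1 t.1.2.1 t.1.2.2 t.2.1 t.2.2.1 t.2.2.2

noncomputable def htpy : A →ₗ[ℚ] A :=
  C.monoBasis.constr ℚ fun t => C.htpyMono t.1.1 t.1.2.1 t.1.2.2 t.2.1 t.2.2.1 t.2.2.2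

@[simp] lemma proj_mono (p q r : ℕ) (u v w : Bool) :
    C.proj (C.mono p q r u v w) = C.projMono p q r u v w := by
  rw [← C.monoBasis_apply, proj, Module.Basis.constr_basis]

@[simp] lemma htpy_mono (p q r : ℕ) (u v w : Bool) :
    C.htpy (C.mono p q r u v w) = C.htpyMono p q r u v w := by
  rw [← C.monoBasis_apply, htpy, Module.Basis.constr_basis]

lemma proj_comp_d : C.proj ∘ₗ C.d = 0 := by
  refine C.monoBasis.ext fun ⟨⟨p, q, r⟩, u, v, w⟩ => ?_
  rw [LinearMap.comp_apply, C.monoBasis_apply, C.d_mono, dMono, LinearMap.zero_apply]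
  rcases r with _ | r <;> rcases p with _ | _ | p <;> cases u <;> cases v <;> cases w <;>
    simp [dMonoH, projMono, projBFGH]

lemma a_mul_mono (p q r : ℕ) (u v w : Bool) :
    C.a * C.mono p q r u v w = C.mono (p + 1) q r u v w := by
  rw [mono, mono, ← mul_assoc, ← pow_succ']

lemma mono_sub_projMono (p q r : ℕ) (u v w : Bool) :
    C.mono p q r u v w - C.projMono p q r u v w
      = C.d (C.htpyMono p q r u v w) + C.htpy (C.dMono p q r u v w) := by
  have hr : ∀ n : ℕ, (n : ℚ) + 1 ≠ 0 := fun n => by positivity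
  have hk := C.hk
  rcases p with _ | _ | p <;> cases u <;> cases v <;> cases w <;>
    rcases q with _ | _ | q <;> rcases r with _ | r <;>
    simp [dMono, dMonoH, projMono, projBFGH, htpyMono, htpyBFGH, C.d_mono, C.a_mul_mono,
      mul_sub] <;>
    first
    | module
    | (rw [smul_smul, eq_comm]
       convert one_smul ℚ _ using 2
       field_simp)
    | simp [mono, oddMono]

lemma sub_proj_eq (x : A) : x - C.proj x = C.d (C.htpy x) + C.htpy (C.d x) := by
  have key : LinearMap.id - C.proj = C.d ∘ₗ C.htpy + C.htpy ∘ₗ C.d :=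
    C.monoBasis.ext fun ⟨⟨p, q, r⟩, u, v, w⟩ => by
      simp only [LinearMap.sub_apply, LinearMap.id_apply, LinearMap.add_apply,
        LinearMap.comp_apply, C.monoBasis_apply, C.proj_mono, C.htpy_mono, C.d_mono]
      exact C.mono_sub_projMono p q r u v w
  simpa using LinearMap.congr_fun key x

abbrev mElt : idxM → A := mEltA C.b C.f C.g C.h C.k

abbrev cElt : Bool × Option idxM → A := cEltA C.a C.b C.f C.g C.h C.k

def cEltMono : Bool × Option idxM → A
  | (ε, none) => C.mono (cond ε 1 0) 0 0 false false false
  | (ε, some (.inl _)) => C.mono (cond ε 1 0) 1 0 false false false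
  | (ε, some (.inr (.inl n))) => C.mono (cond ε 1 0) 0 n false false true
  | (ε, some (.inr (.inr m))) => C.mono (cond ε 1 0) 1 (m + 1) false false false
      - (((m : ℚ) + 1) * C.k) • C.mono (cond ε 1 0) 0 m false true true

lemma g_mul_hpow (n : ℕ) : C.g * C.h ^ n = C.h ^ n * C.g :=
  ((C.commute_h C.g).pow_left n).eq.symm

lemma f_mul_hpow_mul_g (n : ℕ) : C.f * (C.h ^ n * C.g) = C.h ^ n * (C.f * C.g) :=
  ((C.commute_h C.f).pow_left n).symm.left_comm _

lemma cElt_eq_cEltMono (i : Bool × Option idxM) : C.cElt i = C.cEltMono i := by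
  rcases i with ⟨ε, _ | _ | n | m⟩ <;> cases ε <;>
    simp [cEltA, mEltA, cEltMono, mono, oddMono, C.g_mul_hpow, C.f_mul_hpow_mul_g, mul_sub]

lemma d_cElt (i : Bool × Option idxM) : C.d (C.cElt i) = 0 := by
  rw [C.cElt_eq_cEltMono]
  rcases i with ⟨ε, _ | _ | n | m⟩ <;> cases ε <;>
    simp only [cEltMono, C.d_mono, dMono, C.dMonoH_zero, C.dMonoH_true, C.dMonoH_succ_false,
      map_sub, map_smul, Bool.cond_true, Bool.cond_false, Nat.reduceAdd, add_zero, zero_add,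
      pow_zero, one_smul] <;>
    module

lemma proj_cElt (i : Bool × Option idxM) : C.proj (C.cElt i) = C.cElt i := by
  rw [C.cElt_eq_cEltMono]
  rcases i with ⟨ε, _ | _ | n | m⟩ <;> cases ε <;>
    simp [cEltMono, projMono, projBFGH, mul_sub] <;>
    simp [mono, oddMono]

lemma cElt_mem_grade (i : Bool × Option idxM) : C.cElt i ∈ C.grade (degCA i) := by
  rw [C.cElt_eq_cEltMono]
  rcases i with ⟨ε, _ | _ | n | m⟩ <;> cases ε <;>
    simp only [cEltMono, Bool.cond_true, Bool.cond_false]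
  all_goals first
    | exact C.mono_mem_grade (by simp [degCA, degMA] <;> omega)
    | exact sub_mem (C.mono_mem_grade (by simp [degCA, degMA]; omega))
        (Submodule.smul_mem _ _ (C.mono_mem_grade (by simp [degCA, degMA]; omega)))

/-- The monomial of `cEltMono i` that occurs in no other `cEltMono j`. -/
def leadIdx : Bool × Option idxM → (ℕ × ℕ × ℕ) × (Bool × Bool × Bool)
  | (ε, none) => ((cond ε 1 0, 0, 0), (false, false, false))
  | (ε, some (.inl _)) => ((cond ε 1 0, 1, 0), (false, false, false))
  | (ε, some (.inr (.inl n))) => ((cond ε 1 0, 0, n), (false, false, true))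
  | (ε, some (.inr (.inr m))) => ((cond ε 1 0, 1, m + 1), (false, false, false))

@[simp] lemma monoBasis_repr_mono (p q r : ℕ) (u v w : Bool) :
    C.monoBasis.repr (C.mono p q r u v w) = Finsupp.single ((p, q, r), (u, v, w)) 1 := by
  rw [← C.monoBasis_apply]; exact C.monoBasis.repr_self _

lemma coord_leadIdx_cElt (i j : Bool × Option idxM) :
    C.monoBasis.coord (leadIdx j) (C.cElt i) = if j = i then 1 else 0 := by
  rw [C.cElt_eq_cEltMono]
  rcases i with ⟨ε, _ | _ | n | m⟩ <;> rcases j with ⟨ε', _ | _ | n' | m'⟩ <;>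
    cases ε <;> cases ε' <;>
    simp [cEltMono, leadIdx, Module.Basis.coord_apply, Finsupp.single_apply] <;>
    simp [eq_comm]

lemma linearIndependent_cElt : LinearIndependent ℚ C.cElt :=
  .of_pairwise_dual_eq_zero_one _ (fun j => C.monoBasis.coord (leadIdx j))
    (fun j i hji => by simp [C.coord_leadIdx_cElt, hji])
    (fun i => by simp [C.coord_leadIdx_cElt])

lemma linearIndependent_cohomologyClass_cElt :
    LinearIndependent ℚ ((LinearMap.range C.d).mkQ ∘ C.cElt) := by
  refine .mkQ_of_comp (P := C.proj) ?_ ?_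
  · rintro _ ⟨y, rfl⟩
    exact LinearMap.congr_fun C.proj_comp_d y
  · simpa only [Function.comp_def, C.proj_cElt] using C.linearIndependent_cElt

lemma projMono_mem_span (p q r : ℕ) (u v w : Bool) :
    C.projMono p q r u v w ∈ Submodule.span ℚ (Set.range C.cElt) := by
  have hmem (i) : C.cEltMono i ∈ Submodule.span ℚ (Set.range C.cElt) :=
    C.cElt_eq_cEltMono i ▸ Submodule.subset_span ⟨i, rfl⟩
  rcases p with _ | _ | p <;> cases u <;> cases v <;> cases w <;>
    rcases q with _ | _ | q <;> rcases r with _ | r <;>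
    simp only [projMono, projBFGH, C.a_mul_mono, mul_one, mul_zero, mul_sub, mul_smul_comm] <;>
    first
    | exact zero_mem _
    | exact hmem (false, some (.inl ()))
    | exact hmem (true, some (.inl ()))
    | exact hmem (false, some (.inr (.inl _)))
    | exact hmem (true, some (.inr (.inl _)))
    | exact hmem (false, some (.inr (.inr _)))
    | exact hmem (true, some (.inr (.inr _)))
    | simpa [cEltMono, mono, oddMono] using hmem (false, none)
    | simpa [cEltMono, mono, oddMono] using hmem (true, none)

lemma range_proj_le_span : LinearMap.range C.proj ≤ Submodule.span ℚ (Set.range C.cElt) := by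
  rw [proj, Module.Basis.constr_range, Submodule.span_le]
  rintro _ ⟨⟨⟨p, q, r⟩, u, v, w⟩, rfl⟩
  exact C.projMono_mem_span p q r u v w

lemma ker_d_le : LinearMap.ker C.d ≤ Submodule.span ℚ (Set.range C.cElt) ⊔ LinearMap.range C.d := by
  intro x hx
  have hx' : x = C.proj x + C.d (C.htpy x) := by
    rw [← sub_eq_iff_eq_add', C.sub_proj_eq, LinearMap.mem_ker.mp hx, map_zero, add_zero]
  rw [hx']
  exact Submodule.add_mem_sup (C.range_proj_le_span ⟨x, rfl⟩) ⟨C.htpy x, rfl⟩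

lemma hpow_mul_mul_hpow_mul (n m : ℕ) (x y : A) :
    C.h ^ n * x * (C.h ^ m * y) = C.h ^ (n + m) * (x * y) := by
  rw [mul_assoc, ((C.commute_h x).pow_left m).symm.left_comm, ← mul_assoc, ← pow_add]

lemma mElt_inl (u : Unit) : C.mElt (.inl u) = C.h ^ 0 * C.b := by simp [mEltA]

lemma mElt_inr_inl (n : ℕ) : C.mElt (.inr (.inl n)) = C.h ^ n * C.g := C.g_mul_hpow n

lemma mElt_inr_inr (m : ℕ) : C.mElt (.inr (.inr m)) =
    C.h ^ (m + 1) * C.b - (((m : ℚ) + 1) * C.k) • (C.h ^ m * (C.f * C.g)) := by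
  rw [mElt, mEltA, C.g_mul_hpow, C.f_mul_hpow_mul_g, ((C.commute_h C.b).pow_left _).eq]

lemma hpow_mul_bg_mem_range (r : ℕ) : C.h ^ r * (C.b * C.g) ∈ LinearMap.range C.d := by
  refine ⟨(((r : ℚ) + 1) * C.k)⁻¹ • C.h ^ (r + 1), ?_⟩
  have : ((r : ℚ) + 1) * C.k ≠ 0 := mul_ne_zero (by positivity) C.hk
  rw [map_smul, C.d_hpow_succ, smul_smul, inv_mul_cancel₀ this, one_smul]

lemma d_f_mul_hpow_succ (r : ℕ) : C.d (C.f * C.h ^ (r + 1)) =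
    C.h ^ (r + 1) * (C.b * C.b) - (((r : ℚ) + 1) * C.k) • (C.h ^ r * (C.b * (C.f * C.g))) := by
  rw [C.d_mul_of_odd C.f_mem_grade, C.hdf, C.d_hpow_succ, mul_smul_comm,
    ← ((C.commute_h _).pow_left _).eq, ← ((C.commute_h C.f).pow_left r).left_comm, ← mul_assoc C.f,
    ← (C.commute_b C.f).eq, mul_assoc C.b]

lemma mElt_mul_mElt_mem_range (i j : idxM) : C.mElt i * C.mElt j ∈ LinearMap.range C.d := by
  have hβ (r : ℕ) : C.h ^ (r + 1) * (C.b * C.b)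
      - (((r : ℚ) + 1) * C.k) • (C.h ^ r * (C.b * (C.f * C.g))) ∈ LinearMap.range C.d :=
    ⟨_, C.d_f_mul_hpow_succ r⟩
  rcases i with _ | n | s <;> rcases j with _ | m | t <;>
    simp only [mElt_inl, mElt_inr_inl, mElt_inr_inr, sub_mul, mul_sub, smul_mul_assoc,
      mul_smul_comm, hpow_mul_mul_hpow_mul, C.g_mul_b, C.fg_mul_b, C.g_mul_g, C.g_mul_fg,
      C.fg_mul_g, C.fg_mul_fg, mul_zero, smul_zero, sub_zero, zero_add, add_zero]
  · exact ⟨C.f, by rw [C.hdf, pow_zero, one_mul]⟩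
  · exact C.hpow_mul_bg_mem_range _
  · exact hβ t
  · exact C.hpow_mul_bg_mem_range _
  · exact zero_mem _
  · exact C.hpow_mul_bg_mem_range _
  · exact hβ s
  · exact C.hpow_mul_bg_mem_range _
  · convert hβ (s + t + 1) using 1
    rw [show s + 1 + (t + 1) = s + t + 1 + 1 by ring, show s + 1 + t = s + t + 1 by ring,
      show s + (t + 1) = s + t + 1 by ring]
    push_cast
    module

end LambdaA

theorem statement2_general {A : Type*} [Ring A] [Algebra ℚ A]
    (a b e f g h : A) (k : ℚ) (hk : k ≠ 0) (d : A →ₗ[ℚ] A)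
    (hfree : IsFreeGCA ![a, b, h] ![e, f, g])
    (hleib : ∀ (m : ℕ) (x y : A), x ∈ gradeLA a b e f g h m →
      d (x * y) = d x * y + ((-1 : ℚ) ^ m) • (x * d y))
    (hda : d a = 0) (hdb : d b = 0) (hdg : d g = 0)
    (hde : d e = a * a) (hdf : d f = b * b) (hdh : d h = k • (b * g)) :
    -- the listed elements are cocycles …
    (∀ i, d (cEltA a b f g h k i) = 0) ∧
    -- … homogeneous of the indicated degrees,
    (∀ i, cEltA a b f g h k i ∈ gradeLA a b e f g h (degCA i)) ∧
    -- their classes are linearly independent in the cohomology,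
    LinearIndependent ℚ
      (fun i => (Submodule.Quotient.mk (cEltA a b f g h k i) : A ⧸ LinearMap.range d)) ∧
    -- and they span the cohomology (so the classes of `a`, `b`, `g·hⁿ`, `βₙ` generate
    -- `H(Λ_A, d)` as a ℚ-algebra);
    (LinearMap.ker d ≤ Submodule.span ℚ (Set.range (cEltA a b f g h k)) ⊔ LinearMap.range d) ∧
    -- the relations `[a]² = 0`, `[b]² = 0`, `[b][g] = 0` hold in cohomology,
    a * a ∈ LinearMap.range d ∧
    b * b ∈ LinearMap.range d ∧
    b * g ∈ LinearMap.range d ∧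
    -- and `ℚ ⊕ M` is square-zero: the product of any two basis elements of `M`
    -- is a coboundary.
    (∀ i j : idxM, mEltA b f g h k i * mEltA b f g h k j ∈ LinearMap.range d) := by
  let C : LambdaA A := ⟨a, b, e, f, g, h, k, hk, d, hfree, hleib, hda, hdb, hdg, hde, hdf, hdh⟩
  exact ⟨C.d_cElt, C.cElt_mem_grade, C.linearIndependent_cohomologyClass_cElt, C.ker_d_le,
    ⟨e, hde⟩, ⟨f, hdf⟩, by simpa using C.hpow_mul_bg_mem_range 0, C.mElt_mul_mElt_mem_range⟩

theorem statement2 {A : Type*} [Ring A] [Algebra ℚ A]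
    (a b e f g h : A) (k : ℚ) (hk : k ≠ 0) (d : A →ₗ[ℚ] A)
    (hfree : IsFreeGCA ![a, b, h] ![e, f, g])
    (hdeg : ∀ (m : ℕ) (x : A), x ∈ gradeLA a b e f g h m → d x ∈ gradeLA a b e f g h (m + 1))
    (hleib : ∀ (m : ℕ) (x y : A), x ∈ gradeLA a b e f g h m →
      d (x * y) = d x * y + ((-1 : ℚ) ^ m) • (x * d y))
    (hda : d a = 0) (hdb : d b = 0) (hdg : d g = 0)
    (hde : d e = a * a) (hdf : d f = b * b) (hdh : d h = k • (b * g)) :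
    -- the listed elements are cocycles …
    (∀ i, d (cEltA a b f g h k i) = 0) ∧
    -- … homogeneous of the indicated degrees,
    (∀ i, cEltA a b f g h k i ∈ gradeLA a b e f g h (degCA i)) ∧
    -- their classes are linearly independent in the cohomology,
    LinearIndependent ℚ
      (fun i => (Submodule.Quotient.mk (cEltA a b f g h k i) : A ⧸ LinearMap.range d)) ∧
    -- and they span the cohomology (so the classes of `a`, `b`, `g·hⁿ`, `βₙ` generate
    -- `H(Λ_A, d)` as a ℚ-algebra);
    (LinearMap.ker d ≤ Submodule.span ℚ (Set.range (cEltA a b f g h k)) ⊔ LinearMap.range d) ∧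
    -- the relations `[a]² = 0`, `[b]² = 0`, `[b][g] = 0` hold in cohomology,
    a * a ∈ LinearMap.range d ∧
    b * b ∈ LinearMap.range d ∧
    b * g ∈ LinearMap.range d ∧
    -- and `ℚ ⊕ M` is square-zero: the product of any two basis elements of `M`
    -- is a coboundary.
    (∀ i j : idxM, mEltA b f g h k i * mEltA b f g h k j ∈ LinearMap.range d) :=
  statement2_general a b e f g h k hk d hfree hleib hda hdb hdg hde hdf hdh
end

section
/- Let k be a nonzero rational number. For every integer n ≥ 1, the element s_n = hⁿ·D + n·k·e·g·h^{n−1} of Λ_B (equivalently s_n = h^{n−1}·(h·D + n·k·e·g)) satisfies d₀(s_n) = 0, i.e. s_n is a d₀-cocycle of degree 4n+2. -/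
/-- The grading of `Λ_B`: `D` has degree 2, `e, f, g, v` degree 3 and `h` degree 4. -/
def gradeLB {A : Type*} [Ring A] [Algebra ℚ A] (D e f g v h : A) : ℕ → Submodule ℚ A :=
  gcGrade ![D, h] ![e, f, g, v] ![2, 4] ![3, 3, 3, 3]

private lemma gcMon_mem {A : Type*} [Ring A] [Algebra ℚ A] {nE nO : ℕ}
    (ev : Fin nE → A) (od : Fin nO → A) (dE : Fin nE → ℕ) (dO : Fin nO → ℕ)
    (x : (Fin nE → ℕ) × (Fin nO → Bool)) :
    gcMon ev od x ∈ gcGrade ev od dE dO (gcDeg dE dO x) :=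
  Submodule.subset_span ⟨x, rfl, rfl⟩

private lemma gcMon_eval {A : Type*} [Ring A] (D e f g v h : A) (a b : ℕ) (q : Fin 4 → Bool) :
    gcMon ![D,h] ![e,f,g,v] (![a,b], q)
      = (D^a * h^b) * ((if q 0 then e else 1) * ((if q 1 then f else 1) *
          ((if q 2 then g else 1) * (if q 3 then v else 1)))) := by
  simp [gcMon, List.ofFn_succ, mul_assoc, show (Fin.succ 2 : Fin 4) = 3 from rfl]

private lemma gcDeg_eval (a b : ℕ) (q : Fin 4 → Bool) :
    gcDeg ![2,4] ![3,3,3,3] (![a,b], q)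
      = 2*a + 4*b + ((if q 0 then 3 else 0) + ((if q 1 then 3 else 0) +
          ((if q 2 then 3 else 0) + (if q 3 then 3 else 0)))) := by
  simp [gcDeg, Fin.sum_univ_two, Fin.sum_univ_four]
  ring

theorem statement3 {A : Type*} [Ring A] [Algebra ℚ A]
    (D e f g v h : A) (k : ℚ) (hk : k ≠ 0) (d : A →ₗ[ℚ] A)
    (hfree : IsFreeGCA ![D, h] ![e, f, g, v])
    (hdeg : ∀ (m : ℕ) (x : A), x ∈ gradeLB D e f g v h m → d x ∈ gradeLB D e f g v h (m + 1))
    (hleib : ∀ (m : ℕ) (x y : A), x ∈ gradeLB D e f g v h m →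
      d (x * y) = d x * y + ((-1 : ℚ) ^ m) • (x * d y))
    (hdD : d D = 0) (hdf : d f = 0) (hdg : d g = 0) (hdv : d v = 0)
    (hde : d e = D * D) (hdh : d h = (-k) • (D * g)) :
    ∀ n : ℕ, 1 ≤ n →
      d (h ^ n * D + ((n : ℚ) * k) • (e * (g * h ^ (n - 1)))) = 0 ∧
      h ^ n * D + ((n : ℚ) * k) • (e * (g * h ^ (n - 1)))
        ∈ gradeLB D e f g v h (4 * n + 2) ∧
      h ^ n * D + ((n : ℚ) * k) • (e * (g * h ^ (n - 1)))
        = h ^ (n - 1) * (h * D + ((n : ℚ) * k) • (e * g)) := by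
  -- basic commutation facts
  have hD : ∀ x : A, D * x = x * D := fun x => (by simpa using hfree.central 0 x : Commute D x).eq
  have hh : ∀ x : A, h * x = x * h := fun x => (by simpa using hfree.central 1 x : Commute h x).eq
  have hhp : ∀ (m : ℕ) (x : A), h ^ m * x = x * h ^ m := fun m x =>
    ((by simpa using hfree.central 1 x : Commute h x).pow_left m).eq
  have hgg : g * g = 0 := by
    have h2 : g * g = -(g * g) := by simpa using hfree.anticomm 2 2
    have h3 : g * g + g * g = 0 := by nth_rewrite 1 [h2]; exact neg_add_cancel _
    have h4 : (2 : ℚ) • (g * g) = 0 := by rw [two_smul]; exact h3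
    rcases smul_eq_zero.mp h4 with h5 | h5
    · norm_num at h5
    · exact h5
  -- membership of monomials
  have memMon : ∀ (a b : ℕ) (q : Fin 4 → Bool),
      (D^a * h^b) * ((if q 0 then e else 1) * ((if q 1 then f else 1) *
          ((if q 2 then g else 1) * (if q 3 then v else 1))))
        ∈ gradeLB D e f g v h (2*a + 4*b + ((if q 0 then 3 else 0) + ((if q 1 then 3 else 0) +
          ((if q 2 then 3 else 0) + (if q 3 then 3 else 0))))) := by
    intro a b q
    have := gcMon_mem ![D,h] ![e,f,g,v] ![2,4] ![3,3,3,3] (![a,b], q)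
    rwa [gcMon_eval, gcDeg_eval] at this
  have mem1 : (1 : A) ∈ gradeLB D e f g v h 0 := by
    have := memMon 0 0 (fun _ => false); simpa using this
  have memh : h ∈ gradeLB D e f g v h 4 := by
    have := memMon 0 1 (fun _ => false); simpa using this
  have memg : g ∈ gradeLB D e f g v h 3 := by
    have := memMon 0 0 ![false, false, true, false]; simpa using this
  have meme : e ∈ gradeLB D e f g v h 3 := by
    have := memMon 0 0 ![true, false, false, false]; simpa using this
  have memhp : ∀ m : ℕ, h ^ m ∈ gradeLB D e f g v h (4 * m) := by
    intro m
    have := memMon 0 m (fun _ => false)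
    simpa [Nat.mul_comm] using this
  -- d 1 = 0
  have d1 : d (1 : A) = 0 := by
    have h0 := hleib 0 1 1 mem1
    simp only [one_mul, mul_one, pow_zero, one_smul] at h0
    have h1 : d (1:A) + d 1 = d 1 + 0 := by rw [add_zero]; exact h0.symm
    exact add_left_cancel h1
  -- d (h^(m+1))
  have dhp : ∀ m : ℕ, d (h ^ (m+1)) = (-(((m:ℚ)+1) * k)) • (D * (g * h ^ m)) := by
    intro m
    induction m with
    | zero => simpa using hdh
    | succ m ih =>
      rw [pow_succ' h (m+1), hleib 4 h (h ^ (m+1)) memh, hdh, ih]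
      have e1 : (-k) • (D * g) * h ^ (m+1) = (-k) • (D * (g * h ^ (m+1))) := by
        rw [smul_mul_assoc, mul_assoc]
      have e2 : h * ((-(((m:ℚ)+1) * k)) • (D * (g * h ^ m)))
          = (-(((m:ℚ)+1) * k)) • (D * (g * h ^ (m+1))) := by
        rw [mul_smul_comm, hh (D * (g * h ^ m)), mul_assoc, mul_assoc, ← pow_succ]
      rw [e1, e2]
      push_cast
      module
  -- d (g * h^m) = 0
  have dgh : ∀ m : ℕ, d (g * h ^ m) = 0 := by
    intro m
    cases m with
    | zero => simpa using hdg
    | succ m =>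
      rw [hleib 3 g (h ^ (m+1)) memg, hdg, dhp m]
      have hz : g * ((-(((m:ℚ)+1) * k)) • (D * (g * h ^ m))) = 0 := by
        rw [mul_smul_comm, ← mul_assoc, ← hD g, mul_assoc, ← mul_assoc g g, hgg]
        simp
      rw [hz]
      simp
  -- d (e * (g * h^m))
  have degh : ∀ m : ℕ, d (e * (g * h ^ m)) = D * (D * (g * h ^ m)) := by
    intro m
    rw [hleib 3 e (g * h ^ m) meme, hde, dgh m]
    simp [mul_assoc]
  -- main
  intro n hn
  obtain ⟨m, rfl⟩ : ∃ m, n = m + 1 := ⟨n - 1, (Nat.succ_pred_eq_of_pos hn).symm⟩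
  simp only [Nat.add_sub_cancel]
  have dhD : d (h ^ (m+1) * D) = (-(((m:ℚ)+1) * k)) • (D * (D * (g * h ^ m))) := by
    rw [hleib (4 * (m+1)) (h ^ (m+1)) D (memhp (m+1)), hdD, dhp m]
    have hsgn : ((-1 : ℚ)) ^ (4 * (m+1)) = 1 := by
      rw [pow_mul]; norm_num
    rw [hsgn]
    rw [smul_mul_assoc, mul_assoc, hD (g * h ^ m)]
    simp [mul_assoc]
  have key : d (h ^ (m+1) * D + (((m:ℚ)+1) * k) • (e * (g * h ^ m))) = 0 := by
    rw [map_add, map_smul, dhD, degh m]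
    module
  refine ⟨by push_cast; simpa using key, ?_, ?_⟩
  · -- membership
    have m1 : h ^ (m+1) * D ∈ gradeLB D e f g v h (4 * (m+1) + 2) := by
      have hm := memMon 1 (m+1) (fun _ => false)
      simp only [if_neg (by simp : ¬(false = true)), pow_one, mul_one, add_zero] at hm
      rw [hhp (m+1) D]
      convert hm using 2
      ring
    have m2 : e * (g * h ^ m) ∈ gradeLB D e f g v h (4 * (m+1) + 2) := by
      have hm := memMon 0 m ![true, false, true, false]
      simp only [show (![true,false,true,false] : Fin 4 → Bool) 0 = true from rfl,
        show (![true,false,true,false] : Fin 4 → Bool) 1 = false from rfl,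
        show (![true,false,true,false] : Fin 4 → Bool) 2 = true from rfl,
        show (![true,false,true,false] : Fin 4 → Bool) 3 = false from rfl,
        Bool.false_eq_true, if_true, if_false, pow_zero, one_mul, mul_one, add_zero] at hm
      have heq : e * (g * h ^ m) = h ^ m * (e * g) := by
        rw [hhp m (e * g), mul_assoc]
      rw [heq]
      convert hm using 2
      omega
    exact Submodule.add_mem _ m1 (Submodule.smul_mem _ _ m2)
  · -- factorization
    conv_rhs => rw [mul_add, ← mul_assoc, ← pow_succ, mul_smul_comm, hhp m (e * g), mul_assoc]
end

section
/- Let k be a nonzero rational number. The cohomology of (Λ_B, d₀) satisfies: dim_ℚ H⁰(Λ_B,d₀) = 1, H¹(Λ_B,d₀) = 0, dim_ℚ H²(Λ_B,d₀) = 1 (spanned by the class of D), dim_ℚ H³(Λ_B,d₀) = 3 (spanned by the classes of f, g and v), and H⁴(Λ_B,d₀) = 0. -/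
/-- Degree-`m` cohomology of `(Λ_B, d₀)`: cocycles of degree `m` modulo coboundaries. -/
abbrev HcohLB {A : Type*} [Ring A] [Algebra ℚ A] (D e f g v h : A)
    (d : A →ₗ[ℚ] A) (m : ℕ) :=
  ↥(LinearMap.ker d ⊓ gradeLB D e f g v h m) ⧸
    (Submodule.comap (LinearMap.ker d ⊓ gradeLB D e f g v h m).subtype (LinearMap.range d))

/-!
In degrees at most 4 the monomials of `Λ_B` are `1`; `D`; `e, f, g, v`; `D², h`, and `d₀`
kills all of them except `e ↦ D²` and `h ↦ -k D g`. Since `d₀` raises the degree by one and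
the monomials form a basis, a coboundary of degree `m + 1` is the coboundary of an element of
degree `m`. Degree 1 is zero and degree 2 is spanned by the cocycle `D`, so there are no
nonzero coboundaries in degrees `≤ 3`, and the cohomology there is the space of cocycles:
`ℚ 1`, `0`, `ℚ D`, `ℚ f ⊕ ℚ g ⊕ ℚ v`. In degree 4 a cocycle `a D² + c h` has `c k D g = 0`,
hence `c = 0` and it is the coboundary `d₀(a e)`.
-/

open Submodule

section DegreeSpan

variable (R : Type*) {M ι : Type*} [CommRing R] [AddCommGroup M] [Module R M]

def degreeSpan (b : ι → M) (deg : ι → ℕ) (m : ℕ) : Submodule R M :=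
  span R (b '' {i | deg i = m})

variable {R} {b : ι → M} {deg : ι → ℕ} {d : M →ₗ[R] M}

theorem degreeSpan_sup_span_deg_ne (m : ℕ) :
    degreeSpan R b deg m ⊔ span R (b '' {i | deg i ≠ m}) = span R (Set.range b) := by
  rw [degreeSpan, ← span_union, ← Set.image_union, ← Set.image_univ]
  congr 2
  exact Set.eq_univ_of_forall fun i => em (deg i = m)

theorem disjoint_degreeSpan_span_deg_ne (hli : LinearIndependent R b) (m : ℕ) :
    Disjoint (degreeSpan R b deg m) (span R (b '' {i | deg i ≠ m})) :=
  hli.disjoint_span_image (Set.disjoint_left.mpr fun _ hi hi' => hi' hi)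

theorem map_span_image_le_span_deg_ne
    (hd : ∀ m, ∀ x ∈ degreeSpan R b deg m, d x ∈ degreeSpan R b deg (m + 1))
    {S : Set ι} {n : ℕ} (hS : ∀ i ∈ S, deg i + 1 ≠ n) :
    (span R (b '' S)).map d ≤ span R (b '' {i | deg i ≠ n}) := by
  rw [map_span_le]
  rintro _ ⟨i, hi, rfl⟩
  refine span_mono ?_ (hd _ _ (subset_span ⟨i, rfl, rfl⟩))
  rintro _ ⟨j, hj, rfl⟩
  exact ⟨j, fun hjn => hS i hi (hj ▸ hjn), rfl⟩

/-- Splitting `x` into its degree-`m` part `y` and the rest, `d` sends the rest outside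
degree `m + 1`; so if `d x` has degree `m + 1`, it equals `d y`. -/
theorem exists_mem_degreeSpan_map_eq (hli : LinearIndependent R b)
    (hsp : span R (Set.range b) = ⊤)
    (hd : ∀ m, ∀ x ∈ degreeSpan R b deg m, d x ∈ degreeSpan R b deg (m + 1))
    {m : ℕ} {x : M} (hx : d x ∈ degreeSpan R b deg (m + 1)) :
    ∃ y ∈ degreeSpan R b deg m, d y = d x := by
  have hx' : x ∈ degreeSpan R b deg m ⊔ span R (b '' {i | deg i ≠ m}) := by
    rw [degreeSpan_sup_span_deg_ne, hsp]; exact mem_top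
  obtain ⟨y, hy, z, hz, rfl⟩ := mem_sup.mp hx'
  have hdz_ne : d z ∈ span R (b '' {i | deg i ≠ m + 1}) :=
    map_span_image_le_span_deg_ne hd (fun i hi => by simpa using hi) (mem_map_of_mem hz)
  have hdz_eq : d z ∈ degreeSpan R b deg (m + 1) := by
    simpa using sub_mem hx (hd m y hy)
  have hdz : d z = 0 :=
    disjoint_def.mp (disjoint_degreeSpan_span_deg_ne hli _) _ hdz_eq hdz_ne
  exact ⟨y, hy, by rw [map_add, hdz, add_zero]⟩

theorem disjoint_degreeSpan_zero_range (hli : LinearIndependent R b)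
    (hsp : span R (Set.range b) = ⊤)
    (hd : ∀ m, ∀ x ∈ degreeSpan R b deg m, d x ∈ degreeSpan R b deg (m + 1)) :
    Disjoint (degreeSpan R b deg 0) (LinearMap.range d) := by
  rw [disjoint_def]
  rintro _ hx ⟨y, rfl⟩
  have hy : y ∈ span R (b '' Set.univ) := by rw [Set.image_univ, hsp]; exact mem_top
  exact disjoint_def.mp (disjoint_degreeSpan_span_deg_ne hli 0) _ hx
    (map_span_image_le_span_deg_ne hd (fun i _ => (deg i).succ_ne_zero) (mem_map_of_mem hy))

theorem disjoint_degreeSpan_succ_range (hli : LinearIndependent R b)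
    (hsp : span R (Set.range b) = ⊤)
    (hd : ∀ m, ∀ x ∈ degreeSpan R b deg m, d x ∈ degreeSpan R b deg (m + 1))
    {m : ℕ} (hker : degreeSpan R b deg m ≤ LinearMap.ker d) :
    Disjoint (degreeSpan R b deg (m + 1)) (LinearMap.range d) := by
  rw [disjoint_def]
  rintro _ hx ⟨y, rfl⟩
  obtain ⟨z, hz, hzy⟩ := exists_mem_degreeSpan_map_eq hli hsp hd hx
  rw [← hzy]
  exact hker hz

end DegreeSpan

section QuotientComap

variable {R M : Type*} [Ring R] [AddCommGroup M] [Module R M] {N P : Submodule R M}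

theorem finrank_quotient_comap_subtype_of_disjoint (h : Disjoint N P) :
    Module.finrank R (N ⧸ P.comap N.subtype) = Module.finrank R N :=
  (quotEquivOfEqBot _ (disjoint_iff_comap_eq_bot.mp h)).finrank_eq

theorem subsingleton_quotient_comap_subtype_of_le (h : N ≤ P) :
    Subsingleton (N ⧸ P.comap N.subtype) :=
  Submodule.Quotient.subsingleton_iff.mpr (comap_subtype_eq_top.mpr h)

end QuotientComap

section LowDegree

/-- The exponents of `1, D, e, f, g, v, D², h`: all monomials of degree at most 4. -/
def lowDegreeIdx : Fin 8 → (Fin 2 → ℕ) × (Fin 4 → Bool) :=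
  ![(![0, 0], ![false, false, false, false]), (![1, 0], ![false, false, false, false]),
    (![0, 0], ![true, false, false, false]), (![0, 0], ![false, true, false, false]),
    (![0, 0], ![false, false, true, false]), (![0, 0], ![false, false, false, true]),
    (![2, 0], ![false, false, false, false]), (![0, 1], ![false, false, false, false])]

theorem lowDegreeIdx_injective : Function.Injective lowDegreeIdx := by decide

theorem gcDeg_lowDegreeIdx (j : Fin 8) :
    gcDeg ![2, 4] ![3, 3, 3, 3] (lowDegreeIdx j) = ![0, 2, 3, 3, 3, 3, 4, 4] j := by
  revert j; decide

theorem exists_lowDegreeIdx_eq {x : (Fin 2 → ℕ) × (Fin 4 → Bool)}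
    (hx : gcDeg ![2, 4] ![3, 3, 3, 3] x ≤ 4) : ∃ j, lowDegreeIdx j = x := by
  have hfin : ∀ (a : Fin 3) (b : Fin 2) (ε : Fin 4 → Bool),
      gcDeg ![2, 4] ![3, 3, 3, 3] (![(a : ℕ), b], ε) ≤ 4 →
        ∃ j, lowDegreeIdx j = (![(a : ℕ), b], ε) := by
    decide
  obtain ⟨p, ε⟩ := x
  have hp : p = ![p 0, p 1] := by ext i; fin_cases i <;> rfl
  have hbound : p 0 < 3 ∧ p 1 < 2 := by
    simp only [gcDeg, Fin.sum_univ_two, Matrix.cons_val_zero, Matrix.cons_val_one] at hx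
    omega
  rw [hp] at hx ⊢
  exact hfin ⟨p 0, hbound.1⟩ ⟨p 1, hbound.2⟩ ε hx

theorem setOf_gcDeg_eq_image_lowDegreeIdx {m : ℕ} (hm : m ≤ 4) :
    {x | gcDeg ![2, 4] ![3, 3, 3, 3] x = m} =
      lowDegreeIdx '' {j | ![0, 2, 3, 3, 3, 3, 4, 4] j = m} := by
  ext x
  constructor
  · rintro (hx : _ = m)
    obtain ⟨j, rfl⟩ := exists_lowDegreeIdx_eq (hx.trans_le hm)
    exact ⟨j, (gcDeg_lowDegreeIdx j).symm.trans hx, rfl⟩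
  · rintro ⟨j, hj, rfl⟩
    exact (gcDeg_lowDegreeIdx j).trans hj

variable {A : Type*} [Ring A] (D e f g v h : A)

theorem gcMon_lowDegreeIdx (j : Fin 8) :
    gcMon ![D, h] ![e, f, g, v] (lowDegreeIdx j) = ![1, D, e, f, g, v, D * D, h] j := by
  fin_cases j <;> simp [gcMon, lowDegreeIdx, List.ofFn_succ, pow_two]

variable [Algebra ℚ A]

theorem gradeLB_eq_span_image {m : ℕ} (hm : m ≤ 4) :
    gradeLB D e f g v h m =
      span ℚ (![1, D, e, f, g, v, D * D, h] '' {j | ![0, 2, 3, 3, 3, 3, 4, 4] j = m}) := by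
  rw [gradeLB, gcGrade, setOf_gcDeg_eq_image_lowDegreeIdx hm, Set.image_image]
  simp only [gcMon_lowDegreeIdx]

theorem gradeLB_zero : gradeLB D e f g v h 0 = span ℚ {1} := by
  rw [gradeLB_eq_span_image D e f g v h (by norm_num)]
  congr 1; ext x; simp [Fin.exists_fin_succ, eq_comm]

theorem gradeLB_one : gradeLB D e f g v h 1 = ⊥ := by
  rw [gradeLB_eq_span_image D e f g v h (by norm_num)]
  simp [Fin.exists_fin_succ]

theorem gradeLB_two : gradeLB D e f g v h 2 = span ℚ {D} := by
  rw [gradeLB_eq_span_image D e f g v h (by norm_num)]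
  congr 1; ext x; simp [Fin.exists_fin_succ, eq_comm]

theorem gradeLB_three : gradeLB D e f g v h 3 = span ℚ {e, f, g, v} := by
  rw [gradeLB_eq_span_image D e f g v h (by norm_num)]
  congr 1; ext x; simp [Fin.exists_fin_succ, eq_comm]

theorem gradeLB_four : gradeLB D e f g v h 4 = span ℚ {D * D, h} := by
  rw [gradeLB_eq_span_image D e f g v h (by norm_num)]
  congr 1; ext x; simp [Fin.exists_fin_succ, eq_comm]

end LowDegree

section Cohomology

variable {A : Type*} [Ring A] [Algebra ℚ A] {D e f g v h : A} {d : A →ₗ[ℚ] A}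

theorem linearIndependent_lowDegreeMonomials
    (hli : LinearIndependent ℚ (gcMon ![D, h] ![e, f, g, v])) :
    LinearIndependent ℚ ![1, D, e, f, g, v, D * D, h] := by
  have := hli.comp lowDegreeIdx lowDegreeIdx_injective
  rwa [show gcMon ![D, h] ![e, f, g, v] ∘ lowDegreeIdx = ![1, D, e, f, g, v, D * D, h] from
    funext (gcMon_lowDegreeIdx D e f g v h)] at this

theorem finrank_span_f_g_v (hli : LinearIndependent ℚ (gcMon ![D, h] ![e, f, g, v])) :
    Module.finrank ℚ (span ℚ {f, g, v}) = 3 := by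
  have hfgv : LinearIndependent ℚ ![f, g, v] := by
    have := (linearIndependent_lowDegreeMonomials hli).comp ![3, 4, 5] (by decide)
    rwa [show ![1, D, e, f, g, v, D * D, h] ∘ ![3, 4, 5] = ![f, g, v] by
      ext j; fin_cases j <;> rfl] at this
  have hrange : Set.range ![f, g, v] = {f, g, v} := by
    simp only [Matrix.range_cons, Matrix.range_empty, Set.union_empty, Set.singleton_union]
  rw [← hrange, finrank_span_eq_card hfgv, Fintype.card_fin]

theorem ker_inf_gradeLB_three (hli : LinearIndependent ℚ (gcMon ![D, h] ![e, f, g, v]))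
    (hdf : d f = 0) (hdg : d g = 0) (hdv : d v = 0) (hde : d e = D * D) :
    LinearMap.ker d ⊓ gradeLB D e f g v h 3 = span ℚ {f, g, v} := by
  have hfgv_ker : span ℚ {f, g, v} ≤ LinearMap.ker d := by
    rw [span_le]
    rintro x (rfl | rfl | rfl) <;> assumption
  refine le_antisymm ?_ (le_inf hfgv_ker ?_)
  · rintro x ⟨hxk, hxg⟩
    rw [SetLike.mem_coe, gradeLB_three, mem_span_insert] at hxg
    obtain ⟨a, z, hz, rfl⟩ := hxg
    have hDD : D * D ≠ 0 := (linearIndependent_lowDegreeMonomials hli).ne_zero 6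
    have ha : a • (D * D) = 0 := by
      simpa [LinearMap.mem_ker.mp (hfgv_ker hz), hde] using LinearMap.mem_ker.mp hxk
    rw [(smul_eq_zero.mp ha).resolve_right hDD, zero_smul, zero_add]
    exact hz
  · rw [gradeLB_three]
    exact span_mono (Set.subset_insert e _)

theorem ker_inf_gradeLB_four_le (hli : LinearIndependent ℚ (gcMon ![D, h] ![e, f, g, v]))
    {k : ℚ} (hk : k ≠ 0)
    (hleib : ∀ (m : ℕ) (x y : A), x ∈ gradeLB D e f g v h m →
      d (x * y) = d x * y + ((-1 : ℚ) ^ m) • (x * d y))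
    (hdD : d D = 0) (hdh : d h = (-k) • (D * g)) :
    LinearMap.ker d ⊓ gradeLB D e f g v h 4 ≤ span ℚ {D * D} := by
  have hdDD : d (D * D) = 0 := by
    simpa [hdD] using hleib 2 D D (by rw [gradeLB_two]; exact mem_span_singleton_self D)
  have hDg : D * g ≠ 0 := by
    simpa [gcMon, List.ofFn_succ] using hli.ne_zero (![1, 0], ![false, false, true, false])
  rintro x ⟨hxk, hxg⟩
  rw [SetLike.mem_coe, gradeLB_four, mem_span_insert] at hxg
  obtain ⟨a, z, hz, rfl⟩ := hxg
  obtain ⟨c, rfl⟩ := mem_span_singleton.mp hz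
  have hc : (c * -k) • (D * g) = 0 := by
    simpa [hdDD, hdh, smul_smul] using LinearMap.mem_ker.mp hxk
  have hc0 : c = 0 := by
    simpa [hk] using (smul_eq_zero.mp hc).resolve_right hDg
  rw [hc0, zero_smul, add_zero]
  exact smul_mem _ _ (mem_span_singleton_self _)

end Cohomology

theorem statement4 {A : Type*} [Ring A] [Algebra ℚ A]
    (D e f g v h : A) (k : ℚ) (hk : k ≠ 0) (d : A →ₗ[ℚ] A)
    (hfree : IsFreeGCA ![D, h] ![e, f, g, v])
    (hdeg : ∀ (m : ℕ) (x : A), x ∈ gradeLB D e f g v h m → d x ∈ gradeLB D e f g v h (m + 1))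
    (hleib : ∀ (m : ℕ) (x y : A), x ∈ gradeLB D e f g v h m →
      d (x * y) = d x * y + ((-1 : ℚ) ^ m) • (x * d y))
    (hdD : d D = 0) (hdf : d f = 0) (hdg : d g = 0) (hdv : d v = 0)
    (hde : d e = D * D) (hdh : d h = (-k) • (D * g)) :
    Module.finrank ℚ (HcohLB D e f g v h d 0) = 1 ∧
    Subsingleton (HcohLB D e f g v h d 1) ∧
    Module.finrank ℚ (HcohLB D e f g v h d 2) = 1 ∧
    (LinearMap.ker d ⊓ gradeLB D e f g v h 2 ≤
      Submodule.span ℚ {D} ⊔ LinearMap.range d) ∧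
    Module.finrank ℚ (HcohLB D e f g v h d 3) = 3 ∧
    (LinearMap.ker d ⊓ gradeLB D e f g v h 3 ≤
      Submodule.span ℚ {f, g, v} ⊔ LinearMap.range d) ∧
    Subsingleton (HcohLB D e f g v h d 4) := by
  obtain ⟨hli, hsp, -, -⟩ := hfree
  have hlow := linearIndependent_lowDegreeMonomials hli
  have hd1 : d 1 = 0 := by
    simpa [gradeLB_one] using hdeg 0 1 (by simp [gradeLB_zero, mem_span_singleton_self])
  have hG0 : gradeLB D e f g v h 0 ≤ LinearMap.ker d := by simpa [gradeLB_zero] using hd1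
  have hG1 : gradeLB D e f g v h 1 ≤ LinearMap.ker d := by simp [gradeLB_one]
  have hG2 : gradeLB D e f g v h 2 ≤ LinearMap.ker d := by simpa [gradeLB_two] using hdD
  have hker3 := ker_inf_gradeLB_three hli hdf hdg hdv hde
  have hcob0 : Disjoint (gradeLB D e f g v h 0) (LinearMap.range d) :=
    disjoint_degreeSpan_zero_range hli hsp hdeg
  have hcob2 : Disjoint (gradeLB D e f g v h 2) (LinearMap.range d) :=
    disjoint_degreeSpan_succ_range hli hsp hdeg hG1
  have hcob3 : Disjoint (gradeLB D e f g v h 3) (LinearMap.range d) :=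
    disjoint_degreeSpan_succ_range hli hsp hdeg hG2
  refine ⟨?_, subsingleton_quotient_comap_subtype_of_le (by simp [gradeLB_one]), ?_,
    inf_le_right.trans (by rw [gradeLB_two]; exact le_sup_left), ?_,
    hker3.le.trans le_sup_left, ?_⟩
  · rw [finrank_quotient_comap_subtype_of_disjoint (hcob0.mono_left inf_le_right),
      inf_eq_right.mpr hG0, gradeLB_zero]
    exact finrank_span_singleton (hlow.ne_zero 0)
  · rw [finrank_quotient_comap_subtype_of_disjoint (hcob2.mono_left inf_le_right),
      inf_eq_right.mpr hG2, gradeLB_two]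
    exact finrank_span_singleton (hlow.ne_zero 1)
  · rw [finrank_quotient_comap_subtype_of_disjoint (hcob3.mono_left inf_le_right), hker3,
      finrank_span_f_g_v hli]
  · refine subsingleton_quotient_comap_subtype_of_le
      ((ker_inf_gradeLB_four_le hli hk hleib hdD hdh).trans ?_)
    exact span_singleton_le_iff_mem _ _ |>.mpr ⟨e, hde⟩
end

section
/- Let k be a nonzero rational number, and for n ≥ 1 set s_n = hⁿ·D + n·k·e·g·h^{n−1} ∈ Λ_B. Then the graded ℚ-algebra H(Λ_B, d₀) is isomorphic to Λ(f,v) ⊗ (ℚ ⊕ M′), where Λ(f,v) is the exterior algebra on two generators of degree 3, M′ is the graded ℚ-vector space with basis consisting of one element in degree 2 (the class of D), one element in degree 4n+3 for each n ≥ 0 (the class of g·hⁿ), and one element in degree 4n+2 for each n ≥ 1 (the class of s_n), and ℚ ⊕ M′ is the square-zero extension of ℚ by M′ (the product of any two elements of M′ is zero). In particular in H(Λ_B,d₀) the relations [D]² = 0 and [D][g] = 0 hold, and the classes of D, f, g, v, g·hⁿ (n ≥ 0) and s_n (n ≥ 1) generate H(Λ_B,d₀) as a ℚ-algebra. (This is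 the paper's presentation H^*(Emb_ω(c,μ); ℚ) = Λ(D, f, g, v, g·hⁿ, s_n)/⟨D², D·g⟩.) -/
/-- Index of the basis of `M′`: the class of `D`; the classes of `g·hⁿ` (n ≥ 0); and the
classes of `s_{m+1}` (m ≥ 0). -/
abbrev idxM' : Type := Unit ⊕ ℕ ⊕ ℕ

/-- Representatives of the basis of `M′`: `D`, `g·hⁿ`, and
`s_{m+1} = h^{m+1}·D + (m+1)·k·e·g·hᵐ`. -/
def mEltB {A : Type*} [Ring A] [Algebra ℚ A] (D e g h : A) (k : ℚ) : idxM' → A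
  | Sum.inl _ => D
  | Sum.inr (Sum.inl n) => g * h ^ n
  | Sum.inr (Sum.inr m) => h ^ (m + 1) * D + (((m : ℚ) + 1) * k) • (e * (g * h ^ m))

/-- Degrees of the basis elements of `M′`. -/
def degMB : idxM' → ℕ
  | Sum.inl _ => 2
  | Sum.inr (Sum.inl n) => 4 * n + 3
  | Sum.inr (Sum.inr m) => 4 * (m + 1) + 2

/-- Representatives of the basis of `Λ(f,v) ⊗ (ℚ ⊕ M′)`: the elements `f^ε·v^δ·m` with
`ε, δ ∈ {0,1}` and `m` either `1` or a basis element of `M′`. -/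
def cEltB {A : Type*} [Ring A] [Algebra ℚ A] (D e f g v h : A) (k : ℚ) :
    (Bool × Bool) × Option idxM' → A :=
  fun p => (if p.1.1 then f else 1) * (if p.1.2 then v else 1) *
    (Option.elim p.2 1 (mEltB D e g h k))

/-- Degrees of the basis of `Λ(f,v) ⊗ (ℚ ⊕ M′)`. -/
def degCB : (Bool × Bool) × Option idxM' → ℕ :=
  fun p => (if p.1.1 then 3 else 0) + (if p.1.2 then 3 else 0) + Option.elim p.2 0 degMB


/-!
The monomials `Dᵃ hᵇ eⁱ fʲ gᵖ vᵠ` form a basis of `Λ_B`, and `d₀` sends each of them to a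
combination of at most two monomials. Trading monomials for the listed cocycles, for elements
`x` (the monomials `Dᵃ hᵇ e` and `Dᵃ hᶜ⁺¹`, times `fʲ vᵠ`) and for their images `d₀ x` is a
triangular change of basis once monomials containing `e` are declared leading. In a basis of
the form `cocycles ∪ x ∪ d₀ x` one reads off `ker d₀ = span(cocycles) ⊕ im d₀`.

For the products: every product of two basis elements of `M′` is `0` or `D · m` with `m` in
the basis of `M′`, and `D · M′ ⊆ im d₀` because `D² = d₀ e`, `D g hⁿ` is a multiple of
`d₀ hⁿ⁺¹`, and `D sₙ = d₀ (hⁿ e)`.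
-/

open Submodule

section Splitting

variable {K M ι κ : Type*} [Ring K] [AddCommGroup M] [Module K M]
  {d : M →ₗ[K] M} {c : ι → M} {x : κ → M}

theorem LinearMap.range_eq_span_of_splitting
    (hspan : span K (Set.range (Sum.elim c (Sum.elim x (d ∘ x)))) = ⊤)
    (hdc : ∀ i, d (c i) = 0) (hddx : ∀ l, d (d (x l)) = 0) :
    LinearMap.range d = span K (Set.range (d ∘ x)) := by
  refine le_antisymm ?_ (span_le.mpr (Set.range_comp_subset_range x d))
  rw [LinearMap.range_eq_map, ← hspan, map_span, span_le]
  rintro _ ⟨_, ⟨i | l | l, rfl⟩, rfl⟩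
  · simp [hdc]
  · exact subset_span ⟨l, rfl⟩
  · simp [hddx]

theorem LinearMap.linearIndependent_mkQ_of_splitting
    (hli : LinearIndependent K (Sum.elim c (Sum.elim x (d ∘ x))))
    (hspan : span K (Set.range (Sum.elim c (Sum.elim x (d ∘ x)))) = ⊤)
    (hdc : ∀ i, d (c i) = 0) (hddx : ∀ l, d (d (x l)) = 0) :
    LinearIndependent K ((LinearMap.range d).mkQ ∘ c) := by
  obtain ⟨hc, -, hdisj⟩ := linearIndependent_sum.mp hli
  have hdisj' : Disjoint (span K (Set.range c)) (LinearMap.range d) := by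
    rw [LinearMap.range_eq_span_of_splitting hspan hdc hddx]
    refine hdisj.mono_right (span_mono ?_)
    rintro _ ⟨l, rfl⟩
    exact ⟨Sum.inr l, rfl⟩
  exact hc.map (by rwa [ker_mkQ])

theorem LinearMap.ker_le_span_sup_range_of_splitting
    (hli : LinearIndependent K (Sum.elim c (Sum.elim x (d ∘ x))))
    (hspan : span K (Set.range (Sum.elim c (Sum.elim x (d ∘ x)))) = ⊤)
    (hdc : ∀ i, d (c i) = 0) (hddx : ∀ l, d (d (x l)) = 0) :
    LinearMap.ker d ≤ span K (Set.range c) ⊔ LinearMap.range d := by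
  intro z hz
  have hz' : z ∈ span K (Set.range c) ⊔
      (span K (Set.range x) ⊔ span K (Set.range (d ∘ x))) := by
    rw [← span_union, ← span_union, ← Set.Sum.elim_range, ← Set.Sum.elim_range, hspan]
    trivial
  obtain ⟨u, hu, _, hyw, rfl⟩ := mem_sup.mp hz'
  obtain ⟨y, hy, w, hw, rfl⟩ := mem_sup.mp hyw
  obtain ⟨a, rfl⟩ := Finsupp.range_linearCombination (R := K) (v := x) ▸ hy
  have hdu : d u = 0 :=
    span_le (p := LinearMap.ker d).mpr (by rintro _ ⟨i, rfl⟩; exact hdc i) hu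
  have hdw : d w = 0 :=
    span_le (p := LinearMap.ker d).mpr (by rintro _ ⟨l, rfl⟩; exact hddx l) hw
  -- `d` is injective on the span of `x`, because `d ∘ x` is linearly independent.
  have ha : a = 0 := by
    have hdx : LinearIndependent K (d ∘ x) :=
      (hli.comp Sum.inr Sum.inr_injective).comp Sum.inr Sum.inr_injective
    apply hdx.finsuppLinearCombination_injective
    rw [← Finsupp.apply_linearCombination, map_zero]
    simpa [hdu, hdw] using hz
  rw [ha, map_zero, zero_add]
  exact add_mem_sup hu (LinearMap.range_eq_span_of_splitting hspan hdc hddx ▸ hw)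

end Splitting

namespace Module.Basis

variable {K M I J : Type*} [DivisionRing K] [AddCommGroup M] [Module K M]
  (b : Basis I K M) {σ : J ≃ I} {c : J → K} {low : Set I} {w : J → M}

theorem span_eq_top_of_triangular (hc : ∀ j, c j ≠ 0)
    (hlow : ∀ j, σ j ∈ low → w j = c j • b (σ j))
    (hhigh : ∀ j, w j - c j • b (σ j) ∈ span K (b '' low)) :
    span K (Set.range w) = ⊤ := by
  have hb : ∀ j, c j • b (σ j) ∈ span K (Set.range w) → b (σ j) ∈ span K (Set.range w) :=
    fun j h => (smul_mem_iff _ (hc j)).mp h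
  have hlow_le : span K (b '' low) ≤ span K (Set.range w) := by
    rw [span_le]
    rintro _ ⟨i, hi, rfl⟩
    obtain ⟨j, rfl⟩ := σ.surjective i
    exact hb j (hlow j hi ▸ subset_span ⟨j, rfl⟩)
  rw [eq_top_iff, ← b.span_eq, span_le]
  rintro _ ⟨i, rfl⟩
  obtain ⟨j, rfl⟩ := σ.surjective i
  refine hb j ?_
  rw [← sub_sub_cancel (w j) (c j • b (σ j))]
  exact sub_mem (subset_span ⟨j, rfl⟩) (hlow_le (hhigh j))

theorem linearIndependent_of_triangular (hc : ∀ j, c j ≠ 0)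
    (hlow : ∀ j, σ j ∈ low → w j = c j • b (σ j))
    (hhigh : ∀ j, w j - c j • b (σ j) ∈ span K (b '' low)) :
    LinearIndependent K w := by
  classical
  have hrepr : ∀ j i, i ∉ low ∨ σ j ∈ low → b.repr (w j) i = if σ j = i then c j else 0 := by
    rintro j i (hi | hj)
    · have h0 : b.repr (w j - c j • b (σ j)) i = 0 :=
        Finsupp.notMem_support_iff.mp fun hmem => hi ((b.mem_span_image.mp (hhigh j)) hmem)
      rw [map_sub, Finsupp.sub_apply, sub_eq_zero] at h0
      simp [h0, Finsupp.single_apply]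
    · simp [hlow j hj, Finsupp.single_apply]
  rw [linearIndependent_iff']
  intro s g hg
  have hcoord : ∀ i, ∑ j ∈ s, g j * b.repr (w j) i = 0 := fun i => by
    simpa [Finsupp.finsetSum_apply] using congrArg (fun z => b.repr z i) hg
  -- Read off the coordinate `σ j₀`: first for `σ j₀ ∉ low`, then for `σ j₀ ∈ low`.
  have key : ∀ j₀ ∈ s, (∀ j ∈ s, (σ j₀ ∉ low ∨ σ j ∈ low) ∨ g j = 0) → g j₀ = 0 := by
    intro j₀ hj₀ hs
    have h := hcoord (σ j₀)
    rw [Finset.sum_eq_single j₀, hrepr j₀ _ (em _).symm, if_pos rfl] at h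
    · exact (mul_eq_zero.mp h).resolve_right (hc j₀)
    · intro j hj hne
      rcases hs j hj with h' | h'
      · rw [hrepr j _ h', if_neg (σ.injective.ne hne), mul_zero]
      · rw [h', zero_mul]
    · exact fun h' => absurd hj₀ h'
  have high : ∀ j ∈ s, σ j ∉ low → g j = 0 := fun j hj hlow' =>
    key j hj fun _ _ => .inl (.inl hlow')
  intro j hj
  exact key j hj fun j' hj' => by
    by_cases h' : σ j' ∈ low
    · exact .inl (.inr h')
    · exact .inr (high j' hj' h')

end Module.Basis

noncomputable def IsFreeGCA.basis_s5 {A : Type*} [Ring A] [Algebra ℚ A] {nE nO : ℕ}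
    {ev : Fin nE → A} {od : Fin nO → A} (hfree : IsFreeGCA ev od) :
    Module.Basis ((Fin nE → ℕ) × (Fin nO → Bool)) ℚ A :=
  .mk hfree.li hfree.spanning.ge

@[simp]
theorem IsFreeGCA.coe_basis_s5 {A : Type*} [Ring A] [Algebra ℚ A] {nE nO : ℕ}
    {ev : Fin nE → A} {od : Fin nO → A} (hfree : IsFreeGCA ev od) :
    ⇑hfree.basis_s5 = gcMon ev od :=
  Module.Basis.coe_mk _ _

namespace LambdaB

variable {A : Type*} [Ring A] [Algebra ℚ A]

structure IsD₀ (D e f g v h : A) (k : ℚ) (d : A →ₗ[ℚ] A) : Prop where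
  free : IsFreeGCA ![D, h] ![e, f, g, v]
  leibniz : ∀ (m : ℕ) (x y : A), x ∈ gradeLB D e f g v h m →
    d (x * y) = d x * y + ((-1 : ℚ) ^ m) • (x * d y)
  dD : d D = 0
  df : d f = 0
  dg : d g = 0
  dv : d v = 0
  de : d e = D * D
  dh : d h = (-k) • (D * g)

def sgn (b : Bool) : ℚ := if b then -1 else 1

lemma sgn_ne_zero (b : Bool) : sgn b ≠ 0 := by cases b <;> simp [sgn]

abbrev Exps : Type := (Fin 2 → ℕ) × (Fin 4 → Bool)

def exps (a b : ℕ) (i j p q : Bool) : Exps := (![a, b], ![i, j, p, q])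

lemma exps_eta (t : Exps) : t = exps (t.1 0) (t.1 1) (t.2 0) (t.2 1) (t.2 2) (t.2 3) := by
  obtain ⟨n, β⟩ := t
  simp only [exps, Prod.mk.injEq]
  constructor <;> (funext x; fin_cases x <;> rfl)

variable (D e f g v h) in
/-- The monomial `Dᵃ hᵇ eⁱ fʲ gᵖ vᵠ`, associated to the right. -/
def mon (a b : ℕ) (i j p q : Bool) : A :=
  D ^ a * (h ^ b * ((if i then e else 1) * ((if j then f else 1) *
    ((if p then g else 1) * (if q then v else 1)))))

variable {D e f g v h : A} {k : ℚ} {d : A →ₗ[ℚ] A}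

omit [Algebra ℚ A] in
lemma gcMon_exps (a b : ℕ) (i j p q : Bool) :
    gcMon ![D, h] ![e, f, g, v] (exps a b i j p q) = mon D e f g v h a b i j p q := by
  cases i <;> cases j <;> cases p <;> cases q <;>
    simp [gcMon, mon, exps, List.ofFn_succ, mul_assoc]

lemma gcDeg_exps (a b : ℕ) (i j p q : Bool) :
    gcDeg ![2, 4] ![3, 3, 3, 3] (exps a b i j p q) =
      2 * a + 4 * b + (if i then 3 else 0) + (if j then 3 else 0) +
        (if p then 3 else 0) + (if q then 3 else 0) := by
  cases i <;> cases j <;> cases p <;> cases q <;>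
    simp [gcDeg, exps, Fin.sum_univ_succ]

variable (D e f g v h) in
lemma mon_mem_gradeLB (a b : ℕ) (i j p q : Bool) :
    mon D e f g v h a b i j p q ∈ gradeLB D e f g v h (2 * a + 4 * b + (if i then 3 else 0) +
      (if j then 3 else 0) + (if p then 3 else 0) + (if q then 3 else 0)) :=
  subset_span ⟨exps a b i j p q, gcDeg_exps .., gcMon_exps ..⟩

lemma cEltB_none (j q : Bool) :
    cEltB D e f g v h k ((j, q), none) = mon D e f g v h 0 0 false j false q := by
  cases j <;> cases q <;> simp [cEltB, mon]

/-- `((j, q), inl (a, b))` stands for `Dᵃ hᵇ e fʲ vᵠ` and `((j, q), inr (a, c))` for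
`Dᵃ hᶜ⁺¹ fʲ vᵠ`. -/
abbrev NonCocycleIdx : Type := (Bool × Bool) × ((ℕ × ℕ) ⊕ (ℕ × ℕ))

variable (D e f g v h) in
def nonCocycle : NonCocycleIdx → A
  | ((j, q), .inl (a, b)) => mon D e f g v h a b true j false q
  | ((j, q), .inr (a, c)) => mon D e f g v h a (c + 1) false j false q

abbrev AdaptedIdx : Type := ((Bool × Bool) × Option idxM') ⊕ (NonCocycleIdx ⊕ NonCocycleIdx)

variable (D e f g v h k d) in
/-- A basis of `Λ_B` adapted to `d`. -/
def adapted : AdaptedIdx → A :=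
  Sum.elim (cEltB D e f g v h k) (Sum.elim (nonCocycle D e f g v h) (d ∘ nonCocycle D e f g v h))

/-- The exponent of the leading monomial of `adapted`, where monomials containing `e` lead. -/
def lead : AdaptedIdx → Exps
  | .inl ((j, q), none) => exps 0 0 false j false q
  | .inl ((j, q), some (.inl _)) => exps 1 0 false j false q
  | .inl ((j, q), some (.inr (.inl n))) => exps 0 n false j true q
  | .inl ((j, q), some (.inr (.inr m))) => exps 0 m true j true q
  | .inr (.inl ((j, q), .inl (a, b))) => exps a b true j false q
  | .inr (.inl ((j, q), .inr (a, c))) => exps a (c + 1) false j false q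
  | .inr (.inr ((j, q), .inl (a, 0))) => exps (a + 2) 0 false j false q
  | .inr (.inr ((j, q), .inl (a, b + 1))) => exps (a + 1) b true j true q
  | .inr (.inr ((j, q), .inr (a, c))) => exps (a + 1) c false j true q

def ofExps (a b : ℕ) (i j p q : Bool) : AdaptedIdx :=
  match i, p, a, b with
  | false, false, 0, 0 => .inl ((j, q), none)
  | false, false, 1, 0 => .inl ((j, q), some (.inl ()))
  | false, false, a + 2, 0 => .inr (.inr ((j, q), .inl (a, 0)))
  | false, false, a, b + 1 => .inr (.inl ((j, q), .inr (a, b)))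
  | true, false, a, b => .inr (.inl ((j, q), .inl (a, b)))
  | false, true, 0, b => .inl ((j, q), some (.inr (.inl b)))
  | false, true, a + 1, b => .inr (.inr ((j, q), .inr (a, b)))
  | true, true, 0, b => .inl ((j, q), some (.inr (.inr b)))
  | true, true, a + 1, b => .inr (.inr ((j, q), .inl (a, b + 1)))

def leadEquiv : AdaptedIdx ≃ Exps where
  toFun := lead
  invFun t := ofExps (t.1 0) (t.1 1) (t.2 0) (t.2 1) (t.2 2) (t.2 3)
  left_inv := by
    rintro (⟨⟨j, q⟩, _ | ⟨⟩ | n | m⟩ | ⟨⟨j, q⟩, ⟨a, b⟩ | ⟨a, c⟩⟩ | ⟨⟨j, q⟩, ⟨a, _ | b⟩ | ⟨a, c⟩⟩) <;>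
      simp [lead, ofExps, exps]
  right_inv t := by
    rw [exps_eta t]
    simp only [exps, Matrix.cons_val_zero, Matrix.cons_val_one, Matrix.cons_val_two,
      Matrix.cons_val_three]
    generalize t.1 0 = a, t.1 1 = b, t.2 0 = i, t.2 1 = j, t.2 2 = p, t.2 3 = q
    rcases i with _ | _ <;> rcases p with _ | _ <;> rcases a with _ | _ | a <;>
      rcases b with _ | b <;> simp [ofExps, lead, exps]

variable (k) in
def leadCoeff : AdaptedIdx → ℚ
  | .inl ((_, q), some (.inr (.inl _))) => sgn q
  | .inl ((j, _), some (.inr (.inr m))) => ((m : ℚ) + 1) * k * sgn j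
  | .inr (.inr ((j, _), .inl (_, b + 1))) => ((b : ℚ) + 1) * k * sgn j
  | .inr (.inr ((j, _), .inr (_, c))) => -(((c : ℚ) + 1) * k * sgn j)
  | _ => 1

lemma leadCoeff_ne_zero (hk : k ≠ 0) (x : AdaptedIdx) : leadCoeff k x ≠ 0 := by
  rcases x with ⟨⟨j, q⟩, _ | ⟨⟩ | n | m⟩ | ⟨⟨j, q⟩, ⟨a, b⟩ | ⟨a, c⟩⟩ | ⟨⟨j, q⟩, ⟨a, _ | b⟩ | ⟨a, c⟩⟩ <;>
    simp [leadCoeff, hk, sgn_ne_zero] <;> positivity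

variable (D e f g v h) in
def lowerPart : AdaptedIdx → A
  | .inl ((j, q), some (.inr (.inr m))) => mon D e f g v h 1 (m + 1) false j false q
  | .inr (.inr ((j, q), .inl (a, b + 1))) => mon D e f g v h (a + 2) (b + 1) false j false q
  | _ => 0

def noE : Set Exps := {t | t.2 0 = false}

omit [Algebra ℚ A] in
lemma lowerPart_eq_zero (x : AdaptedIdx) (hx : lead x ∈ noE) : lowerPart D e f g v h x = 0 := by
  rcases x with ⟨⟨j, q⟩, _ | ⟨⟩ | n | m⟩ | ⟨⟨j, q⟩, ⟨a, b⟩ | ⟨a, c⟩⟩ | ⟨⟨j, q⟩, ⟨a, _ | b⟩ | ⟨a, c⟩⟩ <;>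
    simp_all [lowerPart, lead, noE, exps]

lemma lowerPart_mem_span (x : AdaptedIdx) :
    lowerPart D e f g v h x ∈ span ℚ (gcMon ![D, h] ![e, f, g, v] '' noE) := by
  rcases x with ⟨⟨j, q⟩, _ | ⟨⟩ | n | m⟩ | ⟨⟨j, q⟩, ⟨a, b⟩ | ⟨a, c⟩⟩ | ⟨⟨j, q⟩, ⟨a, _ | b⟩ | ⟨a, c⟩⟩ <;>
    simp only [lowerPart, zero_mem] <;>
    exact subset_span ⟨_, rfl, gcMon_exps ..⟩

namespace IsD₀

variable (hc : IsD₀ D e f g v h k d)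
include hc

lemma commute_D (x : A) : Commute D x := hc.free.central 0 x

lemma commute_h (x : A) : Commute h x := hc.free.central 1 x

lemma mul_D (x : A) : x * D = D * x := (hc.commute_D x).eq.symm

lemma mul_D_mul (x y : A) : x * (D * y) = D * (x * y) := ((hc.commute_D x).left_comm y).symm

lemma mul_hpow (n : ℕ) (x : A) : x * h ^ n = h ^ n * x :=
  ((hc.commute_h x).pow_left n).eq.symm

lemma mul_hpow_mul (n : ℕ) (x y : A) : x * (h ^ n * y) = h ^ n * (x * y) :=
  (((hc.commute_h x).pow_left n).left_comm y).symm

lemma odd_mul_self (i : Fin 4) : ![e, f, g, v] i * ![e, f, g, v] i = 0 := by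
  have h2 : (2 : ℚ) • (![e, f, g, v] i * ![e, f, g, v] i) = 0 := by
    rw [two_smul]
    nth_rewrite 2 [hc.free.anticomm i i]
    exact add_neg_cancel _
  exact (smul_eq_zero.mp h2).resolve_left two_ne_zero

lemma g_mul_e : g * e = -(e * g) := hc.free.anticomm 2 0
lemma g_mul_f : g * f = -(f * g) := hc.free.anticomm 2 1
lemma v_mul_e : v * e = -(e * v) := hc.free.anticomm 3 0
lemma v_mul_g : v * g = -(g * v) := hc.free.anticomm 3 2
lemma f_mul_e : f * e = -(e * f) := hc.free.anticomm 1 0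
lemma g_mul_g : g * g = 0 := hc.odd_mul_self 2

lemma g_mul_e_mul (z : A) : g * (e * z) = -(e * (g * z)) := by
  rw [← mul_assoc, hc.g_mul_e, neg_mul, mul_assoc]
lemma g_mul_f_mul (z : A) : g * (f * z) = -(f * (g * z)) := by
  rw [← mul_assoc, hc.g_mul_f, neg_mul, mul_assoc]
lemma v_mul_e_mul (z : A) : v * (e * z) = -(e * (v * z)) := by
  rw [← mul_assoc, hc.v_mul_e, neg_mul, mul_assoc]
lemma f_mul_e_mul (z : A) : f * (e * z) = -(e * (f * z)) := by
  rw [← mul_assoc, hc.f_mul_e, neg_mul, mul_assoc]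
lemma g_mul_g_mul (z : A) : g * (g * z) = 0 := by
  rw [← mul_assoc, hc.g_mul_g, zero_mul]

lemma hpow_mul_mul_hpow (a b : ℕ) (x : A) : h ^ a * (x * h ^ b) = x * h ^ (a + b) := by
  rw [← hc.mul_hpow_mul, pow_add]

lemma d_one : d 1 = 0 := by
  simpa using hc.leibniz 0 1 1
    (by simpa [mon] using mon_mem_gradeLB D e f g v h 0 0 false false false false)

lemma d_D_mul (y : A) : d (D * y) = D * d y := by
  simpa [hc.dD] using hc.leibniz 2 D y
    (by simpa [mon] using mon_mem_gradeLB D e f g v h 1 0 false false false false)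

lemma d_h_mul (y : A) : d (h * y) = -(k • (D * (g * y))) + h * d y := by
  simpa [hc.dh, smul_mul_assoc, mul_assoc, show (-1 : ℚ) ^ 4 = 1 by norm_num] using
    hc.leibniz 4 h y (by simpa [mon] using mon_mem_gradeLB D e f g v h 0 1 false false false false)

lemma d_e_mul (y : A) : d (e * y) = D * (D * y) + -(e * d y) := by
  simpa [hc.de, mul_assoc, show (-1 : ℚ) ^ 3 = -1 by norm_num] using hc.leibniz 3 e y
    (by simpa [mon] using mon_mem_gradeLB D e f g v h 0 0 true false false false)

lemma d_f_mul (y : A) : d (f * y) = -(f * d y) := by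
  simpa [hc.df, show (-1 : ℚ) ^ 3 = -1 by norm_num] using hc.leibniz 3 f y
    (by simpa [mon] using mon_mem_gradeLB D e f g v h 0 0 false true false false)

lemma d_g_mul (y : A) : d (g * y) = -(g * d y) := by
  simpa [hc.dg, show (-1 : ℚ) ^ 3 = -1 by norm_num] using hc.leibniz 3 g y
    (by simpa [mon] using mon_mem_gradeLB D e f g v h 0 0 false false true false)

lemma d_Dpow_mul (a : ℕ) (y : A) : d (D ^ a * y) = D ^ a * d y := by
  induction a generalizing y with
  | zero => simp
  | succ a ih => rw [pow_succ, mul_assoc, ih, hc.d_D_mul, ← mul_assoc]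

/-- For `b = 0` the coefficient vanishes, so the truncation in `b - 1` is harmless. -/
lemma d_hpow_mul (b : ℕ) (y : A) :
    d (h ^ b * y) = (-(b : ℚ) * k) • (D * (g * (h ^ (b - 1) * y))) + h ^ b * d y := by
  induction b generalizing y with
  | zero => simp
  | succ b ih =>
    rw [pow_succ', mul_assoc, hc.d_h_mul, ih, mul_add, mul_smul_comm, ← mul_assoc h (h ^ b),
      ← pow_succ', ← add_assoc]
    congr 1
    rcases b with _ | b
    · simp
    · rw [hc.mul_D_mul, (hc.commute_h g).left_comm, ← mul_assoc h, ← pow_succ', ← neg_smul]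
      simp only [Nat.add_sub_cancel]
      rw [← add_smul]
      congr 1
      push_cast
      ring

lemma d_odd_tail (j p q : Bool) :
    d ((if j then f else 1) * ((if p then g else 1) * (if q then v else 1))) = 0 := by
  cases j <;> cases p <;> cases q <;>
    simp [hc.d_f_mul, hc.d_g_mul, hc.d_one, hc.df, hc.dg, hc.dv]

lemma g_mul_odd (i j p q : Bool) :
    g * ((if i then e else 1) * ((if j then f else 1) *
      ((if p then g else 1) * (if q then v else 1)))) =
    if p then 0 else (sgn i * sgn j) • ((if i then e else 1) * ((if j then f else 1) *
      (g * (if q then v else 1)))) := by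
  cases i <;> cases j <;> cases p <;> cases q <;>
    simp [hc.g_mul_e_mul, hc.g_mul_f_mul, hc.g_mul_g_mul, hc.g_mul_e, hc.g_mul_f, hc.g_mul_g, sgn]

lemma d_mon (a b : ℕ) (i j p q : Bool) :
    d (mon D e f g v h a b i j p q) =
      (if p then 0 else
        (sgn i * sgn j * (-(b : ℚ) * k)) • mon D e f g v h (a + 1) (b - 1) i j true q) +
      (if i then mon D e f g v h (a + 2) b false j p q else 0) := by
  have hodd : d ((if i then e else 1) * ((if j then f else 1) *
      ((if p then g else 1) * (if q then v else 1)))) =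
      if i then D * (D * ((if j then f else 1) *
        ((if p then g else 1) * (if q then v else 1)))) else 0 := by
    cases i
    · simpa using hc.d_odd_tail j p q
    · rw [if_pos rfl, if_pos rfl, hc.d_e_mul, hc.d_odd_tail, mul_zero, neg_zero, add_zero]
  rw [mon, hc.d_Dpow_mul, hc.d_hpow_mul, hodd, mul_add]
  congr 1
  · rw [hc.mul_hpow_mul (b - 1) g, hc.g_mul_odd i j p q]
    cases p
    · simp only [Bool.false_eq_true, if_false, mul_smul_comm, smul_smul, mon, if_true]
      rw [pow_succ, mul_assoc (D ^ a) D]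
      congr 1
      ring
    · simp
  · cases i
    · simp
    · simp only [if_true, mon, Bool.false_eq_true, if_false, one_mul]
      rw [hc.mul_D_mul (h ^ b), hc.mul_D_mul (h ^ b), pow_succ, pow_succ, mul_assoc, mul_assoc]

lemma cEltB_D (j q : Bool) :
    cEltB D e f g v h k ((j, q), some (.inl ())) = mon D e f g v h 1 0 false j false q := by
  cases j <;> cases q <;> simp [cEltB, mEltB, mon, hc.mul_D]

lemma cEltB_gh (j q : Bool) (n : ℕ) :
    cEltB D e f g v h k ((j, q), some (.inr (.inl n))) =
      sgn q • mon D e f g v h 0 n false j true q := by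
  cases j <;> cases q <;>
    simp [cEltB, mEltB, mon, mul_assoc, sgn, hc.mul_hpow_mul _ f, hc.mul_hpow_mul _ v,
      hc.mul_hpow _ g, hc.v_mul_g]

lemma cEltB_s (j q : Bool) (m : ℕ) :
    cEltB D e f g v h k ((j, q), some (.inr (.inr m))) =
      (((m : ℚ) + 1) * k * sgn j) • mon D e f g v h 0 m true j true q
      + mon D e f g v h 1 (m + 1) false j false q := by
  cases j <;> cases q <;>
    simp [cEltB, mEltB, mon, mul_add, mul_assoc, sgn, hc.mul_D_mul, hc.mul_D,
      hc.mul_hpow_mul _ e, hc.mul_hpow_mul _ f, hc.mul_hpow_mul _ v, hc.mul_hpow _ f,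
      hc.mul_hpow _ g, hc.mul_hpow _ v, hc.v_mul_g, hc.v_mul_e_mul, hc.f_mul_e_mul, add_comm]

lemma adapted_eq (x : AdaptedIdx) :
    adapted D e f g v h k d x =
      leadCoeff k x • gcMon ![D, h] ![e, f, g, v] (lead x) + lowerPart D e f g v h x := by
  rcases x with ⟨⟨j, q⟩, _ | ⟨⟩ | n | m⟩ | ⟨⟨j, q⟩, ⟨a, b⟩ | ⟨a, c⟩⟩ | ⟨⟨j, q⟩, ⟨a, _ | b⟩ | ⟨a, c⟩⟩
  · simp [adapted, leadCoeff, lead, lowerPart, gcMon_exps, cEltB_none]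
  · simp [adapted, leadCoeff, lead, lowerPart, gcMon_exps, hc.cEltB_D]
  · simp [adapted, leadCoeff, lead, lowerPart, gcMon_exps, hc.cEltB_gh]
  · simp [adapted, leadCoeff, lead, lowerPart, gcMon_exps, hc.cEltB_s]
  · simp [adapted, leadCoeff, lead, lowerPart, gcMon_exps, nonCocycle]
  · simp [adapted, leadCoeff, lead, lowerPart, gcMon_exps, nonCocycle]
  · simp [adapted, leadCoeff, lead, lowerPart, gcMon_exps, nonCocycle, hc.d_mon]
  · cases j <;>
      simp [adapted, leadCoeff, lead, lowerPart, gcMon_exps, nonCocycle, hc.d_mon, sgn] <;>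
      module
  · cases j <;>
      simp [adapted, leadCoeff, lead, lowerPart, gcMon_exps, nonCocycle, hc.d_mon, sgn] <;>
      module

lemma linearIndependent_adapted (hk : k ≠ 0) : LinearIndependent ℚ (adapted D e f g v h k d) :=
  hc.free.basis_s5.linearIndependent_of_triangular (σ := leadEquiv) (leadCoeff_ne_zero hk)
    (fun x hx => by simp [hc.adapted_eq, lowerPart_eq_zero x hx, leadEquiv])
    (fun x => by simpa [hc.adapted_eq, leadEquiv] using lowerPart_mem_span x)

lemma span_adapted (hk : k ≠ 0) : span ℚ (Set.range (adapted D e f g v h k d)) = ⊤ :=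
  hc.free.basis_s5.span_eq_top_of_triangular (σ := leadEquiv) (leadCoeff_ne_zero hk)
    (fun x hx => by simp [hc.adapted_eq, lowerPart_eq_zero x hx, leadEquiv])
    (fun x => by simpa [hc.adapted_eq, leadEquiv] using lowerPart_mem_span x)

lemma d_cEltB (x : (Bool × Bool) × Option idxM') : d (cEltB D e f g v h k x) = 0 := by
  rcases x with ⟨⟨j, q⟩, _ | ⟨⟩ | n | m⟩
  · simp [cEltB_none, hc.d_mon]
  · simp [hc.cEltB_D, hc.d_mon]
  · simp [hc.cEltB_gh, hc.d_mon]
  · cases j <;> simp [hc.cEltB_s, hc.d_mon, sgn] <;> module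

lemma d_d_nonCocycle (x : NonCocycleIdx) : d (d (nonCocycle D e f g v h x)) = 0 := by
  rcases x with ⟨⟨j, q⟩, ⟨a, b⟩ | ⟨a, c⟩⟩
  · cases j <;> simp [nonCocycle, hc.d_mon, sgn]
  · simp [nonCocycle, hc.d_mon]

lemma cEltB_mem_gradeLB (x : (Bool × Bool) × Option idxM') :
    cEltB D e f g v h k x ∈ gradeLB D e f g v h (degCB x) := by
  rcases x with ⟨⟨j, q⟩, _ | ⟨⟩ | n | m⟩
  · rw [cEltB_none]
    convert mon_mem_gradeLB D e f g v h 0 0 false j false q using 2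
    cases j <;> cases q <;> simp [degCB]
  · rw [hc.cEltB_D]
    convert mon_mem_gradeLB D e f g v h 1 0 false j false q using 2
    cases j <;> cases q <;> simp [degCB, degMB]
  · rw [hc.cEltB_gh]
    refine smul_mem _ _ ?_
    convert mon_mem_gradeLB D e f g v h 0 n false j true q using 2
    cases j <;> cases q <;> simp [degCB, degMB] <;> omega
  · rw [hc.cEltB_s]
    refine add_mem (smul_mem _ _ ?_) ?_
    · convert mon_mem_gradeLB D e f g v h 0 m true j true q using 2
      cases j <;> cases q <;> simp [degCB, degMB] <;> omega
    · convert mon_mem_gradeLB D e f g v h 1 (m + 1) false j false q using 2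
      cases j <;> cases q <;> simp [degCB, degMB] <;> omega

lemma D_mul_mEltB_mem_range (hk : k ≠ 0) (t : idxM') :
    D * mEltB D e g h k t ∈ LinearMap.range d := by
  rcases t with ⟨⟩ | n | m
  · exact ⟨e, hc.de⟩
  · have hne : -((n : ℚ) + 1) * k ≠ 0 := mul_ne_zero (neg_ne_zero.mpr n.cast_add_one_ne_zero) hk
    refine ⟨(-((n : ℚ) + 1) * k)⁻¹ • h ^ (n + 1), ?_⟩
    have hdh := hc.d_hpow_mul (n + 1) 1
    simp only [mul_one, hc.d_one, mul_zero, add_zero, Nat.add_sub_cancel, Nat.cast_add_one] at hdh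
    rw [map_smul, hdh, inv_smul_smul₀ hne, mEltB, hc.mul_hpow]
  · refine ⟨h ^ (m + 1) * e, ?_⟩
    rw [hc.d_hpow_mul, hc.de, Nat.add_sub_cancel]
    simp [mEltB, mul_add, hc.mul_hpow_mul _ g, hc.mul_hpow_mul _ e, hc.mul_hpow _ g,
      hc.mul_D_mul, hc.mul_D, hc.g_mul_e]
    module

lemma mEltB_mul_mEltB (i j : idxM') :
    mEltB D e g h k i * mEltB D e g h k j = 0 ∨
      ∃ t, mEltB D e g h k i * mEltB D e g h k j = D * mEltB D e g h k t := by
  rcases i with ⟨⟩ | n | m <;> rcases j with ⟨⟩ | n' | m'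
  · exact .inr ⟨.inl (), rfl⟩
  · exact .inr ⟨.inr (.inl n'), rfl⟩
  · exact .inr ⟨.inr (.inr m'), rfl⟩
  · exact .inr ⟨.inr (.inl n), by simp [mEltB, hc.mul_D]⟩
  · exact .inl (by simp [mEltB, mul_assoc, hc.mul_hpow_mul _ g, hc.g_mul_g_mul])
  · refine .inr ⟨.inr (.inl (n + m' + 1)), ?_⟩
    simp [mEltB, mul_add, mul_assoc, hc.mul_hpow_mul _ g, hc.g_mul_g_mul, hc.mul_D_mul, hc.mul_D,
      hc.g_mul_e_mul]
    rw [hc.hpow_mul_mul_hpow, ← add_assoc]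
  · exact .inr ⟨.inr (.inr m), by simp [mEltB, add_mul, hc.mul_D]⟩
  · refine .inr ⟨.inr (.inl (m + n' + 1)), ?_⟩
    simp [mEltB, add_mul, mul_assoc, hc.mul_hpow_mul _ g, hc.g_mul_g_mul, hc.mul_D_mul]
    rw [hc.hpow_mul_mul_hpow, add_right_comm]
  · refine .inr ⟨.inr (.inr (m + m' + 1)), ?_⟩
    simp [mEltB, add_mul, mul_add, mul_assoc, hc.mul_hpow_mul _ g, hc.g_mul_g_mul, hc.mul_D_mul,
      hc.mul_D, hc.g_mul_e_mul]
    rw [← hc.mul_hpow_mul m g, ← hc.mul_hpow_mul (m + 1) e, ← hc.mul_hpow_mul (m + 1) g]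
    simp only [← pow_add]
    rw [show m + (m' + 1) = m + m' + 1 by omega, show m + 1 + m' = m + m' + 1 by omega,
      show m + 1 + (m' + 1) = m + m' + 1 + 1 by omega]
    module

lemma mEltB_mul_mem_range (hk : k ≠ 0) (i j : idxM') :
    mEltB D e g h k i * mEltB D e g h k j ∈ LinearMap.range d := by
  rcases hc.mEltB_mul_mEltB i j with h0 | ⟨t, ht⟩
  · exact h0 ▸ zero_mem _
  · exact ht ▸ hc.D_mul_mEltB_mem_range hk t

end IsD₀

end LambdaB

theorem statement5_general {A : Type*} [Ring A] [Algebra ℚ A]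
    (D e f g v h : A) (k : ℚ) (hk : k ≠ 0) (d : A →ₗ[ℚ] A)
    (hfree : IsFreeGCA ![D, h] ![e, f, g, v])
    (hleib : ∀ (m : ℕ) (x y : A), x ∈ gradeLB D e f g v h m →
      d (x * y) = d x * y + ((-1 : ℚ) ^ m) • (x * d y))
    (hdD : d D = 0) (hdf : d f = 0) (hdg : d g = 0) (hdv : d v = 0)
    (hde : d e = D * D) (hdh : d h = (-k) • (D * g)) :
    -- the listed elements are cocycles …
    (∀ i, d (cEltB D e f g v h k i) = 0) ∧
    -- … homogeneous of the indicated degrees,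
    (∀ i, cEltB D e f g v h k i ∈ gradeLB D e f g v h (degCB i)) ∧
    -- their classes are linearly independent in the cohomology,
    LinearIndependent ℚ
      (fun i => (Submodule.Quotient.mk (cEltB D e f g v h k i) : A ⧸ LinearMap.range d)) ∧
    -- and they span the cohomology (so the classes of `D`, `f`, `g`, `v`, `g·hⁿ`, `s_n`
    -- generate `H(Λ_B, d₀)` as a ℚ-algebra);
    (LinearMap.ker d ≤
      Submodule.span ℚ (Set.range (cEltB D e f g v h k)) ⊔ LinearMap.range d) ∧
    -- the relations `[D]² = 0` and `[D][g] = 0` hold in cohomology,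
    D * D ∈ LinearMap.range d ∧
    D * g ∈ LinearMap.range d ∧
    -- and `ℚ ⊕ M′` is square-zero: the product of any two basis elements of `M′`
    -- is a coboundary.
    (∀ i j : idxM', mEltB D e g h k i * mEltB D e g h k j ∈ LinearMap.range d) := by
  have hc : LambdaB.IsD₀ D e f g v h k d := ⟨hfree, hleib, hdD, hdf, hdg, hdv, hde, hdh⟩
  have hli := hc.linearIndependent_adapted hk
  have hspan := hc.span_adapted hk
  refine ⟨hc.d_cEltB, hc.cEltB_mem_gradeLB, ?_, ?_, ⟨e, hde⟩, ?_, hc.mEltB_mul_mem_range hk⟩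
  · exact LinearMap.linearIndependent_mkQ_of_splitting hli hspan hc.d_cEltB hc.d_d_nonCocycle
  · exact LinearMap.ker_le_span_sup_range_of_splitting hli hspan hc.d_cEltB hc.d_d_nonCocycle
  · simpa [mEltB] using hc.D_mul_mEltB_mem_range hk (.inr (.inl 0))

theorem statement5 {A : Type*} [Ring A] [Algebra ℚ A]
    (D e f g v h : A) (k : ℚ) (hk : k ≠ 0) (d : A →ₗ[ℚ] A)
    (hfree : IsFreeGCA ![D, h] ![e, f, g, v])
    (hdeg : ∀ (m : ℕ) (x : A), x ∈ gradeLB D e f g v h m → d x ∈ gradeLB D e f g v h (m + 1))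
    (hleib : ∀ (m : ℕ) (x y : A), x ∈ gradeLB D e f g v h m →
      d (x * y) = d x * y + ((-1 : ℚ) ^ m) • (x * d y))
    (hdD : d D = 0) (hdf : d f = 0) (hdg : d g = 0) (hdv : d v = 0)
    (hde : d e = D * D) (hdh : d h = (-k) • (D * g)) :
    -- the listed elements are cocycles …
    (∀ i, d (cEltB D e f g v h k i) = 0) ∧
    -- … homogeneous of the indicated degrees,
    (∀ i, cEltB D e f g v h k i ∈ gradeLB D e f g v h (degCB i)) ∧
    -- their classes are linearly independent in the cohomology,
    LinearIndependent ℚ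
      (fun i => (Submodule.Quotient.mk (cEltB D e f g v h k i) : A ⧸ LinearMap.range d)) ∧
    -- and they span the cohomology (so the classes of `D`, `f`, `g`, `v`, `g·hⁿ`, `s_n`
    -- generate `H(Λ_B, d₀)` as a ℚ-algebra);
    (LinearMap.ker d ≤
      Submodule.span ℚ (Set.range (cEltB D e f g v h k)) ⊔ LinearMap.range d) ∧
    -- the relations `[D]² = 0` and `[D][g] = 0` hold in cohomology,
    D * D ∈ LinearMap.range d ∧
    D * g ∈ LinearMap.range d ∧
    -- and `ℚ ⊕ M′` is square-zero: the product of any two basis elements of `M′`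
    -- is a coboundary.
    (∀ i j : idxM', mEltB D e g h k i * mEltB D e g h k j ∈ LinearMap.range d) :=
  statement5_general D e f g v h k hk d hfree hleib hdD hdf hdg hdv hde hdh
end
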